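/- arXiv:1903.10819 — 10 statements merged into one kernel-verified Lean document; each statement's English description precedes it below -/
import Mathlib

section
/- Let (B₁, φ̃₁) and (B₂, φ̃₂) be noncommutative probability spaces over ℂ, let P ∈ B₁ be an idempotent separating φ̃₁ and Q ∈ B₂ an idempotent separating φ̃₂, and let 𝒜₁ ⊆ B₁, 𝒜₂ ⊆ B₂ be (not necessarily unital) subalgebras. Then the non-unital subalgebras {a ⊗ Q : a ∈ 𝒜₁} and {P ⊗ b : b ∈ 𝒜₂} of B₁ ⊗[ℂ] B₂ are boolean independent with respect to φ = φ̃₁ ⊗ φ̃₂; that is, φ(x₁ x₂ ⋯ xₙ) = φ(x₁)·φ(x₂)⋯φ(xₙ) whenever each x_k lies in one of these two subalgebras and consecutive letters x_k, x_{k+1} lie in different ones. -/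
open scoped TensorProduct

/-!
A separating idempotent cuts a word: if `P` separates `φ₁` and `Q` satisfies `φ₂ (Q * v) = φ₂ v`,
then `φ₁ (a * P * u) = φ₁ a * φ₁ (P * u)` and `φ₂ (Q * b * v) = φ₂ (b * v)`, so on pure tensors
`φ ((a ⊗ Q) * (P ⊗ b) * r) = φ₁ a * φ ((P ⊗ b) * r)`, and by linearity for every `r`. The mirror
identity follows by swapping the tensor factors. Peeling the first letter off an alternating word
over and over factorizes `φ` of the word into the product of `φ` of its letters.
-/

theorem List.apply_prod_of_isChain {M N : Type*} [Monoid M] [Monoid N] (f : M → N)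
    {R : M → M → Prop} (hf₁ : f 1 = 1)
    (hR : ∀ x y r, R x y → f (x * (y * r)) = f x * f (y * r)) {l : List M}
    (hl : l.IsChain R) : f l.prod = (l.map f).prod := by
  induction hl with
  | nil => simpa using hf₁
  | singleton x => simp
  | @cons_cons x y l hxy _ ih =>
    rw [List.prod_cons, List.prod_cons, hR x y _ hxy, ← List.prod_cons, ih]
    rfl

section

variable {R B₁ B₂ : Type*} [CommSemiring R] [Semiring B₁] [Algebra R B₁] [Semiring B₂]
  [Algebra R B₂] {φ₁ : B₁ →ₗ[R] R} {φ₂ : B₂ →ₗ[R] R} {φ : B₁ ⊗[R] B₂ →ₗ[R] R}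
  {P : B₁} {Q : B₂}

open Algebra.TensorProduct in
theorem map_tmul_mul_tmul_mul (hφ : ∀ x y, φ (x ⊗ₜ y) = φ₁ x * φ₂ y)
    (hPsep : ∀ x y, φ₁ (x * P * y) = φ₁ x * φ₁ y) (hP : ∀ y, φ₁ (P * y) = φ₁ y)
    (hQ : ∀ y, φ₂ (Q * y) = φ₂ y) (a : B₁) (b : B₂) (r : B₁ ⊗[R] B₂) :
    φ ((a ⊗ₜ Q) * ((P ⊗ₜ b) * r)) = φ₁ a * φ ((P ⊗ₜ b) * r) := by
  induction r using TensorProduct.induction_on with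
  | zero => simp
  | tmul u v =>
    rw [← mul_assoc, tmul_mul_tmul, tmul_mul_tmul, tmul_mul_tmul, hφ, hφ, hPsep, hP,
      mul_assoc Q, hQ, mul_assoc]
  | add s t hs ht => simp only [mul_add, map_add, hs, ht]

theorem map_tmul_mul_tmul_mul' (hφ : ∀ x y, φ (x ⊗ₜ y) = φ₁ x * φ₂ y)
    (hQsep : ∀ x y, φ₂ (x * Q * y) = φ₂ x * φ₂ y) (hP : ∀ y, φ₁ (P * y) = φ₁ y)
    (hQ : ∀ y, φ₂ (Q * y) = φ₂ y) (a : B₁) (b : B₂) (r : B₁ ⊗[R] B₂) :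
    φ ((P ⊗ₜ b) * ((a ⊗ₜ Q) * r)) = φ₂ b * φ ((a ⊗ₜ Q) * r) := by
  let e := Algebra.TensorProduct.comm R B₁ B₂
  let ψ := φ ∘ₗ e.symm.toLinearMap
  have hψ : ∀ y x, ψ (y ⊗ₜ x) = φ₂ y * φ₁ x := fun y x => by
    simp [ψ, e, hφ, mul_comm]
  have := map_tmul_mul_tmul_mul hψ hQsep hQ hP b a (e r)
  simpa only [ψ, LinearMap.comp_apply, AlgEquiv.toLinearMap_apply, map_mul,
    AlgEquiv.symm_apply_apply, e, Algebra.TensorProduct.comm_symm_tmul] using this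

def AlternatingLetters (P : B₁) (Q : B₂) (x y : B₁ ⊗[R] B₂) : Prop :=
  x ∈ Set.range (· ⊗ₜ[R] Q) ∧ y ∈ Set.range (P ⊗ₜ[R] ·) ∨
    x ∈ Set.range (P ⊗ₜ[R] ·) ∧ y ∈ Set.range (· ⊗ₜ[R] Q)

theorem map_mul_mul_of_alternatingLetters (hφ : ∀ x y, φ (x ⊗ₜ y) = φ₁ x * φ₂ y)
    (hP₁ : φ₁ P = 1) (hQ₁ : φ₂ Q = 1)
    (hPsep : ∀ x y, φ₁ (x * P * y) = φ₁ x * φ₁ y) (hQsep : ∀ x y, φ₂ (x * Q * y) = φ₂ x * φ₂ y)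
    (hP : ∀ y, φ₁ (P * y) = φ₁ y) (hQ : ∀ y, φ₂ (Q * y) = φ₂ y) {x y : B₁ ⊗[R] B₂}
    (hxy : AlternatingLetters P Q x y) (r : B₁ ⊗[R] B₂) :
    φ (x * (y * r)) = φ x * φ (y * r) := by
  rcases hxy with ⟨⟨a, rfl⟩, ⟨b, rfl⟩⟩ | ⟨⟨b, rfl⟩, ⟨a, rfl⟩⟩
  · rw [map_tmul_mul_tmul_mul hφ hPsep hP hQ, hφ, hQ₁, mul_one]
  · rw [map_tmul_mul_tmul_mul' hφ hQsep hP hQ, hφ, hP₁, one_mul]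

end

theorem boolean_independence_tensor_realization_general
    {B₁ B₂ : Type*} [Ring B₁] [Algebra ℂ B₁] [Ring B₂] [Algebra ℂ B₂]
    (φ₁ : B₁ →ₗ[ℂ] ℂ) (φ₂ : B₂ →ₗ[ℂ] ℂ)
    (hφ₁1 : φ₁ 1 = 1) (hφ₂1 : φ₂ 1 = 1)
    (P : B₁) (Q : B₂)
    (hP1 : φ₁ P = 1)
    (hPsep : ∀ x y : B₁, φ₁ (x * P * y) = φ₁ x * φ₁ y)
    (hQ1 : φ₂ Q = 1)
    (hQsep : ∀ x y : B₂, φ₂ (x * Q * y) = φ₂ x * φ₂ y)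
    (𝒜₁ : NonUnitalSubalgebra ℂ B₁) (𝒜₂ : NonUnitalSubalgebra ℂ B₂)
    (φ : (B₁ ⊗[ℂ] B₂) →ₗ[ℂ] ℂ)
    (hφ : ∀ (x : B₁) (y : B₂), φ (x ⊗ₜ[ℂ] y) = φ₁ x * φ₂ y)
    (n : ℕ)
    (x : Fin n → B₁ ⊗[ℂ] B₂) (c : Fin n → Bool)
    (hx : ∀ k : Fin n,
      x k ∈ (if c k then {z : B₁ ⊗[ℂ] B₂ | ∃ a ∈ 𝒜₁, z = a ⊗ₜ[ℂ] Q}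
             else {z : B₁ ⊗[ℂ] B₂ | ∃ b ∈ 𝒜₂, z = P ⊗ₜ[ℂ] b}))
    (halt : ∀ (k : ℕ) (h : k + 1 < n),
      c ⟨k, Nat.lt_of_succ_lt h⟩ ≠ c ⟨k + 1, h⟩) :
    φ (List.ofFn x).prod = ∏ k : Fin n, φ (x k) := by
  have hP (y : B₁) : φ₁ (P * y) = φ₁ y := by simpa [hφ₁1] using hPsep 1 y
  have hQ (y : B₂) : φ₂ (Q * y) = φ₂ y := by simpa [hφ₂1] using hQsep 1 y
  have hφ1 : φ 1 = 1 := by rw [Algebra.TensorProduct.one_def, hφ, hφ₁1, hφ₂1, one_mul]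
  have hletter (k : Fin n) : c k = true ∧ x k ∈ Set.range (· ⊗ₜ[ℂ] Q) ∨
      c k = false ∧ x k ∈ Set.range (P ⊗ₜ[ℂ] ·) := by
    have hxk := hx k
    cases hck : c k <;> simp only [hck, Bool.false_eq_true, if_true, if_false] at hxk
    · obtain ⟨b, -, hb⟩ := hxk
      exact .inr ⟨rfl, b, hb.symm⟩
    · obtain ⟨a, -, ha⟩ := hxk
      exact .inl ⟨rfl, a, ha.symm⟩
  have hchain : (List.ofFn x).IsChain (AlternatingLetters P Q) :=
    List.isChain_ofFn.2 fun k hk => by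
      have hne := halt k hk
      rcases hletter ⟨k, by omega⟩ with ⟨hc₀, h₀⟩ | ⟨hc₀, h₀⟩ <;>
        rcases hletter ⟨k + 1, hk⟩ with ⟨hc₁, h₁⟩ | ⟨hc₁, h₁⟩
      all_goals first
        | exact absurd (hc₀.trans hc₁.symm) hne
        | exact .inl ⟨h₀, h₁⟩
        | exact .inr ⟨h₀, h₁⟩
  rw [List.apply_prod_of_isChain φ hφ1
    (fun _ _ r h => map_mul_mul_of_alternatingLetters hφ hP1 hQ1 hPsep hQsep hP hQ h r) hchain,
    List.map_ofFn, List.prod_ofFn]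
  rfl

/-- boolean independence of `{a ⊗ Q}` and `{P ⊗ b}` w.r.t. the
tensor product state `φ = φ̃₁ ⊗ φ̃₂`. -/
theorem boolean_independence_tensor_realization
    {B₁ B₂ : Type*} [Ring B₁] [Algebra ℂ B₁] [Ring B₂] [Algebra ℂ B₂]
    (φ₁ : B₁ →ₗ[ℂ] ℂ) (φ₂ : B₂ →ₗ[ℂ] ℂ)
    (hφ₁1 : φ₁ 1 = 1) (hφ₂1 : φ₂ 1 = 1)
    (P : B₁) (Q : B₂)
    (hPidem : P * P = P) (hP1 : φ₁ P = 1)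
    (hPsep : ∀ x y : B₁, φ₁ (x * P * y) = φ₁ x * φ₁ y)
    (hQidem : Q * Q = Q) (hQ1 : φ₂ Q = 1)
    (hQsep : ∀ x y : B₂, φ₂ (x * Q * y) = φ₂ x * φ₂ y)
    (𝒜₁ : NonUnitalSubalgebra ℂ B₁) (𝒜₂ : NonUnitalSubalgebra ℂ B₂)
    (φ : (B₁ ⊗[ℂ] B₂) →ₗ[ℂ] ℂ)
    (hφ : ∀ (x : B₁) (y : B₂), φ (x ⊗ₜ[ℂ] y) = φ₁ x * φ₂ y)
    (n : ℕ) (hn : 1 ≤ n)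
    (x : Fin n → B₁ ⊗[ℂ] B₂) (c : Fin n → Bool)
    (hx : ∀ k : Fin n,
      x k ∈ (if c k then {z : B₁ ⊗[ℂ] B₂ | ∃ a ∈ 𝒜₁, z = a ⊗ₜ[ℂ] Q}
             else {z : B₁ ⊗[ℂ] B₂ | ∃ b ∈ 𝒜₂, z = P ⊗ₜ[ℂ] b}))
    (halt : ∀ (k : ℕ) (h : k + 1 < n),
      c ⟨k, Nat.lt_of_succ_lt h⟩ ≠ c ⟨k + 1, h⟩) :
    φ (List.ofFn x).prod = ∏ k : Fin n, φ (x k) :=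
  boolean_independence_tensor_realization_general φ₁ φ₂ hφ₁1 hφ₂1 P Q hP1 hPsep hQ1 hQsep 𝒜₁ 𝒜₂ φ hφ
    n x c hx halt
end

section
/- Let (B₁, φ̃₁) and (B₂, φ̃₂) be noncommutative probability spaces over ℂ, let P ∈ B₁ be an idempotent separating φ̃₁ and Q ∈ B₂ an idempotent separating φ̃₂, and let 𝒜₁ ⊆ B₁, 𝒜₂ ⊆ B₂ be (not necessarily unital) subalgebras. Then the ordered pair of non-unital subalgebras ({a ⊗ Q : a ∈ 𝒜₁}, {1 ⊗ b : b ∈ 𝒜₂}) of B₁ ⊗[ℂ] B₂ is monotone independent with respect to φ = φ̃₁ ⊗ φ̃₂. -/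
open scoped TensorProduct

private lemma aux_prod_take_get_drop {M : Type*} [Monoid M] (m : List M) (i : ℕ)
    (h : i < m.length) :
    m.prod = (m.take i).prod * m[i] * (m.drop (i + 1)).prod := by
  conv_lhs => rw [← List.take_append_drop i m]
  rw [List.prod_append, List.drop_eq_getElem_cons h, List.prod_cons, mul_assoc]

private lemma aux_prod_eraseIdx {M : Type*} [Monoid M] (m : List M) (i : ℕ) :
    (m.eraseIdx i).prod = (m.take i).prod * (m.drop (i + 1)).prod := by
  rw [List.eraseIdx_eq_take_drop_succ, List.prod_append]

private lemma aux_eraseIdx_map {α β : Type*} (f : α → β) : ∀ (l : List α) (i : ℕ),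
    (l.map f).eraseIdx i = (l.eraseIdx i).map f
  | [], _ => rfl
  | _ :: _, 0 => rfl
  | a :: l, i + 1 => by simp [aux_eraseIdx_map f l i]

private lemma aux_prod_map_tmul {B₁ B₂ : Type*} [Ring B₁] [Algebra ℂ B₁] [Ring B₂]
    [Algebra ℂ B₂] (l : List (B₁ × B₂)) :
    (l.map fun p => p.1 ⊗ₜ[ℂ] p.2).prod = (l.map Prod.fst).prod ⊗ₜ[ℂ] (l.map Prod.snd).prod := by
  induction l with
  | nil => simp [Algebra.TensorProduct.one_def]
  | cons p l ih => simp [ih, Algebra.TensorProduct.tmul_mul_tmul]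

/-- An ordered pair of subsets (non-unital subalgebras) of a noncommutative
probability space is monotone independent with respect to `φ`. -/
def MonotoneIndependentPair {A : Type*} [Ring A] (φ : A → ℂ) (S₁ S₂ : Set A) : Prop :=
  ∀ (n : ℕ), 1 ≤ n → ∀ (x : Fin n → A),
    (∀ k, x k ∈ S₁ ∪ S₂) →
    ∀ i : Fin n, x i ∈ S₂ →
      (∀ j : Fin n, ((j : ℕ) + 1 = (i : ℕ) ∨ (j : ℕ) = (i : ℕ) + 1) → x j ∈ S₁) →
      φ (List.ofFn x).prod = φ (x i) * φ (((List.ofFn x).eraseIdx (i : ℕ)).prod)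

/-- monotone independence of the pair `({a ⊗ Q}, {1 ⊗ b})` w.r.t.
the tensor product state `φ = φ̃₁ ⊗ φ̃₂`. -/
theorem monotone_independence_tensor_realization
    {B₁ B₂ : Type*} [Ring B₁] [Algebra ℂ B₁] [Ring B₂] [Algebra ℂ B₂]
    (φ₁ : B₁ →ₗ[ℂ] ℂ) (φ₂ : B₂ →ₗ[ℂ] ℂ)
    (hφ₁1 : φ₁ 1 = 1) (hφ₂1 : φ₂ 1 = 1)
    (P : B₁) (Q : B₂)
    (hPidem : P * P = P) (hP1 : φ₁ P = 1)
    (hPsep : ∀ x y : B₁, φ₁ (x * P * y) = φ₁ x * φ₁ y)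
    (hQidem : Q * Q = Q) (hQ1 : φ₂ Q = 1)
    (hQsep : ∀ x y : B₂, φ₂ (x * Q * y) = φ₂ x * φ₂ y)
    (𝒜₁ : NonUnitalSubalgebra ℂ B₁) (𝒜₂ : NonUnitalSubalgebra ℂ B₂)
    (φ : (B₁ ⊗[ℂ] B₂) →ₗ[ℂ] ℂ)
    (hφ : ∀ (x : B₁) (y : B₂), φ (x ⊗ₜ[ℂ] y) = φ₁ x * φ₂ y) :
    MonotoneIndependentPair (fun z => φ z)
      {z : B₁ ⊗[ℂ] B₂ | ∃ a ∈ 𝒜₁, z = a ⊗ₜ[ℂ] Q}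
      {z : B₁ ⊗[ℂ] B₂ | ∃ b ∈ 𝒜₂, z = (1 : B₁) ⊗ₜ[ℂ] b} := by
  intro n hn x hx i hi hnb
  -- a key computation with the separating idempotent `Q`
  have key : ∀ (c lt rt : B₂), (lt = 1 ∨ ∃ l', lt = l' * Q) →
      (rt = 1 ∨ ∃ r', rt = Q * r') → φ₂ (lt * c * rt) = φ₂ c * φ₂ (lt * rt) := by
    have hQl : ∀ r' : B₂, φ₂ (Q * r') = φ₂ r' := by
      intro r'
      have := hQsep 1 r'
      rwa [one_mul, hφ₂1, one_mul] at this
    have hQr : ∀ l' : B₂, φ₂ (l' * Q) = φ₂ l' := by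
      intro l'
      have := hQsep l' 1
      rwa [mul_one, hφ₂1, mul_one] at this
    rintro c lt rt (rfl | ⟨l', rfl⟩) (rfl | ⟨r', rfl⟩)
    · rw [one_mul, mul_one, one_mul, hφ₂1, mul_one]
    · rw [one_mul, one_mul, ← mul_assoc, hQsep, hQl, mul_comm]
    · rw [mul_one, mul_one, hQsep, hQr, mul_comm]
    · have h1 : l' * Q * c * (Q * r') = l' * Q * (c * Q * r') := by noncomm_ring
      have h2 : l' * Q * (Q * r') = l' * Q * (Q * r') := rfl
      rw [h1, hQsep, hQsep, hQsep l' (Q * r'), hQl]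
      ring
  -- choose pure-tensor representatives for each factor
  have hrep : ∀ k : Fin n, ∃ p : B₁ × B₂, x k = p.1 ⊗ₜ[ℂ] p.2 ∧
      (((k : ℕ) + 1 = (i : ℕ) ∨ (k : ℕ) = (i : ℕ) + 1) → p.2 = Q) ∧
      (k = i → p.1 = 1) := by
    intro k
    by_cases hk : ((k : ℕ) + 1 = (i : ℕ) ∨ (k : ℕ) = (i : ℕ) + 1)
    · obtain ⟨a, -, ha⟩ := hnb k hk
      refine ⟨(a, Q), ha, fun _ => rfl, fun hki => ?_⟩
      subst hki
      omega
    · by_cases hki : k = i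
      · subst hki
        obtain ⟨b, -, hb⟩ := hi
        exact ⟨(1, b), hb, fun h => absurd h hk, fun _ => rfl⟩
      · rcases hx k with h1 | h2
        · obtain ⟨a, -, ha⟩ := h1
          exact ⟨(a, Q), ha, fun _ => rfl, fun h => absurd h hki⟩
        · obtain ⟨b, -, hb⟩ := h2
          exact ⟨(1, b), hb, fun h => absurd h hk, fun _ => rfl⟩
  choose p hp hpQ hp1 using hrep
  have hin : (i : ℕ) < n := i.isLt
  -- the lists of first and second components
  set L : List (B₁ × B₂) := List.ofFn p with hL
  have hxp : List.ofFn x = L.map fun q => q.1 ⊗ₜ[ℂ] q.2 := by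
    rw [funext hp, hL]
    exact (List.map_ofFn (f := p) (g := fun q => q.1 ⊗ₜ[ℂ] q.2)).symm
  have hU : L.map Prod.fst = List.ofFn fun k => (p k).1 := by rw [hL, List.map_ofFn]; rfl
  have hV : L.map Prod.snd = List.ofFn fun k => (p k).2 := by rw [hL, List.map_ofFn]; rfl
  set U : List B₁ := List.ofFn fun k => (p k).1 with hUdef
  set V : List B₂ := List.ofFn fun k => (p k).2 with hVdef
  have hUlen : U.length = n := by simp [hUdef]
  have hVlen : V.length = n := by simp [hVdef]
  have hUi : U[(i : ℕ)]'(by omega) = 1 := by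
    simp only [hUdef, List.getElem_ofFn]
    exact hp1 i rfl
  have hVi : V[(i : ℕ)]'(by omega) = (p i).2 := by
    simp only [hVdef, List.getElem_ofFn]
  -- decompose the products
  have hprod : (List.ofFn x).prod = U.prod ⊗ₜ[ℂ] V.prod := by
    rw [hxp, aux_prod_map_tmul, hU, hV]
  have herase : ((List.ofFn x).eraseIdx (i : ℕ)).prod =
      ((U.take i).prod * (U.drop (i + 1)).prod) ⊗ₜ[ℂ]
        ((V.take i).prod * (V.drop (i + 1)).prod) := by
    rw [hxp, aux_eraseIdx_map, aux_prod_map_tmul, ← aux_eraseIdx_map, ← aux_eraseIdx_map,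
      hU, hV, aux_prod_eraseIdx, aux_prod_eraseIdx]
  have hUsplit : U.prod = (U.take i).prod * (U.drop (i + 1)).prod := by
    rw [aux_prod_take_get_drop U i (by omega), hUi, mul_one]
  have hVsplit : V.prod = (V.take i).prod * (p i).2 * (V.drop (i + 1)).prod := by
    rw [aux_prod_take_get_drop V i (by omega), hVi]
  -- conditions on the flanking products
  have hT : (V.take (i : ℕ)).prod = 1 ∨ ∃ l', (V.take (i : ℕ)).prod = l' * Q := by
    rcases Nat.eq_zero_or_pos (i : ℕ) with h0 | h0
    · left; rw [h0]; simp
    · right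
      obtain ⟨j, hj⟩ : ∃ j, (i : ℕ) = j + 1 := ⟨(i : ℕ) - 1, by omega⟩
      have hjlt : j < V.length := by omega
      have hVj : V[j] = Q := by
        simp only [hVdef, List.getElem_ofFn]
        exact hpQ ⟨j, by omega⟩ (Or.inl (by simp; omega))
      refine ⟨(V.take j).prod, ?_⟩
      rw [hj, List.take_succ, List.getElem?_eq_getElem hjlt, List.prod_append, hVj]
      simp
  have hD : (V.drop ((i : ℕ) + 1)).prod = 1 ∨
      ∃ r', (V.drop ((i : ℕ) + 1)).prod = Q * r' := by
    rcases Nat.lt_or_ge ((i : ℕ) + 1) n with hlt | hge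
    · right
      have hlt' : (i : ℕ) + 1 < V.length := by omega
      have hVs : V[(i : ℕ) + 1] = Q := by
        simp only [hVdef, List.getElem_ofFn]
        exact hpQ ⟨(i : ℕ) + 1, by omega⟩ (Or.inr (by simp))
      refine ⟨(V.drop ((i : ℕ) + 2)).prod, ?_⟩
      rw [List.drop_eq_getElem_cons hlt', List.prod_cons, hVs]
    · left
      rw [List.drop_eq_nil_of_le (by omega)]
      simp
  -- put everything together
  have hxi : x i = (1 : B₁) ⊗ₜ[ℂ] (p i).2 := by
    rw [hp i, hp1 i rfl]
  simp only [hprod, herase, hxi, hφ, hφ₁1, one_mul]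
  rw [hUsplit, hVsplit, key _ _ _ hT hD]
  ring
end

section
/- Let (B₁, φ̃₁) and (B₂, φ̃₂) be noncommutative probability spaces over ℂ, let P ∈ B₁ be an idempotent separating φ̃₁ and Q ∈ B₂ an idempotent separating φ̃₂, let 𝒜₁ ⊆ B₁, 𝒜₂ ⊆ B₂ be (not necessarily unital) subalgebras, and put P^⊥ = 1 − P and φ = φ̃₁ ⊗ φ̃₂ on B₁ ⊗[ℂ] B₂. Consider the non-unital subalgebras 𝒜₁' = {a ⊗ Q : a ∈ 𝒜₁} and 𝒜₂' = {P^⊥ ⊗ b : b ∈ 𝒜₂}. Then 𝒜₂' is orthogonal to 𝒜₁' with respect to (φ, σ), where σ(P^⊥ ⊗ b) = φ̃₂(b): that is, (i) for every n ≥ 1, all x₁, …, xₙ ∈ 𝒜₁' ∪ 𝒜₂' and every index 1 < i < n with xᵢ = P^⊥ ⊗ b ∈ 𝒜₂' and x_{i−1}, x_{i+1} ∈ 𝒜₁', one has φ(x₁⋯xₙ) = φ̃₂(b)·( φ(x₁⋯x_{i−1} x_{i+1}⋯xₙ) − φ(x₁⋯x_{i−1})·φ(x_{i+1}⋯xₙ)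 ); and (ii) φ(x₁⋯xₙ) = 0 whenever x₁ ∈ 𝒜₂' or xₙ ∈ 𝒜₂'. -/
/-!
Everything reduces to pure tensors, on which `φ` factors as `φ₁ ⊗ φ₂`. The separation
identity `φ₁ (x * P * y) = φ₁ x * φ₁ y` gives `φ₁ (x * (1 - P) * y) = φ₁ (x * y) - φ₁ x * φ₁ y`,
which vanishes when `x = 1` or `y = 1`: this kills every product starting or ending with a
factor `(1 - P) ⊗ b`. In the second leg, the two factors `Q` flanking `b` split
`φ₂ (v * Q * b * Q * v')` into `φ₂ v * φ₂ b * φ₂ v'`, which produces the factor `φ₂ b`.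
Both identities extend from pure tensors to the whole tensor product by linearity.
-/

open scoped TensorProduct

namespace List

variable {M : Type*} [Monoid M]

theorem prod_drop_eq_getElem_mul (l : List M) {i : ℕ} (h : i < l.length) :
    (l.drop i).prod = l[i] * (l.drop (i + 1)).prod := by
  rw [drop_eq_getElem_cons h, prod_cons]

theorem prod_eq_prod_take_mul_getElem_mul_prod_drop (l : List M) {i : ℕ} (h : i < l.length) :
    l.prod = (l.take i).prod * l[i] * (l.drop (i + 1)).prod := by
  rw [mul_assoc, ← prod_drop_eq_getElem_mul l h, prod_take_mul_prod_drop]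

theorem prod_eraseIdx_eq_prod_take_mul_prod_drop (l : List M) (i : ℕ) :
    (l.eraseIdx i).prod = (l.take i).prod * (l.drop (i + 1)).prod := by
  rw [eraseIdx_eq_take_drop_succ, prod_append]

end List

section Separating

variable {R B : Type*} [CommRing R] [Ring B] [Algebra R B] {φ : B →ₗ[R] R} {P : B}

theorem map_mul_right_eq_of_separating (h1 : φ 1 = 1) (hP : ∀ x y, φ (x * P * y) = φ x * φ y)
    (x : B) : φ (x * P) = φ x := by
  simpa [h1] using hP x 1

theorem map_mul_left_eq_of_separating (h1 : φ 1 = 1) (hP : ∀ x y, φ (x * P * y) = φ x * φ y)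
    (y : B) : φ (P * y) = φ y := by
  simpa [h1] using hP 1 y

theorem map_mul_one_sub_mul_of_separating (hP : ∀ x y, φ (x * P * y) = φ x * φ y) (x y : B) :
    φ (x * (1 - P) * y) = φ (x * y) - φ x * φ y := by
  rw [mul_sub, mul_one, sub_mul, map_sub, hP]

theorem map_one_sub_mul_eq_zero_of_separating (h1 : φ 1 = 1) (hP : ∀ x y, φ (x * P * y) = φ x * φ y)
    (y : B) : φ ((1 - P) * y) = 0 := by
  simpa [h1] using map_mul_one_sub_mul_of_separating hP 1 y

theorem map_mul_one_sub_eq_zero_of_separating (h1 : φ 1 = 1) (hP : ∀ x y, φ (x * P * y) = φ x * φ y)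
    (x : B) : φ (x * (1 - P)) = 0 := by
  simpa [h1] using map_mul_one_sub_mul_of_separating hP x 1

end Separating

section TensorProduct

variable {R B₁ B₂ : Type*} [CommRing R] [Ring B₁] [Algebra R B₁] [Ring B₂] [Algebra R B₂]
  {φ₁ : B₁ →ₗ[R] R} {φ₂ : B₂ →ₗ[R] R} {φ : B₁ ⊗[R] B₂ →ₗ[R] R} {P : B₁} {Q : B₂}

theorem map_one_sub_tmul_mul_eq_zero (hφ : ∀ x y, φ (x ⊗ₜ y) = φ₁ x * φ₂ y) (h1 : φ₁ 1 = 1)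
    (hP : ∀ x y, φ₁ (x * P * y) = φ₁ x * φ₁ y) (b : B₂) (Y : B₁ ⊗[R] B₂) :
    φ (((1 - P) ⊗ₜ b) * Y) = 0 := by
  induction Y using TensorProduct.induction_on with
  | zero => simp
  | tmul u v =>
    rw [Algebra.TensorProduct.tmul_mul_tmul, hφ, map_one_sub_mul_eq_zero_of_separating h1 hP,
      zero_mul]
  | add Y Y' hY hY' => rw [mul_add, map_add, hY, hY', add_zero]

theorem map_mul_one_sub_tmul_eq_zero (hφ : ∀ x y, φ (x ⊗ₜ y) = φ₁ x * φ₂ y) (h1 : φ₁ 1 = 1)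
    (hP : ∀ x y, φ₁ (x * P * y) = φ₁ x * φ₁ y) (b : B₂) (X : B₁ ⊗[R] B₂) :
    φ (X * ((1 - P) ⊗ₜ b)) = 0 := by
  induction X using TensorProduct.induction_on with
  | zero => simp
  | tmul u v =>
    rw [Algebra.TensorProduct.tmul_mul_tmul, hφ, map_mul_one_sub_eq_zero_of_separating h1 hP,
      zero_mul]
  | add X X' hX hX' => rw [add_mul, map_add, hX, hX', add_zero]

theorem map_mul_tmul_mul_one_sub_tmul_mul_tmul_mul (hφ : ∀ x y, φ (x ⊗ₜ y) = φ₁ x * φ₂ y)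
    (hP : ∀ x y, φ₁ (x * P * y) = φ₁ x * φ₁ y) (h1 : φ₂ 1 = 1)
    (hQ : ∀ x y, φ₂ (x * Q * y) = φ₂ x * φ₂ y) (a a' : B₁) (b : B₂) (X Y : B₁ ⊗[R] B₂) :
    φ (X * (a ⊗ₜ Q) * ((1 - P) ⊗ₜ b) * ((a' ⊗ₜ Q) * Y)) =
      φ₂ b * (φ (X * (a ⊗ₜ Q) * ((a' ⊗ₜ Q) * Y)) - φ (X * (a ⊗ₜ Q)) * φ ((a' ⊗ₜ Q) * Y)) := by
  induction X using TensorProduct.induction_on with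
  | zero => simp
  | add X X' hX hX' => simp only [add_mul, map_add, hX, hX']; ring
  | tmul u v =>
    induction Y using TensorProduct.induction_on with
    | zero => simp
    | add Y Y' hY hY' => simp only [mul_add, map_add, hY, hY']; ring
    | tmul u' v' =>
      simp only [Algebra.TensorProduct.tmul_mul_tmul, hφ]
      have h₂ : φ₂ (v * Q * b * (Q * v')) = φ₂ v * (φ₂ b * φ₂ v') := by
        rw [mul_assoc (v * Q), hQ, ← mul_assoc, hQ]
      have h₂' : φ₂ (v * Q * (Q * v')) = φ₂ v * φ₂ v' := by
        rw [hQ, map_mul_left_eq_of_separating h1 hQ]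
      rw [map_mul_one_sub_mul_of_separating hP, h₂, h₂', map_mul_right_eq_of_separating h1 hQ,
        map_mul_left_eq_of_separating h1 hQ]
      ring

end TensorProduct

theorem orthogonal_independence_tensor_realization_general
    {B₁ B₂ : Type*} [Ring B₁] [Algebra ℂ B₁] [Ring B₂] [Algebra ℂ B₂]
    (φ₁ : B₁ →ₗ[ℂ] ℂ) (φ₂ : B₂ →ₗ[ℂ] ℂ)
    (hφ₁1 : φ₁ 1 = 1) (hφ₂1 : φ₂ 1 = 1)
    (P : B₁) (Q : B₂)
    (hPsep : ∀ x y : B₁, φ₁ (x * P * y) = φ₁ x * φ₁ y)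
    (hQsep : ∀ x y : B₂, φ₂ (x * Q * y) = φ₂ x * φ₂ y)
    (𝒜₁ : NonUnitalSubalgebra ℂ B₁) (𝒜₂ : NonUnitalSubalgebra ℂ B₂)
    (φ : (B₁ ⊗[ℂ] B₂) →ₗ[ℂ] ℂ)
    (hφ : ∀ (x : B₁) (y : B₂), φ (x ⊗ₜ[ℂ] y) = φ₁ x * φ₂ y)
    (S₁ S₂ : Set (B₁ ⊗[ℂ] B₂))
    (hS₁ : S₁ = {z : B₁ ⊗[ℂ] B₂ | ∃ a ∈ 𝒜₁, z = a ⊗ₜ[ℂ] Q})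
    (hS₂ : S₂ = {z : B₁ ⊗[ℂ] B₂ | ∃ b ∈ 𝒜₂, z = (1 - P) ⊗ₜ[ℂ] b}) :
    -- (i)
    (∀ (n : ℕ) (x : Fin n → B₁ ⊗[ℂ] B₂), 1 ≤ n →
      (∀ k, x k ∈ S₁ ∪ S₂) →
      ∀ (i : Fin n) (b : B₂), b ∈ 𝒜₂ → x i = (1 - P) ⊗ₜ[ℂ] b →
        0 < (i : ℕ) → (i : ℕ) + 1 < n →
        (∀ j : Fin n, ((j : ℕ) + 1 = (i : ℕ) ∨ (j : ℕ) = (i : ℕ) + 1) → x j ∈ S₁) →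
        φ (List.ofFn x).prod =
          φ₂ b * (φ (((List.ofFn x).eraseIdx (i : ℕ)).prod)
            - φ (((List.ofFn x).take (i : ℕ)).prod)
              * φ (((List.ofFn x).drop ((i : ℕ) + 1)).prod)))
    ∧
    -- (ii)
    (∀ (n : ℕ) (x : Fin n → B₁ ⊗[ℂ] B₂) (hn : 1 ≤ n),
      (∀ k, x k ∈ S₁ ∪ S₂) →
      (x ⟨0, hn⟩ ∈ S₂ ∨ x ⟨n - 1, Nat.sub_lt hn one_pos⟩ ∈ S₂) →
      φ (List.ofFn x).prod = 0) := by
  subst hS₁ hS₂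
  refine ⟨fun n x _ _ i b _ hxi hi0 hi1 hnbr => ?_, fun n x hn _ hend => ?_⟩
  · rw [List.prod_eq_prod_take_mul_getElem_mul_prod_drop _ (i.2.trans_eq List.length_ofFn.symm),
      List.prod_eraseIdx_eq_prod_take_mul_prod_drop]
    simp only [List.getElem_ofFn, Fin.eta, hxi]
    obtain ⟨j, hj⟩ : ∃ j, (i : ℕ) = j + 1 := ⟨i - 1, by omega⟩
    obtain ⟨a, -, ha⟩ := hnbr ⟨j, by omega⟩ (Or.inl hj.symm)
    obtain ⟨a', -, ha'⟩ := hnbr ⟨j + 2, by omega⟩ (Or.inr (by simp [hj]))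
    rw [hj, List.prod_take_succ _ _ (by simp; omega),
      List.prod_drop_eq_getElem_mul _ (by simp; omega)]
    simp only [List.getElem_ofFn, ha, ha']
    exact map_mul_tmul_mul_one_sub_tmul_mul_tmul_mul hφ hPsep hφ₂1 hQsep a a' b _ _
  · obtain ⟨m, rfl⟩ : ∃ m, n = m + 1 := ⟨n - 1, by omega⟩
    rcases hend with ⟨b, -, hb⟩ | ⟨b, -, hb⟩
    · have hx : x 0 = (1 - P) ⊗ₜ b := hb
      rw [List.ofFn_succ, List.prod_cons, hx]
      exact map_one_sub_tmul_mul_eq_zero hφ hφ₁1 hPsep b _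
    · have hx : x (Fin.last m) = (1 - P) ⊗ₜ b := hb
      rw [List.ofFn_succ', List.prod_concat, hx]
      exact map_mul_one_sub_tmul_eq_zero hφ hφ₁1 hPsep b _

/-- `{P^⊥ ⊗ b}` is orthogonal to `{a ⊗ Q}` with respect to the
pair `(φ, σ)`, where `φ = φ̃₁ ⊗ φ̃₂` and `σ(P^⊥ ⊗ b) = φ̃₂(b)`. -/
theorem orthogonal_independence_tensor_realization
    {B₁ B₂ : Type*} [Ring B₁] [Algebra ℂ B₁] [Ring B₂] [Algebra ℂ B₂]
    (φ₁ : B₁ →ₗ[ℂ] ℂ) (φ₂ : B₂ →ₗ[ℂ] ℂ)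
    (hφ₁1 : φ₁ 1 = 1) (hφ₂1 : φ₂ 1 = 1)
    (P : B₁) (Q : B₂)
    (hPidem : P * P = P) (hP1 : φ₁ P = 1)
    (hPsep : ∀ x y : B₁, φ₁ (x * P * y) = φ₁ x * φ₁ y)
    (hQidem : Q * Q = Q) (hQ1 : φ₂ Q = 1)
    (hQsep : ∀ x y : B₂, φ₂ (x * Q * y) = φ₂ x * φ₂ y)
    (𝒜₁ : NonUnitalSubalgebra ℂ B₁) (𝒜₂ : NonUnitalSubalgebra ℂ B₂)
    (φ : (B₁ ⊗[ℂ] B₂) →ₗ[ℂ] ℂ)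
    (hφ : ∀ (x : B₁) (y : B₂), φ (x ⊗ₜ[ℂ] y) = φ₁ x * φ₂ y)
    (S₁ S₂ : Set (B₁ ⊗[ℂ] B₂))
    (hS₁ : S₁ = {z : B₁ ⊗[ℂ] B₂ | ∃ a ∈ 𝒜₁, z = a ⊗ₜ[ℂ] Q})
    (hS₂ : S₂ = {z : B₁ ⊗[ℂ] B₂ | ∃ b ∈ 𝒜₂, z = (1 - P) ⊗ₜ[ℂ] b}) :
    -- (i)
    (∀ (n : ℕ) (x : Fin n → B₁ ⊗[ℂ] B₂), 1 ≤ n →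
      (∀ k, x k ∈ S₁ ∪ S₂) →
      ∀ (i : Fin n) (b : B₂), b ∈ 𝒜₂ → x i = (1 - P) ⊗ₜ[ℂ] b →
        0 < (i : ℕ) → (i : ℕ) + 1 < n →
        (∀ j : Fin n, ((j : ℕ) + 1 = (i : ℕ) ∨ (j : ℕ) = (i : ℕ) + 1) → x j ∈ S₁) →
        φ (List.ofFn x).prod =
          φ₂ b * (φ (((List.ofFn x).eraseIdx (i : ℕ)).prod)
            - φ (((List.ofFn x).take (i : ℕ)).prod)
              * φ (((List.ofFn x).drop ((i : ℕ) + 1)).prod)))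
    ∧
    -- (ii)
    (∀ (n : ℕ) (x : Fin n → B₁ ⊗[ℂ] B₂) (hn : 1 ≤ n),
      (∀ k, x k ∈ S₁ ∪ S₂) →
      (x ⟨0, hn⟩ ∈ S₂ ∨ x ⟨n - 1, Nat.sub_lt hn one_pos⟩ ∈ S₂) →
      φ (List.ofFn x).prod = 0) :=
  orthogonal_independence_tensor_realization_general φ₁ φ₂ hφ₁1 hφ₂1 P Q hPsep hQsep 𝒜₁ 𝒜₂ φ hφ S₁
    S₂ hS₁ hS₂
end

section
/- Let B₁, B₂ be unital ℂ-algebras, let φ̃₁, ψ̃₁ : B₁ → ℂ and φ̃₂, ψ̃₂ : B₂ → ℂ be ℂ-linear functionals taking the value 1 at the units, let P ∈ B₁ be an idempotent separating φ̃₁, and let Q ∈ B₂ be an idempotent separating both φ̃₂ and ψ̃₂. Let 𝒜₁ ⊆ B₁ and 𝒜₂ ⊆ B₂ be (not necessarily unital) subalgebras. On B = B₁ ⊗[ℂ] B₂ ⊗[ℂ] B₂ define φ = φ̃₁ ⊗ φ̃₂ ⊗ ψ̃₂ and ψ = ψ̃₁ ⊗ ψ̃₂ ⊗ ψ̃₂,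 and set j₁(a) = a ⊗ Q ⊗ Q for a ∈ 𝒜₁ and j₂(b) = P ⊗ b ⊗ 1 + (1 − P) ⊗ 1 ⊗ b for b ∈ 𝒜₂. Then: (i) φ(j₁(a)) = φ̃₁(a), ψ(j₁(a)) = ψ̃₁(a), φ(j₂(b)) = φ̃₂(b) and ψ(j₂(b)) = ψ̃₂(b) for all a ∈ 𝒜₁ and b ∈ 𝒜₂; (ii) the ordered pair of non-unital subalgebras (j₁(𝒜₁), j₂(𝒜₂)) of B is c-monotone independent with respect to (φ, ψ). -/
open scoped TensorProduct

/-- An ordered pair of subsets (non-unital subalgebras) of an algebra equipped with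
two normalized functionals `(φ, ψ)` is conditionally monotone (c-monotone)
independent with respect to `(φ, ψ)`. -/
def CMonotoneIndependentPair {A : Type*} [Ring A] (φ ψ : A → ℂ) (S₁ S₂ : Set A) : Prop :=
  ∀ (n : ℕ), 1 ≤ n → ∀ (x : Fin n → A),
    (∀ k, x k ∈ S₁ ∪ S₂) →
    ∀ i : Fin n, x i ∈ S₂ →
      (∀ j : Fin n, ((j : ℕ) + 1 = (i : ℕ) ∨ (j : ℕ) = (i : ℕ) + 1) → x j ∈ S₁) →
      (φ (List.ofFn x).prod =
          (φ (x i) - ψ (x i)) * φ (((List.ofFn x).take (i : ℕ)).prod)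
              * φ (((List.ofFn x).drop ((i : ℕ) + 1)).prod)
            + ψ (x i) * φ (((List.ofFn x).eraseIdx (i : ℕ)).prod))
      ∧ ψ (List.ofFn x).prod = ψ (x i) * ψ (((List.ofFn x).eraseIdx (i : ℕ)).prod)

set_option maxHeartbeats 1600000 in
/-- tensor product realization of c-monotone independence
(Proposition 3.1 of the paper): the variables `j₁(a) = a ⊗ Q ⊗ Q` and
`j₂(b) = P ⊗ b ⊗ 1 + P^⊥ ⊗ 1 ⊗ b` have the correct marginal distributions and
generate a c-monotone independent pair w.r.t. `(φ, ψ)`. -/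
theorem cmonotone_independence_tensor_realization
    {B₁ B₂ : Type*} [Ring B₁] [Algebra ℂ B₁] [Ring B₂] [Algebra ℂ B₂]
    (φ₁ ψ₁ : B₁ →ₗ[ℂ] ℂ) (φ₂ ψ₂ : B₂ →ₗ[ℂ] ℂ)
    (hφ₁1 : φ₁ 1 = 1) (hψ₁1 : ψ₁ 1 = 1) (hφ₂1 : φ₂ 1 = 1) (hψ₂1 : ψ₂ 1 = 1)
    (P : B₁) (Q : B₂)
    (hPidem : P * P = P) (hP1 : φ₁ P = 1)
    (hPsep : ∀ x y : B₁, φ₁ (x * P * y) = φ₁ x * φ₁ y)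
    (hQidem : Q * Q = Q) (hQ1 : φ₂ Q = 1)
    (hQsep : ∀ x y : B₂, φ₂ (x * Q * y) = φ₂ x * φ₂ y)
    (hQ1' : ψ₂ Q = 1)
    (hQsep' : ∀ x y : B₂, ψ₂ (x * Q * y) = ψ₂ x * ψ₂ y)
    (𝒜₁ : NonUnitalSubalgebra ℂ B₁) (𝒜₂ : NonUnitalSubalgebra ℂ B₂)
    (φ ψ : (B₁ ⊗[ℂ] (B₂ ⊗[ℂ] B₂)) →ₗ[ℂ] ℂ)
    (hφ : ∀ (x : B₁) (y z : B₂), φ (x ⊗ₜ[ℂ] (y ⊗ₜ[ℂ] z)) = φ₁ x * (φ₂ y * ψ₂ z))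
    (hψ : ∀ (x : B₁) (y z : B₂), ψ (x ⊗ₜ[ℂ] (y ⊗ₜ[ℂ] z)) = ψ₁ x * (ψ₂ y * ψ₂ z))
    (j₁ : B₁ → B₁ ⊗[ℂ] (B₂ ⊗[ℂ] B₂)) (j₂ : B₂ → B₁ ⊗[ℂ] (B₂ ⊗[ℂ] B₂))
    (hj₁ : ∀ a : B₁, j₁ a = a ⊗ₜ[ℂ] (Q ⊗ₜ[ℂ] Q))
    (hj₂ : ∀ b : B₂, j₂ b = P ⊗ₜ[ℂ] (b ⊗ₜ[ℂ] 1) + (1 - P) ⊗ₜ[ℂ] ((1 : B₂) ⊗ₜ[ℂ] b)) :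
    -- (i) marginal distributions
    ((∀ a ∈ 𝒜₁, φ (j₁ a) = φ₁ a ∧ ψ (j₁ a) = ψ₁ a)
      ∧ (∀ b ∈ 𝒜₂, φ (j₂ b) = φ₂ b ∧ ψ (j₂ b) = ψ₂ b))
    ∧
    -- (ii) c-monotone independence of the pair (j₁(𝒜₁), j₂(𝒜₂))
    CMonotoneIndependentPair (fun z => φ z) (fun z => ψ z)
      {z | ∃ a ∈ 𝒜₁, z = j₁ a} {z | ∃ b ∈ 𝒜₂, z = j₂ b} := by
  
  -- scalar separation helpers
  have sP : ∀ x z : B₁, φ₁ (x * (P * z)) = φ₁ x * φ₁ z := by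
    intro x z; have h := hPsep x z; rwa [mul_assoc] at h
  have sP2 : ∀ x y z : B₁, φ₁ (x * (y * (P * z))) = φ₁ (x * y) * φ₁ z := by
    intro x y z; rw [← mul_assoc, sP]
  have sPr : ∀ x : B₁, φ₁ (x * P) = φ₁ x := by
    intro x; have h := hPsep x 1; simpa [hφ₁1] using h
  have sPr2 : ∀ x y : B₁, φ₁ (x * (y * P)) = φ₁ (x * y) := by
    intro x y; rw [← mul_assoc, sPr]
  have sPl : ∀ z : B₁, φ₁ (P * z) = φ₁ z := by
    intro z; have h := hPsep 1 z; simpa [hφ₁1] using h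
  have sQ : ∀ x z : B₂, φ₂ (x * (Q * z)) = φ₂ x * φ₂ z := by
    intro x z; have h := hQsep x z; rwa [mul_assoc] at h
  have sQr : ∀ x : B₂, φ₂ (x * Q) = φ₂ x := by
    intro x; have h := hQsep x 1; simpa [hφ₂1] using h
  have sQl : ∀ z : B₂, φ₂ (Q * z) = φ₂ z := by
    intro z; have h := hQsep 1 z; simpa [hφ₂1] using h
  have tQ : ∀ x z : B₂, ψ₂ (x * (Q * z)) = ψ₂ x * ψ₂ z := by
    intro x z; have h := hQsep' x z; rwa [mul_assoc] at h
  have tQr : ∀ x : B₂, ψ₂ (x * Q) = ψ₂ x := by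
    intro x; have h := hQsep' x 1; simpa [hψ₂1] using h
  have tQl : ∀ z : B₂, ψ₂ (Q * z) = ψ₂ z := by
    intro z; have h := hQsep' 1 z; simpa [hψ₂1] using h
  -- units
  have hone : (1 : B₁ ⊗[ℂ] (B₂ ⊗[ℂ] B₂)) = (1:B₁) ⊗ₜ[ℂ] ((1:B₂) ⊗ₜ[ℂ] (1:B₂)) := rfl
  have hφone : φ 1 = 1 := by rw [hone, hφ, hφ₁1, hφ₂1, hψ₂1]; ring
  have hψone : ψ 1 = 1 := by rw [hone, hψ, hψ₁1, hψ₂1]; ring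
  -- marginals
  have margφ₁ : ∀ a : B₁, φ (j₁ a) = φ₁ a := by
    intro a; rw [hj₁, hφ, hQ1, hQ1']; ring
  have margψ₁ : ∀ a : B₁, ψ (j₁ a) = ψ₁ a := by
    intro a; rw [hj₁, hψ, hQ1']; ring
  have margφ₂ : ∀ b : B₂, φ (j₂ b) = φ₂ b := by
    intro b
    simp only [hj₂, map_add, map_sub, hφ, hφ₁1, hφ₂1, hψ₂1, hP1]
    ring
  have margψ₂ : ∀ b : B₂, ψ (j₂ b) = ψ₂ b := by
    intro b
    simp only [hj₂, map_add, map_sub, hψ, hψ₁1, hψ₂1]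
    ring
  -- key lemmas
  have keyφ_mid : ∀ (a a' : B₁) (b : B₂) (u v : B₁ ⊗[ℂ] (B₂ ⊗[ℂ] B₂)),
      φ ((u * j₁ a) * (j₂ b * (j₁ a' * v))) =
        (φ₂ b - ψ₂ b) * (φ (u * j₁ a) * φ (j₁ a' * v))
          + ψ₂ b * φ ((u * j₁ a) * (j₁ a' * v)) := by
    intro a a' b u v
    induction u using TensorProduct.induction_on with
    | zero => simp
    | add u1 u2 h1 h2 =>
        simp only [add_mul, map_add]
        linear_combination h1 + h2
    | tmul p q =>
        induction q using TensorProduct.induction_on with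
        | zero => simp
        | add q1 q2 h1 h2 =>
            simp only [TensorProduct.tmul_add, add_mul, map_add]
            linear_combination h1 + h2
        | tmul y z =>
            induction v using TensorProduct.induction_on with
            | zero => simp
            | add v1 v2 h1 h2 =>
                simp only [mul_add, map_add]
                linear_combination h1 + h2
            | tmul r w =>
                induction w using TensorProduct.induction_on with
                | zero => simp
                | add w1 w2 h1 h2 =>
                    simp only [TensorProduct.tmul_add, mul_add, map_add]
                    linear_combination h1 + h2
                | tmul s t =>
                    simp only [hj₁, hj₂]
                    simp only [TensorProduct.sub_tmul, sub_mul, mul_sub, add_mul, mul_add,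
                      Algebra.TensorProduct.tmul_mul_tmul, map_add, map_sub, hφ,
                      one_mul, mul_one, mul_assoc]
                    simp only [sP2, sQ, sQl, sQr, tQ, tQl, tQr, hQ1, hQ1']
                    ring
  have keyψ_mid : ∀ (a a' : B₁) (b : B₂) (u v : B₁ ⊗[ℂ] (B₂ ⊗[ℂ] B₂)),
      ψ ((u * j₁ a) * (j₂ b * (j₁ a' * v))) =
        ψ₂ b * ψ ((u * j₁ a) * (j₁ a' * v)) := by
    intro a a' b u v
    induction u using TensorProduct.induction_on with
    | zero => simp
    | add u1 u2 h1 h2 =>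
        simp only [add_mul, map_add]
        linear_combination h1 + h2
    | tmul p q =>
        induction q using TensorProduct.induction_on with
        | zero => simp
        | add q1 q2 h1 h2 =>
            simp only [TensorProduct.tmul_add, add_mul, map_add]
            linear_combination h1 + h2
        | tmul y z =>
            induction v using TensorProduct.induction_on with
            | zero => simp
            | add v1 v2 h1 h2 =>
                simp only [mul_add, map_add]
                linear_combination h1 + h2
            | tmul r w =>
                induction w using TensorProduct.induction_on with
                | zero => simp
                | add w1 w2 h1 h2 =>
                    simp only [TensorProduct.tmul_add, mul_add, map_add]
                    linear_combination h1 + h2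
                | tmul s t =>
                    simp only [hj₁, hj₂]
                    simp only [TensorProduct.sub_tmul, sub_mul, mul_sub, add_mul, mul_add,
                      Algebra.TensorProduct.tmul_mul_tmul, map_add, map_sub, hψ,
                      one_mul, mul_one, mul_assoc]
                    simp only [tQ, tQl, tQr, hQ1']
                    ring
  have keyφ_left : ∀ (a' : B₁) (b : B₂) (v : B₁ ⊗[ℂ] (B₂ ⊗[ℂ] B₂)),
      φ (j₂ b * (j₁ a' * v)) = φ₂ b * φ (j₁ a' * v) := by
    intro a' b v
    induction v using TensorProduct.induction_on with
    | zero => simp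
    | add v1 v2 h1 h2 =>
        simp only [mul_add, map_add]
        linear_combination h1 + h2
    | tmul r w =>
        induction w using TensorProduct.induction_on with
        | zero => simp
        | add w1 w2 h1 h2 =>
            simp only [TensorProduct.tmul_add, mul_add, map_add]
            linear_combination h1 + h2
        | tmul s t =>
            simp only [hj₁, hj₂]
            simp only [TensorProduct.sub_tmul, sub_mul, mul_sub, add_mul, mul_add,
              Algebra.TensorProduct.tmul_mul_tmul, map_add, map_sub, hφ,
              one_mul, mul_one, mul_assoc]
            simp only [sPl, hφ₁1, sQ, sQl, sQr, tQ, tQl, tQr, hQ1, hQ1']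
            ring
  have keyψ_left : ∀ (a' : B₁) (b : B₂) (v : B₁ ⊗[ℂ] (B₂ ⊗[ℂ] B₂)),
      ψ (j₂ b * (j₁ a' * v)) = ψ₂ b * ψ (j₁ a' * v) := by
    intro a' b v
    induction v using TensorProduct.induction_on with
    | zero => simp
    | add v1 v2 h1 h2 =>
        simp only [mul_add, map_add]
        linear_combination h1 + h2
    | tmul r w =>
        induction w using TensorProduct.induction_on with
        | zero => simp
        | add w1 w2 h1 h2 =>
            simp only [TensorProduct.tmul_add, mul_add, map_add]
            linear_combination h1 + h2
        | tmul s t =>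
            simp only [hj₁, hj₂]
            simp only [TensorProduct.sub_tmul, sub_mul, mul_sub, add_mul, mul_add,
              Algebra.TensorProduct.tmul_mul_tmul, map_add, map_sub, hψ,
              one_mul, mul_one, mul_assoc]
            simp only [tQ, tQl, tQr, hQ1']
            ring
  have keyφ_right : ∀ (a : B₁) (b : B₂) (u : B₁ ⊗[ℂ] (B₂ ⊗[ℂ] B₂)),
      φ ((u * j₁ a) * j₂ b) = φ₂ b * φ (u * j₁ a) := by
    intro a b u
    induction u using TensorProduct.induction_on with
    | zero => simp
    | add u1 u2 h1 h2 =>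
        simp only [add_mul, map_add]
        linear_combination h1 + h2
    | tmul p q =>
        induction q using TensorProduct.induction_on with
        | zero => simp
        | add q1 q2 h1 h2 =>
            simp only [TensorProduct.tmul_add, add_mul, map_add]
            linear_combination h1 + h2
        | tmul y z =>
            simp only [hj₁, hj₂]
            simp only [TensorProduct.sub_tmul, sub_mul, mul_sub, add_mul, mul_add,
              Algebra.TensorProduct.tmul_mul_tmul, map_add, map_sub, hφ,
              one_mul, mul_one, mul_assoc]
            simp only [sPr2, sQ, sQl, sQr, tQ, tQl, tQr, hQ1, hQ1']
            ring
  have keyψ_right : ∀ (a : B₁) (b : B₂) (u : B₁ ⊗[ℂ] (B₂ ⊗[ℂ] B₂)),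
      ψ ((u * j₁ a) * j₂ b) = ψ₂ b * ψ (u * j₁ a) := by
    intro a b u
    induction u using TensorProduct.induction_on with
    | zero => simp
    | add u1 u2 h1 h2 =>
        simp only [add_mul, map_add]
        linear_combination h1 + h2
    | tmul p q =>
        induction q using TensorProduct.induction_on with
        | zero => simp
        | add q1 q2 h1 h2 =>
            simp only [TensorProduct.tmul_add, add_mul, map_add]
            linear_combination h1 + h2
        | tmul y z =>
            simp only [hj₁, hj₂]
            simp only [TensorProduct.sub_tmul, sub_mul, mul_sub, add_mul, mul_add,
              Algebra.TensorProduct.tmul_mul_tmul, map_add, map_sub, hψ,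
              one_mul, mul_one, mul_assoc]
            simp only [tQ, tQl, tQr, hQ1']
            ring
  refine ⟨⟨fun a _ => ⟨margφ₁ a, margψ₁ a⟩, fun b _ => ⟨margφ₂ b, margψ₂ b⟩⟩, ?_⟩
  intro n hn x hx i hxi hnb
  obtain ⟨b, hb, hxib⟩ := hxi
  have hlen : (List.ofFn x).length = n := List.length_ofFn
  have hilt : (i : ℕ) < (List.ofFn x).length := by rw [hlen]; exact i.isLt
  have hsplit : (List.ofFn x).prod
      = ((List.ofFn x).take (i:ℕ)).prod * (x i * ((List.ofFn x).drop ((i:ℕ)+1)).prod) := by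
    conv_lhs => rw [← List.take_append_drop (i:ℕ) (List.ofFn x)]
    rw [List.prod_append, List.drop_eq_getElem_cons hilt, List.prod_cons,
      List.getElem_ofFn]
  have herase : ((List.ofFn x).eraseIdx (i:ℕ)).prod
      = ((List.ofFn x).take (i:ℕ)).prod * ((List.ofFn x).drop ((i:ℕ)+1)).prod := by
    rw [List.eraseIdx_eq_take_drop_succ, List.prod_append]
  by_cases h0 : (i : ℕ) = 0
  · have ht : ((List.ofFn x).take (i:ℕ)) = [] := by rw [h0]; exact List.take_zero
    by_cases hL : (i : ℕ) + 1 = n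
    · -- singleton
      have hd : ((List.ofFn x).drop ((i:ℕ)+1)) = [] := by
        apply List.drop_eq_nil_of_le; rw [hlen]; omega
      constructor
      · simp only [hsplit, herase, ht, hd, List.prod_nil, hxib, margφ₂, margψ₂,
          hφone, hψone, one_mul, mul_one]
        ring
      · simp only [hsplit, herase, ht, hd, List.prod_nil, hxib, margφ₂, margψ₂,
          hφone, hψone, one_mul, mul_one]
    · -- i = 0, right neighbor exists
      have hi1 : (i:ℕ) + 1 < n := by omega
      obtain ⟨a', ha', hxj⟩ := hnb ⟨(i:ℕ)+1, hi1⟩ (Or.inr rfl)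
      have hd : ((List.ofFn x).drop ((i:ℕ)+1))
          = x ⟨(i:ℕ)+1, hi1⟩ :: ((List.ofFn x).drop ((i:ℕ)+1+1)) := by
        rw [List.drop_eq_getElem_cons (by rw [hlen]; omega), List.getElem_ofFn]
      constructor
      · simp only [hsplit, herase, ht, hd, List.prod_nil, List.prod_cons, hxib, hxj,
          margφ₂, margψ₂, hφone, hψone, one_mul, mul_one]
        linear_combination keyφ_left a' b ((List.ofFn x).drop ((i:ℕ)+1+1)).prod
      · simp only [hsplit, herase, ht, hd, List.prod_nil, List.prod_cons, hxib, hxj,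
          margφ₂, margψ₂, hφone, hψone, one_mul, mul_one]
        linear_combination keyψ_left a' b ((List.ofFn x).drop ((i:ℕ)+1+1)).prod
  · -- i > 0, left neighbor exists
    have hi0 : (i:ℕ) - 1 < n := by omega
    obtain ⟨a, ha, hxk⟩ := hnb ⟨(i:ℕ)-1, hi0⟩ (Or.inl (by simp; omega))
    have hi' : (i:ℕ) = ((i:ℕ)-1)+1 := by omega
    have htp : ((List.ofFn x).take (i:ℕ)).prod
        = ((List.ofFn x).take ((i:ℕ)-1)).prod * x ⟨(i:ℕ)-1, hi0⟩ := by
      conv_lhs => rw [hi']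
      rw [List.prod_take_succ _ _ (by rw [hlen]; omega), List.getElem_ofFn]
    by_cases hL : (i : ℕ) + 1 = n
    · -- i is last
      have hd : ((List.ofFn x).drop ((i:ℕ)+1)) = [] := by
        apply List.drop_eq_nil_of_le; rw [hlen]; omega
      constructor
      · simp only [hsplit, herase, htp, hd, List.prod_nil, hxib, hxk,
          margφ₂, margψ₂, hφone, hψone, one_mul, mul_one]
        linear_combination keyφ_right a b ((List.ofFn x).take ((i:ℕ)-1)).prod
      · simp only [hsplit, herase, htp, hd, List.prod_nil, hxib, hxk,
          margφ₂, margψ₂, hφone, hψone, one_mul, mul_one]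
        linear_combination keyψ_right a b ((List.ofFn x).take ((i:ℕ)-1)).prod
    · -- middle
      have hi1 : (i:ℕ) + 1 < n := by omega
      obtain ⟨a', ha', hxj⟩ := hnb ⟨(i:ℕ)+1, hi1⟩ (Or.inr rfl)
      have hd : ((List.ofFn x).drop ((i:ℕ)+1))
          = x ⟨(i:ℕ)+1, hi1⟩ :: ((List.ofFn x).drop ((i:ℕ)+1+1)) := by
        rw [List.drop_eq_getElem_cons (by rw [hlen]; omega), List.getElem_ofFn]
      constructor
      · simp only [hsplit, herase, htp, hd, List.prod_cons, hxib, hxk, hxj,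
          margφ₂, margψ₂, hφone, hψone, one_mul, mul_one]
        linear_combination keyφ_mid a a' b ((List.ofFn x).take ((i:ℕ)-1)).prod
          ((List.ofFn x).drop ((i:ℕ)+1+1)).prod
      · simp only [hsplit, herase, htp, hd, List.prod_cons, hxib, hxk, hxj,
          margφ₂, margψ₂, hφone, hψone, one_mul, mul_one]
        linear_combination keyψ_mid a a' b ((List.ofFn x).take ((i:ℕ)-1)).prod
          ((List.ofFn x).drop ((i:ℕ)+1+1)).prod
end

section
/- Let B₁, B₂ be unital ℂ-algebras, let φ̃₁, ψ̃₁ : B₁ → ℂ and φ̃₂, ψ̃₂ : B₂ → ℂ be ℂ-linear functionals taking the value 1 at the units, let P ∈ B₁ be an idempotent separating φ̃₁, and let Q ∈ B₂ be an idempotent separating both φ̃₂ and ψ̃₂. Let 𝒜₁ ⊆ B₁ and 𝒜₂ ⊆ B₂ be (not necessarily unital) subalgebras. On B = B₁ ⊗[ℂ] B₂ ⊗[ℂ] B₂ define φ = φ̃₁ ⊗ φ̃₂ ⊗ ψ̃₂ and ψ = ψ̃₁ ⊗ ψ̃₂ ⊗ ψ̃₂, and set j₁(a) = a ⊗ Q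 ⊗ Q, j₂(b) = P ⊗ b ⊗ 1 + (1 − P) ⊗ 1 ⊗ b, and j₂'(b) = P ⊗ b ⊗ Q + (1 − P) ⊗ Q ⊗ b. Then j₂' yields the same mixed moments as j₂: for every n ≥ 1 and every function c : {1,…,n} → 𝒜₁ ⊕ 𝒜₂, writing x_k = j₁(a) if c(k) = inl a and x_k = j₂(b) if c(k) = inr b, and x_k' = j₁(a) if c(k) = inl a and x_k' = j₂'(b) if c(k) = inr b, one has φ(x₁⋯xₙ) = φ(x₁'⋯xₙ') and ψ(x₁⋯xₙ) = ψ(x₁'⋯xₙ'). -/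
open scoped TensorProduct

/-- the alternative realization
`j₂'(b) = P ⊗ b ⊗ Q + P^⊥ ⊗ Q ⊗ b` yields the same mixed moments with respect
to `φ` and `ψ` as `j₂(b) = P ⊗ b ⊗ 1 + P^⊥ ⊗ 1 ⊗ b` (Remark 3.1(2) of the paper). -/
theorem cmonotone_alternative_realization_same_moments
    {B₁ B₂ : Type*} [Ring B₁] [Algebra ℂ B₁] [Ring B₂] [Algebra ℂ B₂]
    (φ₁ ψ₁ : B₁ →ₗ[ℂ] ℂ) (φ₂ ψ₂ : B₂ →ₗ[ℂ] ℂ)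
    (hφ₁1 : φ₁ 1 = 1) (hψ₁1 : ψ₁ 1 = 1) (hφ₂1 : φ₂ 1 = 1) (hψ₂1 : ψ₂ 1 = 1)
    (P : B₁) (Q : B₂)
    (hPidem : P * P = P) (hP1 : φ₁ P = 1)
    (hPsep : ∀ x y : B₁, φ₁ (x * P * y) = φ₁ x * φ₁ y)
    (hQidem : Q * Q = Q) (hQ1 : φ₂ Q = 1)
    (hQsep : ∀ x y : B₂, φ₂ (x * Q * y) = φ₂ x * φ₂ y)
    (hQ1' : ψ₂ Q = 1)
    (hQsep' : ∀ x y : B₂, ψ₂ (x * Q * y) = ψ₂ x * ψ₂ y)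
    (𝒜₁ : NonUnitalSubalgebra ℂ B₁) (𝒜₂ : NonUnitalSubalgebra ℂ B₂)
    (φ ψ : (B₁ ⊗[ℂ] (B₂ ⊗[ℂ] B₂)) →ₗ[ℂ] ℂ)
    (hφ : ∀ (x : B₁) (y z : B₂), φ (x ⊗ₜ[ℂ] (y ⊗ₜ[ℂ] z)) = φ₁ x * (φ₂ y * ψ₂ z))
    (hψ : ∀ (x : B₁) (y z : B₂), ψ (x ⊗ₜ[ℂ] (y ⊗ₜ[ℂ] z)) = ψ₁ x * (ψ₂ y * ψ₂ z))
    (j₁ : B₁ → B₁ ⊗[ℂ] (B₂ ⊗[ℂ] B₂)) (j₂ j₂' : B₂ → B₁ ⊗[ℂ] (B₂ ⊗[ℂ] B₂))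
    (hj₁ : ∀ a : B₁, j₁ a = a ⊗ₜ[ℂ] (Q ⊗ₜ[ℂ] Q))
    (hj₂ : ∀ b : B₂, j₂ b = P ⊗ₜ[ℂ] (b ⊗ₜ[ℂ] 1) + (1 - P) ⊗ₜ[ℂ] ((1 : B₂) ⊗ₜ[ℂ] b))
    (hj₂' : ∀ b : B₂, j₂' b = P ⊗ₜ[ℂ] (b ⊗ₜ[ℂ] Q) + (1 - P) ⊗ₜ[ℂ] (Q ⊗ₜ[ℂ] b))
    (n : ℕ) (hn : 1 ≤ n) (c : Fin n → B₁ ⊕ B₂)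
    (hc : ∀ k : Fin n, Sum.elim (· ∈ 𝒜₁) (· ∈ 𝒜₂) (c k)) :
    φ (List.ofFn fun k => Sum.elim j₁ j₂ (c k)).prod
        = φ (List.ofFn fun k => Sum.elim j₁ j₂' (c k)).prod
    ∧ ψ (List.ofFn fun k => Sum.elim j₁ j₂ (c k)).prod
        = ψ (List.ofFn fun k => Sum.elim j₁ j₂' (c k)).prod := by
  -- The intertwining idempotent
  set G : B₁ ⊗[ℂ] (B₂ ⊗[ℂ] B₂) :=
    P ⊗ₜ[ℂ] ((1 : B₂) ⊗ₜ[ℂ] Q) + (1 - P) ⊗ₜ[ℂ] (Q ⊗ₜ[ℂ] (1 : B₂)) with hG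
  have hPP : P * (1 - P) = 0 := by rw [mul_sub, mul_one, hPidem, sub_self]
  have hPP' : (1 - P) * P = 0 := by rw [sub_mul, one_mul, hPidem, sub_self]
  have hPPidem : (1 - P) * (1 - P) = 1 - P := by rw [mul_sub, mul_one, hPP', sub_zero]
  have hP1x : ∀ x : B₁, φ₁ (P * x) = φ₁ x := fun x => by
    have := hPsep 1 x; simpa [hφ₁1] using this
  have hPperp : ∀ x : B₁, φ₁ ((1 - P) * x) = 0 := by
    intro x; rw [sub_mul, one_mul, map_sub, hP1x x, sub_self]
  have hQ2 : ∀ y : B₂, φ₂ (Q * y) = φ₂ y := fun y => by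
    have := hQsep 1 y; simpa [hφ₂1] using this
  have hQ2' : ∀ z : B₂, ψ₂ (Q * z) = ψ₂ z := fun z => by
    have := hQsep' 1 z; simpa [hψ₂1] using this
  have hGG : G * G = G := by
    simp only [hG, add_mul, mul_add, Algebra.TensorProduct.tmul_mul_tmul, hPidem, hPP, hPP',
      hPPidem, hQidem, one_mul, mul_one, TensorProduct.zero_tmul, add_zero, zero_add]
  -- φ and ψ are invariant under left multiplication by G
  have hφG : ∀ t, φ (G * t) = φ t := by
    intro t
    induction t using TensorProduct.induction_on with
    | zero => simp
    | tmul x w =>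
      induction w using TensorProduct.induction_on with
      | zero => simp
      | tmul y z =>
        simp only [hG, add_mul, Algebra.TensorProduct.tmul_mul_tmul, one_mul, mul_one,
          map_add, hφ, hP1x, hPperp, hQ2, hQ2', zero_mul, add_zero]
      | add w1 w2 ih1 ih2 =>
        rw [TensorProduct.tmul_add, mul_add, map_add, ih1, ih2, map_add]
    | add t1 t2 ih1 ih2 => rw [mul_add, map_add, ih1, ih2, map_add]
  have hψG : ∀ t, ψ (G * t) = ψ t := by
    intro t
    induction t using TensorProduct.induction_on with
    | zero => simp
    | tmul x w =>
      induction w using TensorProduct.induction_on with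
      | zero => simp
      | tmul y z =>
        simp only [hG, add_mul, Algebra.TensorProduct.tmul_mul_tmul, one_mul, mul_one,
          map_add, hψ, hQ2', sub_mul, map_sub]
        ring
      | add w1 w2 ih1 ih2 =>
        rw [TensorProduct.tmul_add, mul_add, map_add, ih1, ih2, map_add]
    | add t1 t2 ih1 ih2 => rw [mul_add, map_add, ih1, ih2, map_add]
  -- key pointwise facts
  have key : ∀ k : Fin n,
      Sum.elim j₁ j₂' (c k) = G * Sum.elim j₁ j₂ (c k) ∧
      G * Sum.elim j₁ j₂ (c k) = Sum.elim j₁ j₂ (c k) * G := by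
    intro k
    cases c k with
    | inl a =>
      simp only [Sum.elim_inl, hj₁]
      constructor
      · rw [hG, add_mul]
        simp only [Algebra.TensorProduct.tmul_mul_tmul, one_mul, mul_one, hQidem]
        rw [← TensorProduct.add_tmul, sub_mul, one_mul, add_sub_cancel]
      · rw [hG, add_mul, mul_add]
        simp only [Algebra.TensorProduct.tmul_mul_tmul, one_mul, mul_one, hQidem]
        rw [← TensorProduct.add_tmul, ← TensorProduct.add_tmul, sub_mul, one_mul,
          add_sub_cancel, mul_sub, mul_one, add_sub_cancel]
    | inr b =>
      simp only [Sum.elim_inr, hj₂, hj₂']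
      constructor
      · rw [hG, add_mul, mul_add, mul_add]
        simp only [Algebra.TensorProduct.tmul_mul_tmul, one_mul, mul_one, hPidem, hPP, hPP',
          hPPidem, TensorProduct.zero_tmul, add_zero, zero_add]
      · rw [hG]
        simp only [add_mul, mul_add, Algebra.TensorProduct.tmul_mul_tmul, one_mul, mul_one, hPidem, hPP, hPP',
          hPPidem, hQidem, TensorProduct.zero_tmul, add_zero, zero_add]
  -- products of commuting-with-G elements
  have prodlem : ∀ l : List (B₁ ⊗[ℂ] (B₂ ⊗[ℂ] B₂)), (∀ x ∈ l, G * x = x * G) → l ≠ [] →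
      (l.map (fun x => G * x)).prod = G * l.prod := by
    intro l
    induction l with
    | nil => intro _ h; exact absurd rfl h
    | cons a t ih =>
      intro hcomm _
      rcases eq_or_ne t [] with rfl | ht
      · simp
      · have hrec := ih (fun x hx => hcomm x (List.mem_cons_of_mem _ hx)) ht
        have ha := hcomm a List.mem_cons_self
        simp only [List.map_cons, List.prod_cons, hrec]
        rw [← mul_assoc, mul_assoc G a G, ← ha, ← mul_assoc, hGG, mul_assoc]
  have hlist : (List.ofFn fun k => Sum.elim j₁ j₂' (c k))
      = (List.ofFn fun k => Sum.elim j₁ j₂ (c k)).map (fun x => G * x) := by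
    rw [List.map_ofFn]
    refine congrArg List.ofFn (funext fun k => ?_)
    simpa [Function.comp] using (key k).1
  have hne : (List.ofFn fun k => Sum.elim j₁ j₂ (c k)) ≠ [] := by
    apply List.ne_nil_of_length_pos
    simpa using (show 0 < n by omega)
  have hcomm : ∀ x ∈ (List.ofFn fun k => Sum.elim j₁ j₂ (c k)), G * x = x * G := by
    intro x hx
    rw [List.mem_ofFn] at hx
    obtain ⟨k, rfl⟩ := hx
    exact (key k).2
  have hmain : (List.ofFn fun k => Sum.elim j₁ j₂' (c k)).prod
      = G * (List.ofFn fun k => Sum.elim j₁ j₂ (c k)).prod := by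
    rw [hlist]; exact prodlem _ hcomm hne
  exact ⟨by rw [hmain, hφG], by rw [hmain, hψG]⟩
end

section
/- Let J be a finite type, and for each j ∈ J let B_j be a unital ℂ-algebra, φ_j : B_j → ℂ a ℂ-linear functional with φ_j(1) = 1, and P_j ∈ B_j an idempotent separating φ_j. Let φ = ⨂_{j∈J} φ_j be the tensor product functional on the tensor product algebra ⨂_{j∈J} B_j, determined by φ(⨂_{j∈J} x_j) = ∏_{j∈J} φ_j(x_j). Then the element P = ⨂_{j∈J} P_j is an idempotent separating φ: P·P = P, φ(P) = 1, and φ(X · P · Y) = φ(X) · φ(Y) for all X, Y ∈ ⨂_{j∈J} B_j. -/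
open scoped TensorProduct

namespace PiTensorProduct

variable {ι R : Type*} {A : ι → Type*} [CommSemiring R] [∀ i, Semiring (A i)] [∀ i, Algebra R (A i)]

theorem isIdempotentElem_tprod {p : ∀ i, A i} (hp : ∀ i, IsIdempotentElem (p i)) :
    IsIdempotentElem (tprod R p) := by
  rw [IsIdempotentElem, tprod_mul_tprod]
  exact congrArg _ (funext hp)

theorem map_mul_mul_eq_mul_of_tprod {ψ : (⨂[R] i, A i) →ₗ[R] R} (p : ⨂[R] i, A i)
    (h : ∀ x y : ∀ i, A i, ψ (tprod R x * p * tprod R y) = ψ (tprod R x) * ψ (tprod R y))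
    (X Y : ⨂[R] i, A i) : ψ (X * p * Y) = ψ X * ψ Y := by
  induction X using PiTensorProduct.induction_on with
  | smul_tprod r x =>
    induction Y using PiTensorProduct.induction_on with
    | smul_tprod s y =>
      simp only [smul_mul_assoc, mul_smul_comm, map_smul, h, smul_eq_mul]
      ring
    | add Y₁ Y₂ h₁ h₂ => simp only [mul_add, map_add, h₁, h₂]
  | add X₁ X₂ h₁ h₂ => simp only [add_mul, map_add, h₁, h₂]

variable [Fintype ι]

theorem map_tprod_mul_tprod_mul_tprod {ψ : (⨂[R] i, A i) →ₗ[R] R} {ψi : ∀ i, A i →ₗ[R] R}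
    (hψ : ∀ v, ψ (tprod R v) = ∏ i, ψi i (v i)) {p : ∀ i, A i}
    (hp : ∀ i, ∀ x y : A i, ψi i (x * p i * y) = ψi i x * ψi i y) (x y : ∀ i, A i) :
    ψ (tprod R x * tprod R p * tprod R y) = ψ (tprod R x) * ψ (tprod R y) := by
  simp only [tprod_mul_tprod, hψ, Pi.mul_apply, hp, Finset.prod_mul_distrib]

end PiTensorProduct

open PiTensorProduct in
theorem tensor_of_separating_idempotents_separates_general
    {J : Type*} [Fintype J]
    (B : J → Type*) [∀ j, Ring (B j)] [∀ j, Algebra ℂ (B j)]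
    (φj : ∀ j, B j →ₗ[ℂ] ℂ)
    (Pj : ∀ j, B j)
    (hPidem : ∀ j, Pj j * Pj j = Pj j)
    (hP1 : ∀ j, φj j (Pj j) = 1)
    (hPsep : ∀ j, ∀ x y : B j, φj j (x * Pj j * y) = φj j x * φj j y)
    (φ : (⨂[ℂ] j, B j) →ₗ[ℂ] ℂ)
    (hφ : ∀ v : (j : J) → B j, φ (⨂ₜ[ℂ] j, v j) = ∏ j, φj j (v j)) :
    (⨂ₜ[ℂ] j, Pj j) * (⨂ₜ[ℂ] j, Pj j) = (⨂ₜ[ℂ] j, Pj j)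
    ∧ φ (⨂ₜ[ℂ] j, Pj j) = 1
    ∧ ∀ X Y : ⨂[ℂ] j, B j, φ (X * (⨂ₜ[ℂ] j, Pj j) * Y) = φ X * φ Y :=
  ⟨isIdempotentElem_tprod hPidem, by simp [hφ, hP1],
    map_mul_mul_eq_mul_of_tprod _ (map_tprod_mul_tprod_mul_tprod hφ hPsep)⟩

/-- the tensor product of separating idempotents is a separating
idempotent for the tensor product functional (Remark 3.2 of the paper). -/
theorem tensor_of_separating_idempotents_separates
    {J : Type*} [Fintype J]
    (B : J → Type*) [∀ j, Ring (B j)] [∀ j, Algebra ℂ (B j)]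
    (φj : ∀ j, B j →ₗ[ℂ] ℂ)
    (hφj1 : ∀ j, φj j 1 = 1)
    (Pj : ∀ j, B j)
    (hPidem : ∀ j, Pj j * Pj j = Pj j)
    (hP1 : ∀ j, φj j (Pj j) = 1)
    (hPsep : ∀ j, ∀ x y : B j, φj j (x * Pj j * y) = φj j x * φj j y)
    (φ : (⨂[ℂ] j, B j) →ₗ[ℂ] ℂ)
    (hφ : ∀ v : (j : J) → B j, φ (⨂ₜ[ℂ] j, v j) = ∏ j, φj j (v j)) :
    (⨂ₜ[ℂ] j, Pj j) * (⨂ₜ[ℂ] j, Pj j) = (⨂ₜ[ℂ] j, Pj j)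
    ∧ φ (⨂ₜ[ℂ] j, Pj j) = 1
    ∧ ∀ X Y : ⨂[ℂ] j, B j, φ (X * (⨂ₜ[ℂ] j, Pj j) * Y) = φ X * φ Y :=
  tensor_of_separating_idempotents_separates_general B φj Pj hPidem hP1 hPsep φ hφ
end

section
/- Let J be a finite linearly ordered type. For each j ∈ J let B_j be a unital ℂ-algebra, let φ_j, ψ_j : B_j → ℂ be ℂ-linear functionals with φ_j(1) = ψ_j(1) = 1, let P_j ∈ B_j be an idempotent separating both φ_j and ψ_j, and let 𝒜_j ⊆ B_j be a (not necessarily unital) subalgebra. On the tensor product algebra 𝔄 = ⨂_{j∈J} (B_j ⊗[ℂ] B_j) define the functionals φ = ⨂_{j∈J} (φ_j ⊗ ψ_j) and ψ = ⨂_{j∈J} (ψ_j ⊗ ψ_j). For a ∈ 𝒜_j set A_j(a) = T₁ + T₂ − T₃ ∈ 𝔄, where T₁ is the elementary tensor with component a ⊗ 1 at site j and P_k ⊗ P_k at every site k ≠ j; T₂ is the elementary tensor with component 1 ⊗ a at site j, 1 ⊗ 1 at sites k < j, and P_k ⊗ P_k at sites k > j; and T₃ is the elementary tensor with component 1 ⊗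 a at site j and P_k ⊗ P_k at every site k ≠ j. Then the family of non-unital subalgebras ( {A_j(a) : a ∈ 𝒜_j} )_{j∈J} of 𝔄 is c-monotone independent with respect to (φ, ψ). -/
open scoped TensorProduct

/-- A family of subsets (non-unital subalgebras) of an algebra equipped with two
normalized functionals, indexed by a linearly ordered set, is conditionally
monotone (c-monotone) independent with respect to `(φ, ψ)`. -/
def CMonotoneIndependentFamily {A J : Type*} [Ring A] [LinearOrder J]
    (φ ψ : A → ℂ) (S : J → Set A) : Prop :=
  ∀ (n : ℕ), 1 ≤ n → ∀ (jdx : Fin n → J) (x : Fin n → A),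
    (∀ k, x k ∈ S (jdx k)) →
    ∀ i : Fin n,
      (∀ j : Fin n, ((j : ℕ) + 1 = (i : ℕ) ∨ (j : ℕ) = (i : ℕ) + 1) → jdx j < jdx i) →
      (φ (List.ofFn x).prod =
          (φ (x i) - ψ (x i)) * φ (((List.ofFn x).take (i : ℕ)).prod)
              * φ (((List.ofFn x).drop ((i : ℕ) + 1)).prod)
            + ψ (x i) * φ (((List.ofFn x).eraseIdx (i : ℕ)).prod))
      ∧ ψ (List.ofFn x).prod = ψ (x i) * ψ (((List.ofFn x).eraseIdx (i : ℕ)).prod)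


lemma my_smul_mul {J : Type*} {B : J → Type*} [∀ j, Ring (B j)] [∀ j, Algebra ℂ (B j)]
    (c : ℂ) (x y : ⨂[ℂ] j, (B j ⊗[ℂ] B j)) : (c • x) * y = c • (x * y) := by
  rw [PiTensorProduct.mul_def, PiTensorProduct.mul_def, map_smul, LinearMap.smul_apply]

lemma my_mul_smul {J : Type*} {B : J → Type*} [∀ j, Ring (B j)] [∀ j, Algebra ℂ (B j)]
    (c : ℂ) (x y : ⨂[ℂ] j, (B j ⊗[ℂ] B j)) : x * (c • y) = c • (x * y) := by
  rw [PiTensorProduct.mul_def, PiTensorProduct.mul_def, map_smul]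

def EndP {R : Type*} [Ring R] (P x : R) : Prop := x = 1 ∨ ∃ y, x = y * P
def StartP {R : Type*} [Ring R] (P x : R) : Prop := x = 1 ∨ ∃ y, x = P * y

lemma sep_split {R : Type*} [Ring R] [Algebra ℂ R] (χ : R →ₗ[ℂ] ℂ) (P : R) (h1 : χ 1 = 1)
    (hsep : ∀ x y, χ (x * P * y) = χ x * χ y) {l r : R} (a : R)
    (hl : EndP P l) (hr : StartP P r) : χ (l * a * r) = χ l * χ a * χ r := by
  have hend : ∀ y : R, χ (y * P) = χ y := by
    intro y; have := hsep y 1; rw [mul_one, h1, mul_one] at this; exact this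
  have hstart : ∀ y : R, χ (P * y) = χ y := by
    intro y; have := hsep 1 y; rw [one_mul, h1, one_mul] at this; exact this
  rcases hl with rfl | ⟨y, rfl⟩ <;> rcases hr with rfl | ⟨z, rfl⟩
  · simp [h1]
  · rw [one_mul, mul_assoc, ← mul_assoc a, hsep, h1, hstart]; ring
  · rw [mul_one, hsep, hend, h1, mul_one]
  · rw [mul_assoc, hsep, ← mul_assoc a, hsep, hend, hstart]; ring

lemma sep_split2 {R : Type*} [Ring R] [Algebra ℂ R] (χ : R →ₗ[ℂ] ℂ) (P : R) (h1 : χ 1 = 1)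
    (hsep : ∀ x y, χ (x * P * y) = χ x * χ y) {l r : R}
    (hl : EndP P l) (hr : StartP P r) : χ (l * r) = χ l * χ r := by
  have := sep_split χ P h1 hsep 1 hl hr
  rw [mul_one, h1] at this; rw [this]; ring

section Real
variable {J : Type*} [Fintype J] [LinearOrder J]
  {B : J → Type*} [∀ j, Ring (B j)] [∀ j, Algebra ℂ (B j)]
  (Pj : ∀ j, B j)

lemma update_tmul (f g : ∀ k, B k) (j : J) (a b : B j) :
    Function.update (fun k => f k ⊗ₜ[ℂ] g k) j (a ⊗ₜ[ℂ] b)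
      = fun k => Function.update f j a k ⊗ₜ[ℂ] Function.update g j b k := by
  funext k
  rcases eq_or_ne k j with rfl | hk
  · simp
  · simp [Function.update_of_ne hk]

lemma tprod_tmul_mul (u v u' v' : ∀ k, B k) :
    (PiTensorProduct.tprod ℂ fun k => u k ⊗ₜ[ℂ] v k) *
        (PiTensorProduct.tprod ℂ fun k => u' k ⊗ₜ[ℂ] v' k)
      = PiTensorProduct.tprod ℂ fun k => (u k * u' k) ⊗ₜ[ℂ] (v k * v' k) := by
  rw [PiTensorProduct.tprod_mul_tprod]
  congr 1
  funext k
  simp [Pi.mul_apply, Algebra.TensorProduct.tmul_mul_tmul]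

variable  (χ ψ : ∀ j, B j →ₗ[ℂ] ℂ)
    (hχ1 : ∀ j, χ j 1 = 1) (hψ1 : ∀ j, ψ j 1 = 1)
    (hχP : ∀ j, χ j (Pj j) = 1) (hψP : ∀ j, ψ j (Pj j) = 1)
    (hχsep : ∀ j, ∀ x y : B j, χ j (x * Pj j * y) = χ j x * χ j y)
    (hψsep : ∀ j, ∀ x y : B j, ψ j (x * Pj j * y) = ψ j x * ψ j y)
    (Θ : (⨂[ℂ] j, (B j ⊗[ℂ] B j)) →ₗ[ℂ] ℂ)
    (hΘ : ∀ u v : (j : J) → B j,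
      Θ (PiTensorProduct.tprod ℂ fun k => u k ⊗ₜ[ℂ] v k) = ∏ k, χ k (u k) * ψ k (v k))

include hχ1 hψ1 hχsep hψsep hΘ in
lemma atomic (j : J) (a : B j) (lu lv ru rv : ∀ k, B k)
    (hlu : ∀ k, j ≤ k → EndP (Pj k) (lu k)) (hlv : ∀ k, j ≤ k → EndP (Pj k) (lv k))
    (hru : ∀ k, j ≤ k → StartP (Pj k) (ru k)) (hrv : ∀ k, j ≤ k → StartP (Pj k) (rv k)) :
    Θ ((PiTensorProduct.tprod ℂ fun k => lu k ⊗ₜ[ℂ] lv k) *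
        ((PiTensorProduct.tprod ℂ fun k =>
            Function.update Pj j a k ⊗ₜ[ℂ] Function.update Pj j 1 k)
          + (PiTensorProduct.tprod ℂ fun k =>
              Function.update (fun k => if k < j then (1 : B k) else Pj k) j 1 k
                ⊗ₜ[ℂ] Function.update (fun k => if k < j then (1 : B k) else Pj k) j a k)
          - (PiTensorProduct.tprod ℂ fun k =>
              Function.update Pj j 1 k ⊗ₜ[ℂ] Function.update Pj j a k)) *
        (PiTensorProduct.tprod ℂ fun k => ru k ⊗ₜ[ℂ] rv k))
      = (χ j a - ψ j a) *
          (Θ (PiTensorProduct.tprod ℂ fun k => lu k ⊗ₜ[ℂ] lv k) *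
            Θ (PiTensorProduct.tprod ℂ fun k => ru k ⊗ₜ[ℂ] rv k))
        + ψ j a *
          Θ ((PiTensorProduct.tprod ℂ fun k => lu k ⊗ₜ[ℂ] lv k) *
            (PiTensorProduct.tprod ℂ fun k => ru k ⊗ₜ[ℂ] rv k)) := by
  have hLR : Θ ((PiTensorProduct.tprod ℂ fun k => lu k ⊗ₜ[ℂ] lv k) *
      (PiTensorProduct.tprod ℂ fun k => ru k ⊗ₜ[ℂ] rv k))
      = ∏ k, χ k (lu k * ru k) * ψ k (lv k * rv k) := by
    rw [tprod_tmul_mul, hΘ]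
  have h1 : Θ ((PiTensorProduct.tprod ℂ fun k => lu k ⊗ₜ[ℂ] lv k) *
        (PiTensorProduct.tprod ℂ fun k =>
            Function.update Pj j a k ⊗ₜ[ℂ] Function.update Pj j 1 k) *
        (PiTensorProduct.tprod ℂ fun k => ru k ⊗ₜ[ℂ] rv k))
      = χ j a * ((∏ k, χ k (lu k) * ψ k (lv k)) * (∏ k, χ k (ru k) * ψ k (rv k))) := by
    rw [tprod_tmul_mul, tprod_tmul_mul, hΘ]
    calc (∏ k, χ k (lu k * Function.update Pj j a k * ru k) *
            ψ k (lv k * Function.update Pj j 1 k * rv k))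
        = ∏ k, (if k = j then χ j a else 1) *
            ((χ k (lu k) * ψ k (lv k)) * (χ k (ru k) * ψ k (rv k))) := by
          refine Finset.prod_congr rfl fun k _ => ?_
          rcases eq_or_ne k j with rfl | hk
          · rw [if_pos rfl]
            simp only [Function.update_self]
            rw [sep_split (χ k) (Pj k) (hχ1 k) (hχsep k) a (hlu k le_rfl) (hru k le_rfl),
              sep_split (ψ k) (Pj k) (hψ1 k) (hψsep k) 1 (hlv k le_rfl) (hrv k le_rfl),
              hψ1]
            ring
          · simp only [Function.update_of_ne hk, if_neg hk]
            rw [hχsep k, hψsep k]; ring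
      _ = χ j a * ((∏ k, χ k (lu k) * ψ k (lv k)) * (∏ k, χ k (ru k) * ψ k (rv k))) := by
          rw [Finset.prod_mul_distrib, Finset.prod_mul_distrib, Finset.prod_ite_eq']
          simp
  have h3 : Θ ((PiTensorProduct.tprod ℂ fun k => lu k ⊗ₜ[ℂ] lv k) *
        (PiTensorProduct.tprod ℂ fun k =>
            Function.update Pj j 1 k ⊗ₜ[ℂ] Function.update Pj j a k) *
        (PiTensorProduct.tprod ℂ fun k => ru k ⊗ₜ[ℂ] rv k))
      = ψ j a * ((∏ k, χ k (lu k) * ψ k (lv k)) * (∏ k, χ k (ru k) * ψ k (rv k))) := by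
    rw [tprod_tmul_mul, tprod_tmul_mul, hΘ]
    calc (∏ k, χ k (lu k * Function.update Pj j 1 k * ru k) *
            ψ k (lv k * Function.update Pj j a k * rv k))
        = ∏ k, (if k = j then ψ j a else 1) *
            ((χ k (lu k) * ψ k (lv k)) * (χ k (ru k) * ψ k (rv k))) := by
          refine Finset.prod_congr rfl fun k _ => ?_
          rcases eq_or_ne k j with rfl | hk
          · rw [if_pos rfl]
            simp only [Function.update_self]
            rw [sep_split (χ k) (Pj k) (hχ1 k) (hχsep k) 1 (hlu k le_rfl) (hru k le_rfl),
              sep_split (ψ k) (Pj k) (hψ1 k) (hψsep k) a (hlv k le_rfl) (hrv k le_rfl),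
              hχ1]
            ring
          · simp only [Function.update_of_ne hk, if_neg hk]
            rw [hχsep k, hψsep k]; ring
      _ = ψ j a * ((∏ k, χ k (lu k) * ψ k (lv k)) * (∏ k, χ k (ru k) * ψ k (rv k))) := by
          rw [Finset.prod_mul_distrib, Finset.prod_mul_distrib, Finset.prod_ite_eq']
          simp
  have h2 : Θ ((PiTensorProduct.tprod ℂ fun k => lu k ⊗ₜ[ℂ] lv k) *
        (PiTensorProduct.tprod ℂ fun k =>
            Function.update (fun k => if k < j then (1 : B k) else Pj k) j 1 k
              ⊗ₜ[ℂ] Function.update (fun k => if k < j then (1 : B k) else Pj k) j a k) *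
        (PiTensorProduct.tprod ℂ fun k => ru k ⊗ₜ[ℂ] rv k))
      = ψ j a * ∏ k, χ k (lu k * ru k) * ψ k (lv k * rv k) := by
    rw [tprod_tmul_mul, tprod_tmul_mul, hΘ]
    calc (∏ k, χ k (lu k * Function.update (fun k => if k < j then (1 : B k) else Pj k) j 1 k * ru k) *
            ψ k (lv k * Function.update (fun k => if k < j then (1 : B k) else Pj k) j a k * rv k))
        = ∏ k, (if k = j then ψ j a else 1) * (χ k (lu k * ru k) * ψ k (lv k * rv k)) := by
          refine Finset.prod_congr rfl fun k _ => ?_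
          rcases eq_or_ne k j with rfl | hk
          · rw [if_pos rfl]
            simp only [Function.update_self]
            rw [mul_one (lu k),
              sep_split (ψ k) (Pj k) (hψ1 k) (hψsep k) a (hlv k le_rfl) (hrv k le_rfl),
              sep_split2 (ψ k) (Pj k) (hψ1 k) (hψsep k) (hlv k le_rfl) (hrv k le_rfl)]
            ring
          · simp only [Function.update_of_ne hk, if_neg hk]
            rcases lt_or_gt_of_ne hk with hk' | hk'
            · rw [if_pos hk', mul_one (lu k), mul_one (lv k), one_mul]
            · rw [if_neg (not_lt_of_gt hk'), hχsep k, hψsep k,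
                sep_split2 (χ k) (Pj k) (hχ1 k) (hχsep k) (hlu k hk'.le) (hru k hk'.le),
                sep_split2 (ψ k) (Pj k) (hψ1 k) (hψsep k) (hlv k hk'.le) (hrv k hk'.le),
                one_mul]
      _ = ψ j a * ∏ k, χ k (lu k * ru k) * ψ k (lv k * rv k) := by
          rw [Finset.prod_mul_distrib, Finset.prod_ite_eq']
          simp
  rw [mul_sub, mul_add, sub_mul, add_mul, map_sub, map_add, h1, h2, h3, hLR, hΘ, hΘ]
  ring

def PureT : Set (⨂[ℂ] j, (B j ⊗[ℂ] B j)) :=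
  {z | ∃ u v : ∀ k, B k, z = PiTensorProduct.tprod ℂ fun k => u k ⊗ₜ[ℂ] v k}

def GoodL (j : J) : Set (⨂[ℂ] k, (B k ⊗[ℂ] B k)) :=
  {z | ∃ u v : ∀ k, B k,
    (∀ k, j ≤ k → EndP (Pj k) (u k) ∧ EndP (Pj k) (v k)) ∧
    z = PiTensorProduct.tprod ℂ fun k => u k ⊗ₜ[ℂ] v k}

def GoodR (j : J) : Set (⨂[ℂ] k, (B k ⊗[ℂ] B k)) :=
  {z | ∃ u v : ∀ k, B k,
    (∀ k, j ≤ k → StartP (Pj k) (u k) ∧ StartP (Pj k) (v k)) ∧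
    z = PiTensorProduct.tprod ℂ fun k => u k ⊗ₜ[ℂ] v k}

lemma one_eq_tprod : (1 : ⨂[ℂ] j, (B j ⊗[ℂ] B j))
    = PiTensorProduct.tprod ℂ fun k => (1 : B k) ⊗ₜ[ℂ] (1 : B k) := by
  rw [PiTensorProduct.one_def]
  congr 1

lemma one_mem_pure : (1 : ⨂[ℂ] j, (B j ⊗[ℂ] B j)) ∈ PureT (B := B) :=
  ⟨1, 1, one_eq_tprod⟩

lemma one_mem_goodL (j : J) : (1 : ⨂[ℂ] j, (B j ⊗[ℂ] B j)) ∈ GoodL Pj j :=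
  ⟨1, 1, fun k _ => ⟨Or.inl rfl, Or.inl rfl⟩, one_eq_tprod⟩

lemma one_mem_goodR (j : J) : (1 : ⨂[ℂ] j, (B j ⊗[ℂ] B j)) ∈ GoodR Pj j :=
  ⟨1, 1, fun k _ => ⟨Or.inl rfl, Or.inl rfl⟩, one_eq_tprod⟩

lemma span_pure_mul_mem {x y : ⨂[ℂ] j, (B j ⊗[ℂ] B j)}
    (hx : x ∈ Submodule.span ℂ (PureT (B := B)))
    (hy : y ∈ Submodule.span ℂ (PureT (B := B))) :
    x * y ∈ Submodule.span ℂ (PureT (B := B)) := by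
  induction hx using Submodule.span_induction with
  | mem x hx =>
      induction hy using Submodule.span_induction with
      | mem y hy =>
          obtain ⟨u, v, rfl⟩ := hx
          obtain ⟨u', v', rfl⟩ := hy
          rw [tprod_tmul_mul]
          exact Submodule.subset_span ⟨_, _, rfl⟩
      | zero => rw [mul_zero]; exact Submodule.zero_mem _
      | add y1 y2 _ _ ih1 ih2 => rw [mul_add]; exact Submodule.add_mem _ ih1 ih2
      | smul c y _ ih => rw [my_mul_smul]; exact Submodule.smul_mem _ _ ih
  | zero => rw [zero_mul]; exact Submodule.zero_mem _
  | add x1 x2 _ _ ih1 ih2 => rw [add_mul]; exact Submodule.add_mem _ ih1 ih2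
  | smul c x _ ih => rw [my_smul_mul]; exact Submodule.smul_mem _ _ ih

lemma mul_piece_mem_goodL (j : J) (wu wv : ∀ k, B k)
    (hw : ∀ k, j ≤ k → wu k = Pj k ∧ wv k = Pj k)
    {z : ⨂[ℂ] j, (B j ⊗[ℂ] B j)} (hz : z ∈ Submodule.span ℂ (PureT (B := B))) :
    z * PiTensorProduct.tprod ℂ (fun k => wu k ⊗ₜ[ℂ] wv k)
      ∈ Submodule.span ℂ (GoodL Pj j) := by
  induction hz using Submodule.span_induction with
  | mem z hz =>
      obtain ⟨u, v, rfl⟩ := hz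
      rw [tprod_tmul_mul]
      refine Submodule.subset_span ⟨_, _, fun k hk => ?_, rfl⟩
      exact ⟨Or.inr ⟨u k, by rw [(hw k hk).1]⟩, Or.inr ⟨v k, by rw [(hw k hk).2]⟩⟩
  | zero => rw [zero_mul]; exact Submodule.zero_mem _
  | add x1 x2 _ _ ih1 ih2 => rw [add_mul]; exact Submodule.add_mem _ ih1 ih2
  | smul c x _ ih => rw [my_smul_mul]; exact Submodule.smul_mem _ _ ih

lemma piece_mul_mem_goodR (j : J) (wu wv : ∀ k, B k)
    (hw : ∀ k, j ≤ k → wu k = Pj k ∧ wv k = Pj k)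
    {z : ⨂[ℂ] j, (B j ⊗[ℂ] B j)} (hz : z ∈ Submodule.span ℂ (PureT (B := B))) :
    PiTensorProduct.tprod ℂ (fun k => wu k ⊗ₜ[ℂ] wv k) * z
      ∈ Submodule.span ℂ (GoodR Pj j) := by
  induction hz using Submodule.span_induction with
  | mem z hz =>
      obtain ⟨u, v, rfl⟩ := hz
      rw [tprod_tmul_mul]
      refine Submodule.subset_span ⟨_, _, fun k hk => ?_, rfl⟩
      exact ⟨Or.inr ⟨u k, by rw [(hw k hk).1]⟩, Or.inr ⟨v k, by rw [(hw k hk).2]⟩⟩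
  | zero => rw [mul_zero]; exact Submodule.zero_mem _
  | add x1 x2 _ _ ih1 ih2 => rw [mul_add]; exact Submodule.add_mem _ ih1 ih2
  | smul c x _ ih => rw [my_mul_smul]; exact Submodule.smul_mem _ _ ih


lemma Aelt_eq (j : J) (a b : B j) :
    PiTensorProduct.tprod ℂ (Function.update (fun k => Pj k ⊗ₜ[ℂ] Pj k) j (a ⊗ₜ[ℂ] b))
      = PiTensorProduct.tprod ℂ
          fun k => Function.update Pj j a k ⊗ₜ[ℂ] Function.update Pj j b k := by
  congr 1
  exact update_tmul Pj Pj j a b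

lemma Aelt_eq2 (j : J) (a : B j) :
    PiTensorProduct.tprod ℂ (Function.update
        (fun k => if k < j then (1 : B k) ⊗ₜ[ℂ] (1 : B k) else Pj k ⊗ₜ[ℂ] Pj k) j
        ((1 : B j) ⊗ₜ[ℂ] a))
      = PiTensorProduct.tprod ℂ
          fun k => Function.update (fun k => if k < j then (1 : B k) else Pj k) j 1 k
            ⊗ₜ[ℂ] Function.update (fun k => if k < j then (1 : B k) else Pj k) j a k := by
  congr 1
  rw [show (fun k => if k < j then (1 : B k) ⊗ₜ[ℂ] (1 : B k) else Pj k ⊗ₜ[ℂ] Pj k)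
      = fun k => (if k < j then (1 : B k) else Pj k) ⊗ₜ[ℂ] (if k < j then (1 : B k) else Pj k)
      from funext fun k => by split_ifs <;> rfl]
  exact update_tmul _ _ j 1 a

include hχ1 hψ1 hχsep hψsep hΘ in
lemma core_ext (j : J) (a : B j) :
    ∀ L ∈ Submodule.span ℂ (GoodL Pj j), ∀ R ∈ Submodule.span ℂ (GoodR Pj j),
      Θ (L * ((PiTensorProduct.tprod ℂ fun k =>
            Function.update Pj j a k ⊗ₜ[ℂ] Function.update Pj j 1 k)
          + (PiTensorProduct.tprod ℂ fun k =>
              Function.update (fun k => if k < j then (1 : B k) else Pj k) j 1 k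
                ⊗ₜ[ℂ] Function.update (fun k => if k < j then (1 : B k) else Pj k) j a k)
          - (PiTensorProduct.tprod ℂ fun k =>
              Function.update Pj j 1 k ⊗ₜ[ℂ] Function.update Pj j a k)) * R)
        = (χ j a - ψ j a) * (Θ L * Θ R) + ψ j a * Θ (L * R) := by
  intro L hL
  induction hL using Submodule.span_induction with
  | mem L hL =>
      intro R hR
      induction hR using Submodule.span_induction with
      | mem R hR =>
          obtain ⟨lu, lv, hl, rfl⟩ := hL
          obtain ⟨ru, rv, hr, rfl⟩ := hR
          exact atomic Pj χ ψ hχ1 hψ1 hχsep hψsep Θ hΘ j a lu lv ru rv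
            (fun k hk => (hl k hk).1) (fun k hk => (hl k hk).2)
            (fun k hk => (hr k hk).1) (fun k hk => (hr k hk).2)
      | zero => simp
      | add R1 R2 _ _ ih1 ih2 =>
          simp only [mul_add, map_add]
          rw [ih1, ih2]; ring
      | smul c R _ ih =>
          simp only [my_mul_smul, map_smul, smul_eq_mul]
          rw [ih]; ring
  | zero => intro R hR; simp
  | add L1 L2 _ _ ih1 ih2 =>
      intro R hR
      simp only [add_mul, map_add]
      rw [ih1 R hR, ih2 R hR]; ring
  | smul c L _ ih =>
      intro R hR
      simp only [my_smul_mul, map_smul, smul_eq_mul]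
      rw [ih R hR]; ring

include hχ1 hψ1 hχP hψP hΘ in
lemma Theta_Aelt (j : J) (a : B j) :
    Θ (PiTensorProduct.tprod ℂ
          (Function.update (fun k => Pj k ⊗ₜ[ℂ] Pj k) j (a ⊗ₜ[ℂ] 1))
        + PiTensorProduct.tprod ℂ
            (Function.update (fun k => if k < j then (1 : B k) ⊗ₜ[ℂ] (1 : B k)
              else Pj k ⊗ₜ[ℂ] Pj k) j ((1 : B j) ⊗ₜ[ℂ] a))
        - PiTensorProduct.tprod ℂ
            (Function.update (fun k => Pj k ⊗ₜ[ℂ] Pj k) j ((1 : B j) ⊗ₜ[ℂ] a)))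
      = χ j a := by
  rw [Aelt_eq, Aelt_eq2, Aelt_eq, map_sub, map_add, hΘ, hΘ, hΘ]
  have h1 : (∏ k, χ k (Function.update Pj j a k) * ψ k (Function.update Pj j 1 k)) = χ j a := by
    rw [Fintype.prod_eq_single j (fun k hk => by
      simp [Function.update_of_ne hk, hχP, hψP])]
    simp [hψ1]
  have h2 : (∏ k, χ k (Function.update (fun k => if k < j then (1 : B k) else Pj k) j 1 k) *
      ψ k (Function.update (fun k => if k < j then (1 : B k) else Pj k) j a k)) = ψ j a := by
    rw [Fintype.prod_eq_single j (fun k hk => by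
      simp only [Function.update_of_ne hk]
      split_ifs
      · simp [hχ1, hψ1]
      · simp [hχP, hψP])]
    simp [hχ1]
  have h3 : (∏ k, χ k (Function.update Pj j 1 k) * ψ k (Function.update Pj j a k)) = ψ j a := by
    rw [Fintype.prod_eq_single j (fun k hk => by
      simp [Function.update_of_ne hk, hχP, hψP])]
    simp [hχ1]
  rw [h1, h2, h3]; ring

lemma S_mem_spanPure (j : J) (a : B j) :
    (PiTensorProduct.tprod ℂ
          (Function.update (fun k => Pj k ⊗ₜ[ℂ] Pj k) j (a ⊗ₜ[ℂ] 1))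
        + PiTensorProduct.tprod ℂ
            (Function.update (fun k => if k < j then (1 : B k) ⊗ₜ[ℂ] (1 : B k)
              else Pj k ⊗ₜ[ℂ] Pj k) j ((1 : B j) ⊗ₜ[ℂ] a))
        - PiTensorProduct.tprod ℂ
            (Function.update (fun k => Pj k ⊗ₜ[ℂ] Pj k) j ((1 : B j) ⊗ₜ[ℂ] a)))
      ∈ Submodule.span ℂ (PureT (B := B)) := by
  rw [Aelt_eq, Aelt_eq2, Aelt_eq]
  exact Submodule.sub_mem _ (Submodule.add_mem _
    (Submodule.subset_span ⟨_, _, rfl⟩) (Submodule.subset_span ⟨_, _, rfl⟩))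
    (Submodule.subset_span ⟨_, _, rfl⟩)

lemma mul_S_mem_goodL {j j' : J} (hj : j' < j) (a : B j')
    {z : ⨂[ℂ] j, (B j ⊗[ℂ] B j)} (hz : z ∈ Submodule.span ℂ (PureT (B := B))) :
    z * (PiTensorProduct.tprod ℂ
          (Function.update (fun k => Pj k ⊗ₜ[ℂ] Pj k) j' (a ⊗ₜ[ℂ] 1))
        + PiTensorProduct.tprod ℂ
            (Function.update (fun k => if k < j' then (1 : B k) ⊗ₜ[ℂ] (1 : B k)
              else Pj k ⊗ₜ[ℂ] Pj k) j' ((1 : B j') ⊗ₜ[ℂ] a))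
        - PiTensorProduct.tprod ℂ
            (Function.update (fun k => Pj k ⊗ₜ[ℂ] Pj k) j' ((1 : B j') ⊗ₜ[ℂ] a)))
      ∈ Submodule.span ℂ (GoodL Pj j) := by
  have hne : ∀ k : J, j ≤ k → k ≠ j' := fun k hk => (hj.trans_le hk).ne'
  rw [Aelt_eq, Aelt_eq2, Aelt_eq, mul_sub, mul_add]
  refine Submodule.sub_mem _ (Submodule.add_mem _ ?_ ?_) ?_
  · exact mul_piece_mem_goodL Pj j _ _ (fun k hk => by
      simp [Function.update_of_ne (hne k hk)]) hz
  · exact mul_piece_mem_goodL Pj j _ _ (fun k hk => by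
      simp [Function.update_of_ne (hne k hk), if_neg (not_lt.2 (hj.le.trans hk))]) hz
  · exact mul_piece_mem_goodL Pj j _ _ (fun k hk => by
      simp [Function.update_of_ne (hne k hk)]) hz

lemma S_mul_mem_goodR {j j' : J} (hj : j' < j) (a : B j')
    {z : ⨂[ℂ] j, (B j ⊗[ℂ] B j)} (hz : z ∈ Submodule.span ℂ (PureT (B := B))) :
    (PiTensorProduct.tprod ℂ
          (Function.update (fun k => Pj k ⊗ₜ[ℂ] Pj k) j' (a ⊗ₜ[ℂ] 1))
        + PiTensorProduct.tprod ℂ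
            (Function.update (fun k => if k < j' then (1 : B k) ⊗ₜ[ℂ] (1 : B k)
              else Pj k ⊗ₜ[ℂ] Pj k) j' ((1 : B j') ⊗ₜ[ℂ] a))
        - PiTensorProduct.tprod ℂ
            (Function.update (fun k => Pj k ⊗ₜ[ℂ] Pj k) j' ((1 : B j') ⊗ₜ[ℂ] a))) * z
      ∈ Submodule.span ℂ (GoodR Pj j) := by
  have hne : ∀ k : J, j ≤ k → k ≠ j' := fun k hk => (hj.trans_le hk).ne'
  rw [Aelt_eq, Aelt_eq2, Aelt_eq, sub_mul, add_mul]
  refine Submodule.sub_mem _ (Submodule.add_mem _ ?_ ?_) ?_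
  · exact piece_mul_mem_goodR Pj j _ _ (fun k hk => by
      simp [Function.update_of_ne (hne k hk)]) hz
  · exact piece_mul_mem_goodR Pj j _ _ (fun k hk => by
      simp [Function.update_of_ne (hne k hk), if_neg (not_lt.2 (hj.le.trans hk))]) hz
  · exact piece_mul_mem_goodR Pj j _ _ (fun k hk => by
      simp [Function.update_of_ne (hne k hk)]) hz

end Real

/-- the general tensor product realization of c-monotone
independence for a finite linearly ordered family (Theorem 3.1 of the paper). -/
theorem cmonotone_independence_general_tensor_realization
    {J : Type*} [Fintype J] [LinearOrder J]
    (B : J → Type*) [∀ j, Ring (B j)] [∀ j, Algebra ℂ (B j)]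
    (φj ψj : ∀ j, B j →ₗ[ℂ] ℂ)
    (hφj1 : ∀ j, φj j 1 = 1) (hψj1 : ∀ j, ψj j 1 = 1)
    (Pj : ∀ j, B j)
    (hPidem : ∀ j, Pj j * Pj j = Pj j)
    (hPφ1 : ∀ j, φj j (Pj j) = 1)
    (hPφsep : ∀ j, ∀ x y : B j, φj j (x * Pj j * y) = φj j x * φj j y)
    (hPψ1 : ∀ j, ψj j (Pj j) = 1)
    (hPψsep : ∀ j, ∀ x y : B j, ψj j (x * Pj j * y) = ψj j x * ψj j y)
    (𝒜 : ∀ j, NonUnitalSubalgebra ℂ (B j))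
    (Φ Ψ : (⨂[ℂ] j, (B j ⊗[ℂ] B j)) →ₗ[ℂ] ℂ)
    (hΦ : ∀ u v : (j : J) → B j,
      Φ (⨂ₜ[ℂ] j, (u j ⊗ₜ[ℂ] v j)) = ∏ j, φj j (u j) * ψj j (v j))
    (hΨ : ∀ u v : (j : J) → B j,
      Ψ (⨂ₜ[ℂ] j, (u j ⊗ₜ[ℂ] v j)) = ∏ j, ψj j (u j) * ψj j (v j)) :
    CMonotoneIndependentFamily (fun z => Φ z) (fun z => Ψ z)
      (fun j => {z : ⨂[ℂ] k, (B k ⊗[ℂ] B k) | ∃ a ∈ 𝒜 j,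
        z = PiTensorProduct.tprod ℂ
              (Function.update (fun k => Pj k ⊗ₜ[ℂ] Pj k) j (a ⊗ₜ[ℂ] 1))
          + PiTensorProduct.tprod ℂ
              (Function.update
                (fun k => if k < j then (1 : B k) ⊗ₜ[ℂ] (1 : B k)
                  else Pj k ⊗ₜ[ℂ] Pj k) j ((1 : B j) ⊗ₜ[ℂ] a))
          - PiTensorProduct.tprod ℂ
              (Function.update (fun k => Pj k ⊗ₜ[ℂ] Pj k) j ((1 : B j) ⊗ₜ[ℂ] a))}) := by
  intro n hn jdx x hx i hpeak
  obtain ⟨a, ha, hxi⟩ := hx i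
  have hlen : (List.ofFn x).length = n := List.length_ofFn (f := x)
  have hilt : (i : ℕ) < n := i.isLt
  -- every letter lies in the span of pure tensors
  have hxpure : ∀ k, x k ∈ Submodule.span ℂ (PureT (B := B)) := fun k => by
    obtain ⟨a', _, hxe⟩ := hx k
    rw [hxe]; exact S_mem_spanPure Pj _ a'
  have hlistpure : ∀ L' : List (⨂[ℂ] k, (B k ⊗[ℂ] B k)), L' ⊆ List.ofFn x →
      L'.prod ∈ Submodule.span ℂ (PureT (B := B)) := by
    intro L' hsub
    have := Subalgebra.list_prod_mem
      (S := Submodule.toSubalgebra (Submodule.span ℂ (PureT (B := B)))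
        (Submodule.subset_span (one_mem_pure (B := B)))
        (fun _ _ hx hy => span_pure_mul_mem hx hy))
      (L := L') (fun y hy => by
        obtain ⟨k, rfl⟩ := List.mem_ofFn.1 (hsub hy)
        exact hxpure k)
    exact this
  -- the word decomposition
  have hsplit : (List.ofFn x).prod =
      ((List.ofFn x).take i).prod * x i * ((List.ofFn x).drop ((i : ℕ) + 1)).prod := by
    conv_lhs => rw [← List.take_append_drop (i : ℕ) (List.ofFn x)]
    rw [List.prod_append, List.drop_eq_getElem_cons (by rw [hlen]; exact i.isLt),
      List.prod_cons, List.getElem_ofFn, ← mul_assoc]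
  have herase : ((List.ofFn x).eraseIdx i).prod =
      ((List.ofFn x).take i).prod * ((List.ofFn x).drop ((i : ℕ) + 1)).prod := by
    rw [List.eraseIdx_eq_take_drop_succ, List.prod_append]
  -- membership of the left part
  have hLmem : ((List.ofFn x).take i).prod ∈ Submodule.span ℂ (GoodL Pj (jdx i)) := by
    rcases Nat.eq_zero_or_pos (i : ℕ) with h0 | hpos
    · rw [h0, List.take_zero, List.prod_nil]
      exact Submodule.subset_span (one_mem_goodL Pj _)
    · have him : (i : ℕ) = ((i : ℕ) - 1) + 1 := (Nat.succ_pred_eq_of_pos hpos).symm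
      have hmlt : (i : ℕ) - 1 < n := by omega
      rw [him, List.prod_take_succ _ _ (by rw [hlen]; omega), List.getElem_ofFn]
      have hjm : jdx ⟨(i : ℕ) - 1, hmlt⟩ < jdx i :=
        hpeak _ (Or.inl (by simp only [Fin.val_mk]; omega))
      obtain ⟨a', _, hxe⟩ := hx ⟨(i : ℕ) - 1, hmlt⟩
      rw [hxe]
      exact mul_S_mem_goodL Pj hjm a'
        (hlistpure _ (List.take_subset _ _))
  -- membership of the right part
  have hRmem : ((List.ofFn x).drop ((i : ℕ) + 1)).prod
      ∈ Submodule.span ℂ (GoodR Pj (jdx i)) := by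
    rcases le_or_gt n ((i : ℕ) + 1) with hend | hlt
    · rw [List.drop_eq_nil_of_le (by rw [hlen]; exact hend), List.prod_nil]
      exact Submodule.subset_span (one_mem_goodR Pj _)
    · rw [List.drop_eq_getElem_cons (by rw [hlen]; omega), List.prod_cons, List.getElem_ofFn]
      have hjm : jdx ⟨(i : ℕ) + 1, by omega⟩ < jdx i := hpeak _ (Or.inr (by simp))
      obtain ⟨a', _, hxe⟩ := hx ⟨(i : ℕ) + 1, by omega⟩
      rw [hxe]
      exact S_mul_mem_goodR Pj hjm a'
        (hlistpure _ (List.drop_subset _ _))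
  -- values on the middle letter
  have hΦx : Φ (x i) = φj (jdx i) a := by
    rw [hxi]
    exact Theta_Aelt Pj φj ψj hφj1 hψj1 hPφ1 hPψ1 Φ hΦ (jdx i) a
  have hΨx : Ψ (x i) = ψj (jdx i) a := by
    rw [hxi]
    exact Theta_Aelt Pj ψj ψj hψj1 hψj1 hPψ1 hPψ1 Ψ hΨ (jdx i) a
  -- rewrite the middle letter in pointwise form
  rw [hxi, Aelt_eq, Aelt_eq2, Aelt_eq] at hsplit
  have keyΦ := core_ext Pj φj ψj hφj1 hψj1 hPφsep hPψsep Φ hΦ (jdx i) a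
    _ hLmem _ hRmem
  have keyΨ := core_ext Pj ψj ψj hψj1 hψj1 hPψsep hPψsep Ψ hΨ (jdx i) a
    _ hLmem _ hRmem
  constructor
  · show Φ _ = (Φ (x i) - Ψ (x i)) * Φ _ * Φ _ + Ψ (x i) * Φ _
    rw [hΦx, hΨx, hsplit, herase, keyΦ]
    ring
  · show Ψ _ = Ψ (x i) * Ψ _
    rw [hΨx, hsplit, herase, keyΨ]
    ring
end

section
/- Fix finite types V₁, V₂, matrices a₁ : Matrix V₁ V₁ ℂ, a₂ : Matrix V₂ V₂ ℂ, and vertices e₁, f₁ ∈ V₁ and e₂, f₂ ∈ V₂. On the index type (V₁ × V₂ × V₂) ⊕ (V₁ × V₂) define the block-diagonal matrices S₁ = (a₁ ⊗ E_{e₂} ⊗ E_{f₂}) ⊕ (a₁ ⊗ E_{f₂}) and S₂ = (E_{e₁} ⊗ a₂ ⊗ 1 + E_{e₁}^⊥ ⊗ 1 ⊗ a₂) ⊕ (1 ⊗ a₂) (each block acting on its summand, zero between the summands), and define φ(X) = X (inl (e₁,e₂,f₂)) (inl (e₁,e₂,f₂)) and ψ(X) = X (inr (f₁,f₂)) (inr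 (f₁,f₂)). Then the ordered pair of non-unital subalgebras of the matrix algebra generated by S₁ and by S₂, respectively, is c-monotone independent with respect to (φ, ψ). -/
open Matrix
open scoped Kronecker

set_option linter.unusedSectionVars false
set_option linter.unnecessarySeqFocus false

section CCombAux

namespace CComb

variable {V₁ V₂ : Type*} [Fintype V₁] [DecidableEq V₁] [Fintype V₂] [DecidableEq V₂]

noncomputable def M1 (e₂ f₂ : V₂) (b : Matrix V₁ V₁ ℂ) :
    Matrix ((V₁ × V₂ × V₂) ⊕ (V₁ × V₂)) ((V₁ × V₂ × V₂) ⊕ (V₁ × V₂)) ℂ :=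
  Matrix.fromBlocks (b ⊗ₖ (single e₂ e₂ (1 : ℂ) ⊗ₖ single f₂ f₂ (1 : ℂ))) 0 0
    (b ⊗ₖ single f₂ f₂ (1 : ℂ))

noncomputable def M2 (e₁ : V₁) (c : Matrix V₂ V₂ ℂ) :
    Matrix ((V₁ × V₂ × V₂) ⊕ (V₁ × V₂)) ((V₁ × V₂ × V₂) ⊕ (V₁ × V₂)) ℂ :=
  Matrix.fromBlocks
    (single e₁ e₁ (1 : ℂ) ⊗ₖ (c ⊗ₖ (1 : Matrix V₂ V₂ ℂ))
      + (1 - single e₁ e₁ (1 : ℂ)) ⊗ₖ ((1 : Matrix V₂ V₂ ℂ) ⊗ₖ c)) 0 0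
    ((1 : Matrix V₁ V₁ ℂ) ⊗ₖ c)

noncomputable def Pm (e₁ : V₁) (e₂ f₂ : V₂) :
    Matrix ((V₁ × V₂ × V₂) ⊕ (V₁ × V₂)) ((V₁ × V₂ × V₂) ⊕ (V₁ × V₂)) ℂ :=
  Matrix.fromBlocks
    (single e₁ e₁ (1 : ℂ) ⊗ₖ (single e₂ e₂ (1 : ℂ) ⊗ₖ single f₂ f₂ (1 : ℂ)))
    0 0 0

noncomputable def Qm (f₁ : V₁) (f₂ : V₂) :
    Matrix ((V₁ × V₂ × V₂) ⊕ (V₁ × V₂)) ((V₁ × V₂ × V₂) ⊕ (V₁ × V₂)) ℂ :=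
  Matrix.fromBlocks 0 0 0 (single f₁ f₁ (1 : ℂ) ⊗ₖ single f₂ f₂ (1 : ℂ))

lemma sandwich {n : Type*} [Fintype n] [DecidableEq n] (i : n) (c : Matrix n n ℂ) :
    single i i (1 : ℂ) * c * single i i 1 = c i i • single i i 1 := by
  ext u v
  rcases eq_or_ne v i with rfl | hv
  · rcases eq_or_ne u v with rfl | hu
    · simp
    · rw [Matrix.smul_apply, single_apply_of_ne _ _ _ _ _ (by tauto), smul_zero,
        mul_assoc, single_mul_apply_of_ne _ _ _ _ _ hu]
  · rw [mul_single_apply_of_ne _ _ _ _ _ hv,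
      Matrix.smul_apply, single_apply_of_ne _ _ _ _ _ (by tauto), smul_zero]

lemma sub_kron {l m n p : Type*} (A B : Matrix l m ℂ) (C : Matrix n p ℂ) :
    (A - B) ⊗ₖ C = A ⊗ₖ C - B ⊗ₖ C := by
  ext i j
  cases i; cases j
  simp [kroneckerMap_apply, sub_mul]

variable (e₁ f₁ : V₁) (e₂ f₂ : V₂)

lemma M1_mul_M1 (b b' : Matrix V₁ V₁ ℂ) :
    M1 e₂ f₂ b * M1 e₂ f₂ b' = M1 e₂ f₂ (b * b') := by
  simp only [M1, fromBlocks_multiply, Matrix.mul_zero, Matrix.zero_mul, add_zero, zero_add,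
    ← mul_kronecker_mul, single_mul_single_same, one_mul]

lemma M2_mul_M2 (c c' : Matrix V₂ V₂ ℂ) :
    M2 e₁ c * M2 e₁ c' = M2 e₁ (c * c') := by
  have hEE : single e₁ e₁ (1 : ℂ) * single e₁ e₁ (1 : ℂ)
      = single e₁ e₁ (1 : ℂ) := by
    rw [single_mul_single_same, one_mul]
  have hEF : single e₁ e₁ (1 : ℂ) * (1 - single e₁ e₁ (1 : ℂ)) = 0 := by
    rw [mul_sub, mul_one, hEE, sub_self]
  have hFE : (1 - single e₁ e₁ (1 : ℂ)) * single e₁ e₁ (1 : ℂ) = 0 := by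
    rw [sub_mul, one_mul, hEE, sub_self]
  have hFF : (1 - single e₁ e₁ (1 : ℂ)) * (1 - single e₁ e₁ (1 : ℂ))
      = 1 - single e₁ e₁ (1 : ℂ) := by
    rw [mul_sub, mul_one, hFE, sub_zero]
  simp only [M2, fromBlocks_multiply, Matrix.mul_zero, Matrix.zero_mul, add_zero, zero_add,
    add_mul, mul_add, ← mul_kronecker_mul, hEE, hEF, hFE, hFF, zero_kronecker, mul_one, one_mul,
    add_zero, zero_add]

lemma M1_add (b b' : Matrix V₁ V₁ ℂ) : M1 e₂ f₂ b + M1 e₂ f₂ b' = M1 e₂ f₂ (b + b') := by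
  simp only [M1, fromBlocks_add, add_zero, ← add_kronecker]

lemma M1_smul (r : ℂ) (b : Matrix V₁ V₁ ℂ) : r • M1 e₂ f₂ b = M1 e₂ f₂ (r • b) := by
  simp only [M1, fromBlocks_smul, smul_zero, ← smul_kronecker]

lemma M1_zero : M1 e₂ f₂ (0 : Matrix V₁ V₁ ℂ) = 0 := by
  simp only [M1, zero_kronecker, fromBlocks_zero]

lemma M2_add (c c' : Matrix V₂ V₂ ℂ) : M2 e₁ c + M2 e₁ c' = M2 e₁ (c + c') := by
  simp only [M2, fromBlocks_add, add_zero, kronecker_add, add_kronecker]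
  abel

lemma M2_smul (r : ℂ) (c : Matrix V₂ V₂ ℂ) : r • M2 e₁ c = M2 e₁ (r • c) := by
  simp only [M2, fromBlocks_smul, smul_zero, smul_add, kronecker_smul, smul_kronecker]

lemma M2_zero : M2 e₁ (0 : Matrix V₂ V₂ ℂ) = 0 := by
  simp only [M2, zero_kronecker, kronecker_zero, add_zero, fromBlocks_zero]

lemma P1 (c : Matrix V₂ V₂ ℂ) (b : Matrix V₁ V₁ ℂ) :
    Pm e₁ e₂ f₂ * M2 e₁ c * M1 e₂ f₂ b = c e₂ e₂ • (Pm e₁ e₂ f₂ * M1 e₂ f₂ b) := by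
  have hEE : single e₁ e₁ (1 : ℂ) * single e₁ e₁ (1 : ℂ)
      = single e₁ e₁ (1 : ℂ) := by rw [single_mul_single_same, one_mul]
  have hEF : single e₁ e₁ (1 : ℂ) * (1 - single e₁ e₁ (1 : ℂ)) = 0 := by
    rw [mul_sub, mul_one, hEE, sub_self]
  simp only [Pm, M2, M1, fromBlocks_multiply, Matrix.mul_zero, Matrix.zero_mul, add_zero,
    zero_add, mul_add, add_mul, ← mul_kronecker_mul, hEE, hEF, zero_kronecker, kronecker_zero,
    mul_one, one_mul, single_mul_single_same, sandwich, smul_kronecker, kronecker_smul,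
    fromBlocks_smul, smul_zero, single_apply_same, one_smul]

lemma P2 (b : Matrix V₁ V₁ ℂ) (c : Matrix V₂ V₂ ℂ) :
    M1 e₂ f₂ b * M2 e₁ c * Pm e₁ e₂ f₂ = c e₂ e₂ • (M1 e₂ f₂ b * Pm e₁ e₂ f₂) := by
  have hEE : single e₁ e₁ (1 : ℂ) * single e₁ e₁ (1 : ℂ)
      = single e₁ e₁ (1 : ℂ) := by rw [single_mul_single_same, one_mul]
  have hFE : (1 - single e₁ e₁ (1 : ℂ)) * single e₁ e₁ (1 : ℂ) = 0 := by
    rw [sub_mul, one_mul, hEE, sub_self]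
  have h1 : ∀ x : Matrix V₁ V₁ ℂ, x * single e₁ e₁ (1 : ℂ) * single e₁ e₁ (1 : ℂ)
      = x * single e₁ e₁ (1 : ℂ) := fun x => by rw [mul_assoc, hEE]
  have h2 : ∀ x : Matrix V₁ V₁ ℂ,
      x * (1 - single e₁ e₁ (1 : ℂ)) * single e₁ e₁ (1 : ℂ) = 0 := fun x => by
    rw [mul_assoc, hFE, mul_zero]
  simp only [Pm, M2, M1, fromBlocks_multiply, Matrix.mul_zero, Matrix.zero_mul, add_zero,
    zero_add, mul_add, add_mul, ← mul_kronecker_mul, hEE, hFE, h1, h2, zero_kronecker,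
    kronecker_zero, mul_one, one_mul, single_mul_single_same, sandwich, smul_kronecker,
    kronecker_smul, fromBlocks_smul, smul_zero, single_apply_same, one_smul]

lemma Q1 (c : Matrix V₂ V₂ ℂ) (b : Matrix V₁ V₁ ℂ) :
    Qm f₁ f₂ * M2 e₁ c * M1 e₂ f₂ b = c f₂ f₂ • (Qm f₁ f₂ * M1 e₂ f₂ b) := by
  simp only [Qm, M2, M1, fromBlocks_multiply, Matrix.mul_zero, Matrix.zero_mul, add_zero,
    zero_add, mul_add, add_mul, ← mul_kronecker_mul, zero_kronecker, kronecker_zero,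
    mul_one, one_mul, single_mul_single_same, sandwich, smul_kronecker, kronecker_smul,
    fromBlocks_smul, smul_zero, single_apply_same, one_smul]

lemma Q2 (b : Matrix V₁ V₁ ℂ) (c : Matrix V₂ V₂ ℂ) :
    M1 e₂ f₂ b * M2 e₁ c * Qm f₁ f₂ = c f₂ f₂ • (M1 e₂ f₂ b * Qm f₁ f₂) := by
  simp only [Qm, M2, M1, fromBlocks_multiply, Matrix.mul_zero, Matrix.zero_mul, add_zero,
    zero_add, mul_add, add_mul, ← mul_kronecker_mul, zero_kronecker, kronecker_zero,
    mul_one, one_mul, single_mul_single_same, sandwich, smul_kronecker, kronecker_smul,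
    fromBlocks_smul, smul_zero, single_apply_same, one_smul]

lemma central (b b' : Matrix V₁ V₁ ℂ) (c : Matrix V₂ V₂ ℂ) :
    M1 e₂ f₂ b * M2 e₁ c * M1 e₂ f₂ b'
      = c f₂ f₂ • (M1 e₂ f₂ b * M1 e₂ f₂ b')
        + (c e₂ e₂ - c f₂ f₂) • (M1 e₂ f₂ b * Pm e₁ e₂ f₂ * M1 e₂ f₂ b') := by
  have hEE : single e₁ e₁ (1 : ℂ) * single e₁ e₁ (1 : ℂ)
      = single e₁ e₁ (1 : ℂ) := by rw [single_mul_single_same, one_mul]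
  simp only [Pm, M2, M1, fromBlocks_multiply, Matrix.mul_zero, Matrix.zero_mul, add_zero,
    zero_add, mul_add, add_mul, ← mul_kronecker_mul, hEE, zero_kronecker, kronecker_zero,
    mul_one, one_mul, single_mul_single_same, sandwich, smul_kronecker, kronecker_smul,
    fromBlocks_smul, smul_zero, single_apply_same, one_smul, mul_sub, sub_mul,
    sub_kron, fromBlocks_add]
  rw [sub_smul]
  abel

lemma Pm_eq : Pm e₁ e₂ f₂
    = single (Sum.inl (e₁, e₂, f₂)) (Sum.inl (e₁, e₂, f₂)) (1 : ℂ) := by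
  ext u v
  rcases u with ⟨u₁, u₂, u₃⟩ | ⟨u₁, u₂⟩ <;> rcases v with ⟨v₁, v₂, v₃⟩ | ⟨v₁, v₂⟩ <;>
    simp [Pm, single, Prod.ext_iff, ite_and, mul_ite, ite_mul] <;>
    split_ifs <;> simp_all

lemma Qm_eq : Qm f₁ f₂
    = single (Sum.inr (f₁, f₂)) (Sum.inr (f₁, f₂)) (1 : ℂ) := by
  ext u v
  rcases u with ⟨u₁, u₂, u₃⟩ | ⟨u₁, u₂⟩ <;> rcases v with ⟨v₁, v₂, v₃⟩ | ⟨v₁, v₂⟩ <;>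
    simp [Qm, single, Prod.ext_iff, ite_and, mul_ite, ite_mul] <;>
    split_ifs <;> simp_all

lemma M2_pp (c : Matrix V₂ V₂ ℂ) :
    M2 e₁ c (Sum.inl (e₁, e₂, f₂)) (Sum.inl (e₁, e₂, f₂)) = c e₂ e₂ := by
  simp [M2, Matrix.sub_apply, one_apply_eq, single_apply_same]

lemma M2_qq (c : Matrix V₂ V₂ ℂ) :
    M2 e₁ c (Sum.inr (f₁, f₂)) (Sum.inr (f₁, f₂)) = c f₂ f₂ := by
  simp [M2, one_apply_eq]

lemma mul_std_mul {n : Type*} [Fintype n] [DecidableEq n] (p : n) (X Y : Matrix n n ℂ)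
    (r s : n) : (X * single p p (1 : ℂ) * Y) r s = X r p * Y p s := by
  rw [mul_assoc, mul_apply, Finset.sum_eq_single p]
  · rw [single_mul_apply_same, one_mul]
  · intro u _ hu
    rw [single_mul_apply_of_ne _ _ _ _ _ hu, mul_zero]
  · intro h; exact absurd (Finset.mem_univ p) h

lemma std_mul_apply {n : Type*} [Fintype n] [DecidableEq n] (p : n) (X : Matrix n n ℂ)
    (s : n) : (single p p (1 : ℂ) * X) p s = X p s := by
  rw [single_mul_apply_same, one_mul]

lemma mul_std_apply {n : Type*} [Fintype n] [DecidableEq n] (p : n) (X : Matrix n n ℂ)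
    (r : n) : (X * single p p (1 : ℂ)) r p = X r p := by
  rw [mul_single_apply_same, mul_one]

def BD (X : Matrix ((V₁ × V₂ × V₂) ⊕ (V₁ × V₂)) ((V₁ × V₂ × V₂) ⊕ (V₁ × V₂)) ℂ) : Prop :=
  ∀ u v, X (Sum.inr u) (Sum.inl v) = 0

lemma BD_one : BD (1 : Matrix ((V₁ × V₂ × V₂) ⊕ (V₁ × V₂)) ((V₁ × V₂ × V₂) ⊕ (V₁ × V₂)) ℂ) := by
  intro u v
  exact one_apply_ne (by simp)

lemma BD_mul {X Y : Matrix ((V₁ × V₂ × V₂) ⊕ (V₁ × V₂)) ((V₁ × V₂ × V₂) ⊕ (V₁ × V₂)) ℂ}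
    (hX : BD X) (hY : BD Y) : BD (X * Y) := by
  intro u v
  rw [mul_apply, Fintype.sum_sum_type]
  simp [hX u, fun a => hY a v]

lemma BD_M1 (b : Matrix V₁ V₁ ℂ) : BD (M1 e₂ f₂ b) := by
  intro u v; simp [M1]

lemma BD_M2 (c : Matrix V₂ V₂ ℂ) : BD (M2 e₁ c) := by
  intro u v; simp [M2]

lemma BD_prod : ∀ L : List (Matrix ((V₁ × V₂ × V₂) ⊕ (V₁ × V₂)) ((V₁ × V₂ × V₂) ⊕ (V₁ × V₂)) ℂ),
    (∀ m ∈ L, BD m) → BD L.prod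
  | [], _ => by simpa using BD_one
  | (a :: L), h => by
    rw [List.prod_cons]
    exact BD_mul (h a (List.mem_cons_self (l := _)))
      (BD_prod L fun m hm => h m (List.mem_cons_of_mem _ hm))

lemma mem1 (a₁ : Matrix V₁ V₁ ℂ)
    {X : Matrix ((V₁ × V₂ × V₂) ⊕ (V₁ × V₂)) ((V₁ × V₂ × V₂) ⊕ (V₁ × V₂)) ℂ}
    (hX : X ∈ NonUnitalAlgebra.adjoin ℂ ({M1 e₂ f₂ a₁} : Set _)) :
    ∃ b, X = M1 e₂ f₂ b := by
  induction hX using NonUnitalAlgebra.adjoin_induction with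
  | mem y hy => exact ⟨a₁, by simpa using hy⟩
  | add u v hu hv ihu ihv =>
    obtain ⟨b, rfl⟩ := ihu; obtain ⟨b', rfl⟩ := ihv
    exact ⟨b + b', M1_add e₂ f₂ b b'⟩
  | zero => exact ⟨0, (M1_zero e₂ f₂).symm⟩
  | mul u v hu hv ihu ihv =>
    obtain ⟨b, rfl⟩ := ihu; obtain ⟨b', rfl⟩ := ihv
    exact ⟨b * b', M1_mul_M1 e₂ f₂ b b'⟩
  | smul r u hu ihu =>
    obtain ⟨b, rfl⟩ := ihu
    exact ⟨r • b, M1_smul e₂ f₂ r b⟩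

lemma mem2 (a₂ : Matrix V₂ V₂ ℂ)
    {X : Matrix ((V₁ × V₂ × V₂) ⊕ (V₁ × V₂)) ((V₁ × V₂ × V₂) ⊕ (V₁ × V₂)) ℂ}
    (hX : X ∈ NonUnitalAlgebra.adjoin ℂ ({M2 e₁ a₂} : Set _)) :
    ∃ c, X = M2 e₁ c := by
  induction hX using NonUnitalAlgebra.adjoin_induction with
  | mem y hy => exact ⟨a₂, by simpa using hy⟩
  | add u v hu hv ihu ihv =>
    obtain ⟨c, rfl⟩ := ihu; obtain ⟨c', rfl⟩ := ihv
    exact ⟨c + c', M2_add e₁ c c'⟩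
  | zero => exact ⟨0, (M2_zero e₁).symm⟩
  | mul u v hu hv ihu ihv =>
    obtain ⟨c, rfl⟩ := ihu; obtain ⟨c', rfl⟩ := ihv
    exact ⟨c * c', M2_mul_M2 e₁ c c'⟩
  | smul r u hu ihu =>
    obtain ⟨c, rfl⟩ := ihu
    exact ⟨r • c, M2_smul e₁ r c⟩

lemma phi_left (c : Matrix V₂ V₂ ℂ) (b : Matrix V₁ V₁ ℂ)
    (W : Matrix ((V₁ × V₂ × V₂) ⊕ (V₁ × V₂)) ((V₁ × V₂ × V₂) ⊕ (V₁ × V₂)) ℂ) :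
    (M2 e₁ c * (M1 e₂ f₂ b * W)) (Sum.inl (e₁, e₂, f₂)) (Sum.inl (e₁, e₂, f₂))
      = c e₂ e₂ * (M1 e₂ f₂ b * W) (Sum.inl (e₁, e₂, f₂)) (Sum.inl (e₁, e₂, f₂)) := by
  have h1 : Pm e₁ e₂ f₂ * (M2 e₁ c * (M1 e₂ f₂ b * W))
      = c e₂ e₂ • (Pm e₁ e₂ f₂ * (M1 e₂ f₂ b * W)) := by
    calc Pm e₁ e₂ f₂ * (M2 e₁ c * (M1 e₂ f₂ b * W))
        = (Pm e₁ e₂ f₂ * M2 e₁ c * M1 e₂ f₂ b) * W := by simp only [mul_assoc]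
      _ = (c e₂ e₂ • (Pm e₁ e₂ f₂ * M1 e₂ f₂ b)) * W := by rw [P1]
      _ = c e₂ e₂ • (Pm e₁ e₂ f₂ * (M1 e₂ f₂ b * W)) := by rw [smul_mul_assoc, mul_assoc]
  have h2 := congrArg
    (fun Z => Z (Sum.inl (e₁, e₂, f₂) : (V₁ × V₂ × V₂) ⊕ (V₁ × V₂)) (Sum.inl (e₁, e₂, f₂))) h1
  simpa [Pm_eq, std_mul_apply, Matrix.smul_apply] using h2

lemma psi_left (c : Matrix V₂ V₂ ℂ) (b : Matrix V₁ V₁ ℂ)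
    (W : Matrix ((V₁ × V₂ × V₂) ⊕ (V₁ × V₂)) ((V₁ × V₂ × V₂) ⊕ (V₁ × V₂)) ℂ) :
    (M2 e₁ c * (M1 e₂ f₂ b * W)) (Sum.inr (f₁, f₂)) (Sum.inr (f₁, f₂))
      = c f₂ f₂ * (M1 e₂ f₂ b * W) (Sum.inr (f₁, f₂)) (Sum.inr (f₁, f₂)) := by
  have h1 : Qm f₁ f₂ * (M2 e₁ c * (M1 e₂ f₂ b * W))
      = c f₂ f₂ • (Qm f₁ f₂ * (M1 e₂ f₂ b * W)) := by
    calc Qm f₁ f₂ * (M2 e₁ c * (M1 e₂ f₂ b * W))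
        = (Qm f₁ f₂ * M2 e₁ c * M1 e₂ f₂ b) * W := by simp only [mul_assoc]
      _ = (c f₂ f₂ • (Qm f₁ f₂ * M1 e₂ f₂ b)) * W := by rw [Q1]
      _ = c f₂ f₂ • (Qm f₁ f₂ * (M1 e₂ f₂ b * W)) := by rw [smul_mul_assoc, mul_assoc]
  have h2 := congrArg
    (fun Z => Z (Sum.inr (f₁, f₂) : (V₁ × V₂ × V₂) ⊕ (V₁ × V₂)) (Sum.inr (f₁, f₂))) h1
  simpa [Qm_eq, std_mul_apply, Matrix.smul_apply] using h2

lemma phi_right (c : Matrix V₂ V₂ ℂ) (b : Matrix V₁ V₁ ℂ)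
    (T : Matrix ((V₁ × V₂ × V₂) ⊕ (V₁ × V₂)) ((V₁ × V₂ × V₂) ⊕ (V₁ × V₂)) ℂ) :
    (T * M1 e₂ f₂ b * M2 e₁ c) (Sum.inl (e₁, e₂, f₂)) (Sum.inl (e₁, e₂, f₂))
      = c e₂ e₂ * (T * M1 e₂ f₂ b) (Sum.inl (e₁, e₂, f₂)) (Sum.inl (e₁, e₂, f₂)) := by
  have h1 : T * M1 e₂ f₂ b * M2 e₁ c * Pm e₁ e₂ f₂
      = c e₂ e₂ • (T * M1 e₂ f₂ b * Pm e₁ e₂ f₂) := by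
    calc T * M1 e₂ f₂ b * M2 e₁ c * Pm e₁ e₂ f₂
        = T * (M1 e₂ f₂ b * M2 e₁ c * Pm e₁ e₂ f₂) := by simp only [mul_assoc]
      _ = T * (c e₂ e₂ • (M1 e₂ f₂ b * Pm e₁ e₂ f₂)) := by rw [P2]
      _ = c e₂ e₂ • (T * M1 e₂ f₂ b * Pm e₁ e₂ f₂) := by rw [mul_smul_comm, mul_assoc]
  have h2 := congrArg
    (fun Z => Z (Sum.inl (e₁, e₂, f₂) : (V₁ × V₂ × V₂) ⊕ (V₁ × V₂)) (Sum.inl (e₁, e₂, f₂))) h1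
  simpa [Pm_eq, mul_std_apply, Matrix.smul_apply] using h2

lemma psi_right (c : Matrix V₂ V₂ ℂ) (b : Matrix V₁ V₁ ℂ)
    (T : Matrix ((V₁ × V₂ × V₂) ⊕ (V₁ × V₂)) ((V₁ × V₂ × V₂) ⊕ (V₁ × V₂)) ℂ) :
    (T * M1 e₂ f₂ b * M2 e₁ c) (Sum.inr (f₁, f₂)) (Sum.inr (f₁, f₂))
      = c f₂ f₂ * (T * M1 e₂ f₂ b) (Sum.inr (f₁, f₂)) (Sum.inr (f₁, f₂)) := by
  have h1 : T * M1 e₂ f₂ b * M2 e₁ c * Qm f₁ f₂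
      = c f₂ f₂ • (T * M1 e₂ f₂ b * Qm f₁ f₂) := by
    calc T * M1 e₂ f₂ b * M2 e₁ c * Qm f₁ f₂
        = T * (M1 e₂ f₂ b * M2 e₁ c * Qm f₁ f₂) := by simp only [mul_assoc]
      _ = T * (c f₂ f₂ • (M1 e₂ f₂ b * Qm f₁ f₂)) := by rw [Q2]
      _ = c f₂ f₂ • (T * M1 e₂ f₂ b * Qm f₁ f₂) := by rw [mul_smul_comm, mul_assoc]
  have h2 := congrArg
    (fun Z => Z (Sum.inr (f₁, f₂) : (V₁ × V₂ × V₂) ⊕ (V₁ × V₂)) (Sum.inr (f₁, f₂))) h1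
  simpa [Qm_eq, mul_std_apply, Matrix.smul_apply] using h2

lemma central_word (b b' : Matrix V₁ V₁ ℂ) (c : Matrix V₂ V₂ ℂ)
    (T₂ D₂ : Matrix ((V₁ × V₂ × V₂) ⊕ (V₁ × V₂)) ((V₁ × V₂ × V₂) ⊕ (V₁ × V₂)) ℂ) :
    (T₂ * M1 e₂ f₂ b) * (M2 e₁ c * (M1 e₂ f₂ b' * D₂))
      = c f₂ f₂ • ((T₂ * M1 e₂ f₂ b) * (M1 e₂ f₂ b' * D₂))
        + (c e₂ e₂ - c f₂ f₂) • ((T₂ * M1 e₂ f₂ b) * (Pm e₁ e₂ f₂ * (M1 e₂ f₂ b' * D₂))) := by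
  calc (T₂ * M1 e₂ f₂ b) * (M2 e₁ c * (M1 e₂ f₂ b' * D₂))
      = T₂ * ((M1 e₂ f₂ b * M2 e₁ c * M1 e₂ f₂ b') * D₂) := by simp only [mul_assoc]
    _ = T₂ * ((c f₂ f₂ • (M1 e₂ f₂ b * M1 e₂ f₂ b')
          + (c e₂ e₂ - c f₂ f₂) • (M1 e₂ f₂ b * Pm e₁ e₂ f₂ * M1 e₂ f₂ b')) * D₂) := by
        rw [central]
    _ = _ := by
        simp only [add_mul, mul_add, smul_mul_assoc, mul_smul_comm, mul_assoc]

end CComb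

end CCombAux

/-- the two summands of the adjacency matrix of the c-comb product of
birooted graphs are c-monotone independent with respect to the vector states at
the two roots (Corollary 4.2 of the paper). -/
theorem ccomb_product_summands_cmonotone_independent
    {V₁ V₂ : Type*} [Fintype V₁] [DecidableEq V₁] [Fintype V₂] [DecidableEq V₂]
    (a₁ : Matrix V₁ V₁ ℂ) (a₂ : Matrix V₂ V₂ ℂ)
    (e₁ f₁ : V₁) (e₂ f₂ : V₂)
    (S₁ S₂ : Matrix ((V₁ × V₂ × V₂) ⊕ (V₁ × V₂)) ((V₁ × V₂ × V₂) ⊕ (V₁ × V₂)) ℂ)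
    (hS₁ : S₁ = Matrix.fromBlocks
      (a₁ ⊗ₖ (Matrix.single e₂ e₂ (1 : ℂ) ⊗ₖ Matrix.single f₂ f₂ (1 : ℂ))) 0 0
      (a₁ ⊗ₖ Matrix.single f₂ f₂ (1 : ℂ)))
    (hS₂ : S₂ = Matrix.fromBlocks
      (Matrix.single e₁ e₁ (1 : ℂ) ⊗ₖ (a₂ ⊗ₖ (1 : Matrix V₂ V₂ ℂ))
        + (1 - Matrix.single e₁ e₁ (1 : ℂ)) ⊗ₖ ((1 : Matrix V₂ V₂ ℂ) ⊗ₖ a₂)) 0 0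
      ((1 : Matrix V₁ V₁ ℂ) ⊗ₖ a₂))
    (φ ψ : Matrix ((V₁ × V₂ × V₂) ⊕ (V₁ × V₂)) ((V₁ × V₂ × V₂) ⊕ (V₁ × V₂)) ℂ → ℂ)
    (hφ : ∀ X, φ X = X (Sum.inl (e₁, e₂, f₂)) (Sum.inl (e₁, e₂, f₂)))
    (hψ : ∀ X, ψ X = X (Sum.inr (f₁, f₂)) (Sum.inr (f₁, f₂))) :
    CMonotoneIndependentPair φ ψ
      (NonUnitalAlgebra.adjoin ℂ {S₁} : Set _)
      (NonUnitalAlgebra.adjoin ℂ {S₂} : Set _) := by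
  have hS₁' : S₁ = CComb.M1 e₂ f₂ a₁ := hS₁
  have hS₂' : S₂ = CComb.M2 e₁ a₂ := hS₂
  intro n hn x hx i hxi hnb
  rw [SetLike.mem_coe, hS₂'] at hxi
  obtain ⟨c, hc⟩ := CComb.mem2 e₁ a₂ hxi
  have hlen : (List.ofFn x).length = n := List.length_ofFn (f := x)
  have hin : (i : ℕ) < (List.ofFn x).length := by rw [hlen]; exact i.isLt
  have hget : ∀ (m : ℕ) (hm : m < n),
      (List.ofFn x)[m]'(by rwa [hlen]) = x ⟨m, hm⟩ := by
    intro m hm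
    simp [List.getElem_ofFn]
  have hsplit : (List.ofFn x).prod
      = ((List.ofFn x).take (i : ℕ)).prod
          * (CComb.M2 e₁ c * ((List.ofFn x).drop ((i : ℕ) + 1)).prod) := by
    conv_lhs => rw [← List.take_append_drop (i : ℕ) (List.ofFn x)]
    rw [List.prod_append, List.drop_eq_getElem_cons hin, List.prod_cons, hget (i : ℕ) i.isLt,
      Fin.eta, hc]
  have herase : (((List.ofFn x).eraseIdx (i : ℕ))).prod
      = ((List.ofFn x).take (i : ℕ)).prod * ((List.ofFn x).drop ((i : ℕ) + 1)).prod := by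
    rw [List.eraseIdx_eq_take_drop_succ, List.prod_append]
  have hBDl : ∀ m ∈ List.ofFn x, CComb.BD m := by
    intro m hm
    rw [List.mem_ofFn] at hm
    obtain ⟨k, rfl⟩ := hm
    rcases hx k with h | h
    · rw [SetLike.mem_coe, hS₁'] at h
      obtain ⟨b, hb⟩ := CComb.mem1 e₂ f₂ a₁ h
      rw [hb]; exact CComb.BD_M1 e₂ f₂ b
    · rw [SetLike.mem_coe, hS₂'] at h
      obtain ⟨c', hc'⟩ := CComb.mem2 e₁ a₂ h
      rw [hc']; exact CComb.BD_M2 e₁ c'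
  have hTBD : CComb.BD (((List.ofFn x).take (i : ℕ)).prod) :=
    CComb.BD_prod _ fun m hm => hBDl m (List.take_subset _ _ hm)
  simp only [hφ, hψ, hsplit, herase, hc, CComb.M2_pp, CComb.M2_qq]
  rcases Nat.eq_zero_or_pos (i : ℕ) with h0 | h0
  · -- i = 0
    have hT : ((List.ofFn x).take (i : ℕ)).prod = 1 := by rw [h0]; simp
    rcases eq_or_lt_of_le (Nat.succ_le_of_lt i.isLt) with hend | hend
    · -- n = 1
      have hD : ((List.ofFn x).drop ((i : ℕ) + 1)).prod = 1 := by
        have h1 : (i : ℕ) + 1 = (List.ofFn x).length := by rw [hlen]; exact hend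
        rw [h1, List.drop_length]; rfl
      rw [hT, hD]
      constructor <;> simp [CComb.M2_pp, CComb.M2_qq, Matrix.one_apply_eq] <;> ring
    · -- i = 0, i + 1 < n : right neighbour exists
      have hj := hnb ⟨(i : ℕ) + 1, hend⟩ (Or.inr rfl)
      rw [SetLike.mem_coe, hS₁'] at hj
      obtain ⟨b, hb⟩ := CComb.mem1 e₂ f₂ a₁ hj
      have hD : ((List.ofFn x).drop ((i : ℕ) + 1)).prod
          = CComb.M1 e₂ f₂ b * ((List.ofFn x).drop ((i : ℕ) + 2)).prod := by
        rw [List.drop_eq_getElem_cons (by rw [hlen]; exact hend), List.prod_cons,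
          hget ((i : ℕ) + 1) hend, hb]
      rw [hT, hD]
      constructor
      · rw [one_mul, CComb.phi_left, Matrix.one_apply_eq, Matrix.one_mul]
        ring
      · rw [one_mul, CComb.psi_left, Matrix.one_mul]
  · -- 0 < i : left neighbour exists
    obtain ⟨m, hm⟩ : ∃ m, (i : ℕ) = m + 1 := ⟨(i : ℕ) - 1, by omega⟩
    have hmn : m < n := by omega
    have hj := hnb ⟨m, hmn⟩ (Or.inl (by simpa using hm.symm))
    rw [SetLike.mem_coe, hS₁'] at hj
    obtain ⟨bl, hbl⟩ := CComb.mem1 e₂ f₂ a₁ hj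
    have hTd : ((List.ofFn x).take (i : ℕ)).prod
        = ((List.ofFn x).take m).prod * CComb.M1 e₂ f₂ bl := by
      rw [hm, List.take_succ, List.prod_append,
        List.getElem?_eq_getElem (by rw [hlen]; exact hmn)]
      simp [hget m hmn, hbl]
    rcases eq_or_lt_of_le (Nat.succ_le_of_lt i.isLt) with hend | hend
    · -- i + 1 = n : i is last
      have hD : ((List.ofFn x).drop ((i : ℕ) + 1)).prod = 1 := by
        have h1 : (i : ℕ) + 1 = (List.ofFn x).length := by rw [hlen]; exact hend
        rw [h1, List.drop_length]; rfl
      rw [hD, hTd]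
      constructor
      · rw [Matrix.mul_one, Matrix.mul_one, CComb.phi_right, Matrix.one_apply_eq]
        ring
      · rw [Matrix.mul_one, Matrix.mul_one, CComb.psi_right]
    · -- interior
      have hj2 := hnb ⟨(i : ℕ) + 1, hend⟩ (Or.inr rfl)
      rw [SetLike.mem_coe, hS₁'] at hj2
      obtain ⟨br, hbr⟩ := CComb.mem1 e₂ f₂ a₁ hj2
      have hD : ((List.ofFn x).drop ((i : ℕ) + 1)).prod
          = CComb.M1 e₂ f₂ br * ((List.ofFn x).drop ((i : ℕ) + 2)).prod := by
        rw [List.drop_eq_getElem_cons (by rw [hlen]; exact hend), List.prod_cons,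
          hget ((i : ℕ) + 1) hend, hbr]
      rw [hTd, hD, CComb.central_word]
      have hassoc1 : (((List.ofFn x).take m).prod * CComb.M1 e₂ f₂ bl)
            * (CComb.Pm e₁ e₂ f₂ * (CComb.M1 e₂ f₂ br * ((List.ofFn x).drop ((i : ℕ) + 2)).prod))
          = (((List.ofFn x).take m).prod * CComb.M1 e₂ f₂ bl) * CComb.Pm e₁ e₂ f₂
            * (CComb.M1 e₂ f₂ br * ((List.ofFn x).drop ((i : ℕ) + 2)).prod) := by
        simp only [mul_assoc]
      constructor
      · rw [Matrix.add_apply, Matrix.smul_apply, Matrix.smul_apply, hassoc1, CComb.Pm_eq,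
          CComb.mul_std_mul]
        simp only [smul_eq_mul]
        ring
      · rw [Matrix.add_apply, Matrix.smul_apply, Matrix.smul_apply, hassoc1, CComb.Pm_eq,
          CComb.mul_std_mul]
        rw [show (((List.ofFn x).take m).prod * CComb.M1 e₂ f₂ bl) (Sum.inr (f₁, f₂))
            (Sum.inl (e₁, e₂, f₂)) = 0 from (hTd ▸ hTBD) _ _]
        simp only [smul_eq_mul]
        ring
end

section
/- Fix finite types V₁, V₂, Hermitian matrices a₁ : Matrix V₁ V₁ ℂ and a₂ : Matrix V₂ V₂ ℂ, and vertices e₁ ∈ V₁ and e₂, f₂ ∈ V₂. On V₁ × V₂ × V₂ let S = a₁ ⊗ E_{e₂} ⊗ E_{f₂} + E_{e₁} ⊗ a₂ ⊗ 1 + E_{e₁}^⊥ ⊗ 1 ⊗ a₂ (a Hermitian matrix), and let e = (e₁, e₂, f₂). Then for every z ∈ ℂ with Im z > 0: G_{a₂,f₂}(z) ≠ 0, Im F_{a₂,f₂}(z) > 0 (so that F_{a₂,f₂}(z)•1 − a₁ is invertible), and F_{S,e}(z) = F_{a₁,e₁}(F_{a₂,f₂}(z)) + F_{a₂,e₂}(z)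 − F_{a₂,f₂}(z). (This is the reciprocal Cauchy transform formula for the c-monotone additive convolution μ₁ ▷_{ν₂} μ₂, where μ₁, μ₂, ν₂ are the spectral distributions of a₁ at e₁, a₂ at e₂ and a₂ at f₂, realized by the essential component of the c-comb product of birooted graphs.) -/
open Matrix
open scoped Kronecker

/-- The Cauchy transform of (the spectral distribution of) a matrix `a` at a
vertex `v`: `G_{a,v}(w) = ((w•1 − a)⁻¹) v v`. -/
noncomputable def cauchyG {V : Type*} [Fintype V] [DecidableEq V]
    (a : Matrix V V ℂ) (v : V) (w : ℂ) : ℂ :=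
  ((w • (1 : Matrix V V ℂ) - a)⁻¹) v v

/-- The reciprocal Cauchy transform `F_{a,v}(w) = 1 / G_{a,v}(w)`. -/
noncomputable def cauchyF {V : Type*} [Fintype V] [DecidableEq V]
    (a : Matrix V V ℂ) (v : V) (w : ℂ) : ℂ :=
  1 / cauchyG a v w

lemma herm_quad_real {V : Type*} [Fintype V] (a : Matrix V V ℂ) (ha : a.IsHermitian)
    (v : V → ℂ) : (star v ⬝ᵥ a *ᵥ v).im = 0 := by
  have key : star (star v ⬝ᵥ a *ᵥ v) = star v ⬝ᵥ a *ᵥ v := by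
    simp only [dotProduct, mulVec, Finset.mul_sum, star_sum, star_mul', Pi.star_apply, star_star]
    rw [Finset.sum_comm]
    refine Finset.sum_congr rfl fun i _ => Finset.sum_congr rfl fun j _ => ?_
    rw [ha.apply i j]
    ring
  have h2 := congrArg Complex.im key
  simp only [Complex.star_def, Complex.conj_im] at h2
  linarith

lemma herm_shift_isUnit {V : Type*} [Fintype V] [DecidableEq V] (a : Matrix V V ℂ)
    (ha : a.IsHermitian) (z : ℂ) (hz : z.im ≠ 0) :
    IsUnit (z • (1 : Matrix V V ℂ) - a) := by
  rw [Matrix.isUnit_iff_isUnit_det, isUnit_iff_ne_zero]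
  intro hdet
  obtain ⟨v, hv, hMv⟩ := (Matrix.exists_mulVec_eq_zero_iff).mpr hdet
  have h0 : star v ⬝ᵥ (z • (1 : Matrix V V ℂ) - a) *ᵥ v = 0 := by rw [hMv]; simp
  have h1 : star v ⬝ᵥ (z • (1 : Matrix V V ℂ) - a) *ᵥ v
      = z * (star v ⬝ᵥ v) - star v ⬝ᵥ a *ᵥ v := by
    rw [Matrix.sub_mulVec, dotProduct_sub, Matrix.smul_mulVec, Matrix.one_mulVec,
      dotProduct_smul, smul_eq_mul]
  have hvv : star v ⬝ᵥ v = ((∑ i, Complex.normSq (v i) : ℝ) : ℂ) := by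
    rw [dotProduct]
    push_cast
    exact Finset.sum_congr rfl fun i _ => by
      rw [Pi.star_apply, Complex.star_def, ← Complex.normSq_eq_conj_mul_self]
  have hpos : (0:ℝ) < ∑ i, Complex.normSq (v i) := by
    rcases Function.ne_iff.mp hv with ⟨i, hi⟩
    exact Finset.sum_pos' (fun j _ => Complex.normSq_nonneg _)
      ⟨i, Finset.mem_univ i, Complex.normSq_pos.mpr hi⟩
  have him := congrArg Complex.im (h1 ▸ h0)
  rw [hvv] at him
  simp [Complex.sub_im, Complex.mul_im, herm_quad_real a ha v] at him
  rcases him with h | h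
  · exact hz h
  · exact hpos.ne' h

lemma cauchy_estimates {V : Type*} [Fintype V] [DecidableEq V] (a : Matrix V V ℂ)
    (ha : a.IsHermitian) (v : V) (z : ℂ) (hz : 0 < z.im) :
    cauchyG a v z ≠ 0 ∧ z.im ≤ (cauchyF a v z).im := by
  set M : Matrix V V ℂ := z • 1 - a with hMdef
  have hU : IsUnit M := herm_shift_isUnit a ha z hz.ne'
  have hUd : IsUnit M.det := (Matrix.isUnit_iff_isUnit_det M).mp hU
  set R := M⁻¹ with hRdef
  have hMR : M * R = 1 := Matrix.mul_nonsing_inv M hUd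
  have hRM : R * M = 1 := Matrix.nonsing_inv_mul M hUd
  have hMH : Mᴴ = (starRingEnd ℂ z) • 1 - a := by
    rw [hMdef, conjTranspose_sub, conjTranspose_smul, conjTranspose_one, ha.eq]
    rfl
  have hsub : Mᴴ - M = (starRingEnd ℂ z - z) • (1 : Matrix V V ℂ) := by
    rw [hMH, hMdef, sub_smul]
    abel
  have key : R - Rᴴ = (starRingEnd ℂ z - z) • (R * Rᴴ) := by
    have h1 : Mᴴ * Rᴴ = 1 := by rw [← conjTranspose_mul, hRM, conjTranspose_one]
    calc R - Rᴴ = R * (Mᴴ * Rᴴ) - (R * M) * Rᴴ := by rw [h1, hRM, mul_one, one_mul]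
    _ = R * ((Mᴴ - M) * Rᴴ) := by
        rw [← Matrix.mul_assoc, ← Matrix.sub_mul, ← Matrix.mul_sub, Matrix.mul_assoc]
    _ = R * (((starRingEnd ℂ z - z) • (1 : Matrix V V ℂ)) * Rᴴ) := by rw [hsub]
    _ = (starRingEnd ℂ z - z) • (R * Rᴴ) := by
        rw [Matrix.smul_mul, Matrix.mul_smul, Matrix.one_mul]
  set s : ℝ := ∑ j, Complex.normSq (R v j) with hsdef
  have hRRH : (R * Rᴴ) v v = (s : ℂ) := by
    rw [Matrix.mul_apply, hsdef]
    push_cast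
    refine Finset.sum_congr rfl fun j _ => ?_
    rw [conjTranspose_apply, Complex.star_def, Complex.mul_conj]
  have hspos : 0 < s := by
    have h1 : ∑ j, R v j * M j v = 1 := by
      have := congrFun (congrFun hRM v) v
      simpa [Matrix.mul_apply, Matrix.one_apply] using this
    have h2 : ∃ j, R v j ≠ 0 := by
      by_contra h
      push_neg at h
      simp [h] at h1
    rcases h2 with ⟨j, hj⟩
    exact Finset.sum_pos' (fun k _ => Complex.normSq_nonneg _)
      ⟨j, Finset.mem_univ j, Complex.normSq_pos.mpr hj⟩
  have hkey : R v v - starRingEnd ℂ (R v v) = (starRingEnd ℂ z - z) * (s : ℂ) := by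
    have := congrFun (congrFun key v) v
    simpa [Matrix.sub_apply, Matrix.smul_apply, conjTranspose_apply, Complex.star_def,
      hRRH, smul_eq_mul] using this
  have hGim : (R v v).im = -z.im * s := by
    have := congrArg Complex.im hkey
    simp [Complex.sub_im, Complex.conj_im, Complex.mul_im, Complex.ofReal_im,
      Complex.ofReal_re, Complex.sub_re, Complex.conj_re] at this
    linarith
  have hG : cauchyG a v z = R v v := rfl
  have hGne : cauchyG a v z ≠ 0 := by
    intro h
    rw [hG] at h
    rw [h] at hGim
    simp at hGim
    rcases hGim with h' | h'
    · exact hz.ne' h'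
    · exact hspos.ne' h' 
  refine ⟨hGne, ?_⟩
  have hnsq : 0 < Complex.normSq (R v v) := Complex.normSq_pos.mpr (hG ▸ hGne)
  have hle : Complex.normSq (R v v) ≤ s := by
    rw [hsdef]
    exact Finset.single_le_sum (f := fun j => Complex.normSq (R v j))
      (fun j _ => Complex.normSq_nonneg _) (Finset.mem_univ v)
  have hFim : (cauchyF a v z).im = z.im * s / Complex.normSq (R v v) := by
    rw [cauchyF, one_div, hG, Complex.inv_im, hGim]
    field_simp
  rw [hFim, le_div_iff₀ hnsq]
  nlinarith

lemma kron_isHermitian {m n : Type*} [Fintype m] [Fintype n]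
    {A : Matrix m m ℂ} {B : Matrix n n ℂ} (hA : A.IsHermitian) (hB : B.IsHermitian) :
    (A ⊗ₖ B).IsHermitian := by
  ext ⟨i, j⟩ ⟨k, l⟩
  rw [conjTranspose_apply, kroneckerMap_apply, kroneckerMap_apply, star_mul',
    hA.apply, hB.apply, mul_comm]

lemma stdBasis_isHermitian {V : Type*} [Fintype V] [DecidableEq V] (v : V) :
    (Matrix.single v v (1 : ℂ)).IsHermitian := by
  ext i j
  simp only [conjTranspose_apply, Matrix.single, Matrix.of_apply]
  split_ifs with h1 h2 h2 <;> simp_all 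
  · exact h2 (h1.1.symm.trans h1.2)
  · exact h1 (h2.1.symm.trans h2.2)

lemma sum_ite_const {α β : Type*} [Fintype α] [AddCommMonoid β] (c : Prop) [Decidable c]
    (f g : α → β) : ∑ x, (if c then f x else g x) = if c then ∑ x, f x else ∑ x, g x := by
  split_ifs <;> rfl

/-- the reciprocal Cauchy transform of the essential component of the
c-comb product of birooted graphs satisfies
`F_{S,e}(z) = F_{a₁,e₁}(F_{a₂,f₂}(z)) + F_{a₂,e₂}(z) − F_{a₂,f₂}(z)`
(the c-monotone additive convolution formula, Proposition 4.2 of the paper). -/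
theorem ccomb_essential_component_reciprocal_cauchy_transform
    {V₁ V₂ : Type*} [Fintype V₁] [DecidableEq V₁] [Fintype V₂] [DecidableEq V₂]
    (a₁ : Matrix V₁ V₁ ℂ) (a₂ : Matrix V₂ V₂ ℂ)
    (ha₁ : a₁.IsHermitian) (ha₂ : a₂.IsHermitian)
    (e₁ : V₁) (e₂ f₂ : V₂)
    (S : Matrix (V₁ × V₂ × V₂) (V₁ × V₂ × V₂) ℂ)
    (hS : S = a₁ ⊗ₖ (Matrix.single e₂ e₂ (1 : ℂ) ⊗ₖ Matrix.single f₂ f₂ (1 : ℂ))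
      + Matrix.single e₁ e₁ (1 : ℂ) ⊗ₖ (a₂ ⊗ₖ (1 : Matrix V₂ V₂ ℂ))
      + (1 - Matrix.single e₁ e₁ (1 : ℂ)) ⊗ₖ ((1 : Matrix V₂ V₂ ℂ) ⊗ₖ a₂)) :
    S.IsHermitian ∧
    ∀ z : ℂ, 0 < z.im →
      cauchyG a₂ f₂ z ≠ 0
      ∧ 0 < (cauchyF a₂ f₂ z).im
      ∧ IsUnit (cauchyF a₂ f₂ z • (1 : Matrix V₁ V₁ ℂ) - a₁)
      ∧ cauchyF S (e₁, e₂, f₂) z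
          = cauchyF a₁ e₁ (cauchyF a₂ f₂ z) + cauchyF a₂ e₂ z - cauchyF a₂ f₂ z := by
  have hSherm : S.IsHermitian := by
    rw [hS]
    exact ((kron_isHermitian ha₁ (kron_isHermitian (stdBasis_isHermitian e₂)
        (stdBasis_isHermitian f₂))).add
      (kron_isHermitian (stdBasis_isHermitian e₁) (kron_isHermitian ha₂ isHermitian_one))).add
      (kron_isHermitian (isHermitian_one.sub (stdBasis_isHermitian e₁))
        (kron_isHermitian isHermitian_one ha₂))
  refine ⟨hSherm, fun z hz => ?_⟩
  obtain ⟨hGf_ne, hFf_im⟩ := cauchy_estimates a₂ ha₂ f₂ z hz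
  obtain ⟨hGe_ne, hFe_im⟩ := cauchy_estimates a₂ ha₂ e₂ z hz
  set w : ℂ := cauchyF a₂ f₂ z with hw
  have hwim : 0 < w.im := lt_of_lt_of_le hz hFf_im
  have hU₁ : IsUnit (w • (1 : Matrix V₁ V₁ ℂ) - a₁) := herm_shift_isUnit a₁ ha₁ w hwim.ne'
  refine ⟨hGf_ne, hwim, hU₁, ?_⟩
  have hU₂ : IsUnit (z • (1 : Matrix V₂ V₂ ℂ) - a₂) := herm_shift_isUnit a₂ ha₂ z hz.ne'
  set R₂ : Matrix V₂ V₂ ℂ := (z • (1 : Matrix V₂ V₂ ℂ) - a₂)⁻¹ with hR₂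
  set R₁ : Matrix V₁ V₁ ℂ := (w • (1 : Matrix V₁ V₁ ℂ) - a₁)⁻¹ with hR₁
  obtain ⟨hG₁_ne, hF₁_im⟩ := cauchy_estimates a₁ ha₁ e₁ w hwim
  set G₁ : ℂ := cauchyG a₁ e₁ w with hG₁
  set Fe : ℂ := cauchyF a₂ e₂ z with hFe
  have hG₁R : G₁ = R₁ e₁ e₁ := rfl
  have hGe : cauchyG a₂ e₂ z = R₂ e₂ e₂ := rfl
  have hGf : cauchyG a₂ f₂ z = R₂ f₂ f₂ := rfl
  have hFeGe : Fe * R₂ e₂ e₂ = 1 := by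
    rw [hFe, cauchyF, ← hGe]
    field_simp
  have hwGf : w * R₂ f₂ f₂ = 1 := by
    rw [hw, cauchyF, ← hGf]
    field_simp
  set d : ℂ := 1 + (Fe - w) * G₁ with hd
  have hd_ne : d ≠ 0 := by
    have hdG : d = G₁ * (cauchyF a₁ e₁ w + Fe - w) := by
      rw [hd, cauchyF, ← hG₁]
      field_simp
      ring
    rw [hdG]
    refine mul_ne_zero hG₁_ne fun h0 => ?_
    have him := congrArg Complex.im h0
    simp only [Complex.add_im, Complex.sub_im, Complex.zero_im] at him
    linarith
  set μ : ℂ := 1 / d with hμ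
  have hμd : μ * d = 1 := by
    rw [hμ]
    field_simp
  set lam : ℂ := μ * Fe * G₁ with hlam
  set u : V₁ × V₂ × V₂ → ℂ := fun p =>
    if p.1 = e₁ then (if p.2.2 = f₂ then lam * R₂ p.2.1 e₂ else 0)
    else (if p.2.1 = e₂ then μ * w * R₁ p.1 e₁ * R₂ p.2.2 f₂ else 0) with hu_def
  have hu_app : ∀ x y y', u (x, y, y')
      = if x = e₁ then (if y' = f₂ then lam * R₂ y e₂ else 0)
        else (if y = e₂ then μ * w * R₁ x e₁ * R₂ y' f₂ else 0) := fun _ _ _ => rfl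
  have hc : ∀ x, u (x, e₂, f₂) = μ * R₁ x e₁ := by
    intro x
    rw [hu_app]
    by_cases hx : x = e₁
    · rw [if_pos hx, if_pos rfl, hx, ← hG₁R, hlam]
      calc μ * Fe * G₁ * R₂ e₂ e₂ = μ * G₁ * (Fe * R₂ e₂ e₂) := by ring
      _ = μ * G₁ := by rw [hFeGe, mul_one]
    · rw [if_neg hx, if_pos rfl]
      calc μ * w * R₁ x e₁ * R₂ f₂ f₂ = μ * R₁ x e₁ * (w * R₂ f₂ f₂) := by ring
      _ = μ * R₁ x e₁ := by rw [hwGf, mul_one]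
  have hA₂ : ∀ y c, ∑ y₂, a₂ y y₂ * R₂ y₂ c = z * R₂ y c - (if y = c then (1:ℂ) else 0) := by
    intro y c
    have h := congrFun (congrFun ((z • (1 : Matrix V₂ V₂ ℂ) - a₂).mul_nonsing_inv
      ((Matrix.isUnit_iff_isUnit_det _).mp hU₂)) y) c
    simp only [Matrix.mul_apply, Matrix.sub_apply, Matrix.smul_apply, Matrix.one_apply,
      smul_eq_mul, mul_ite, mul_one, mul_zero, sub_mul, Finset.sum_sub_distrib, ite_mul,
      zero_mul, Finset.sum_ite_eq, Finset.mem_univ, if_true, ← hR₂] at h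
    linear_combination -h
  have hA₁ : ∀ x c, ∑ x₂, a₁ x x₂ * R₁ x₂ c = w * R₁ x c - (if x = c then (1:ℂ) else 0) := by
    intro x c
    have h := congrFun (congrFun ((w • (1 : Matrix V₁ V₁ ℂ) - a₁).mul_nonsing_inv
      ((Matrix.isUnit_iff_isUnit_det _).mp hU₁)) x) c
    simp only [Matrix.mul_apply, Matrix.sub_apply, Matrix.smul_apply, Matrix.one_apply,
      smul_eq_mul, mul_ite, mul_one, mul_zero, sub_mul, Finset.sum_sub_distrib, ite_mul,
      zero_mul, Finset.sum_ite_eq, Finset.mem_univ, if_true, ← hR₁] at h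
    linear_combination -h
  -- the three partial sums
  have T1 : ∀ x y y', ∑ p : V₁ × V₂ × V₂,
      (a₁ ⊗ₖ (Matrix.single e₂ e₂ (1:ℂ) ⊗ₖ Matrix.single f₂ f₂ (1:ℂ)))
        (x, y, y') p * u p
      = (if e₂ = y then 1 else 0) * ((if f₂ = y' then 1 else 0)
          * (μ * (w * R₁ x e₁ - (if x = e₁ then 1 else 0)))) := by
    intro x y y'
    simp only [Fintype.sum_prod_type, kroneckerMap_apply, Matrix.single,
      Matrix.of_apply, ite_and, ite_mul, mul_ite, mul_zero, zero_mul, mul_one, one_mul,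
      Finset.sum_ite_eq, Finset.mem_univ, if_true, Finset.sum_const_zero]
    by_cases h1 : f₂ = y'
    · subst h1
      by_cases h2 : e₂ = y
      · subst h2
        simp only [if_pos rfl, Finset.sum_ite_eq, Finset.mem_univ, if_true, hc]
        have he : ∀ x₁ : V₁, a₁ x x₁ * (μ * R₁ x₁ e₁) = μ * (a₁ x x₁ * R₁ x₁ e₁) :=
          fun _ => by ring
        rw [Finset.sum_congr rfl fun i _ => he i, ← Finset.mul_sum, hA₁]
      · simp [h2]
    · simp [h1]
  have T2 : ∀ x y y', ∑ p : V₁ × V₂ × V₂,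
      (Matrix.single e₁ e₁ (1:ℂ) ⊗ₖ (a₂ ⊗ₖ (1 : Matrix V₂ V₂ ℂ))) (x, y, y') p * u p
      = (if e₁ = x then 1 else 0)
        * (if y' = f₂ then lam * (z * R₂ y e₂ - (if y = e₂ then 1 else 0)) else 0) := by
    intro x y y'
    simp only [Fintype.sum_prod_type, kroneckerMap_apply, Matrix.single,
      Matrix.of_apply, Matrix.one_apply, ite_and, ite_mul, mul_ite, mul_zero, zero_mul,
      mul_one, one_mul, Finset.sum_ite_eq, Finset.sum_ite_eq', Finset.mem_univ, if_true,
      Finset.sum_const_zero]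
    by_cases h1 : e₁ = x
    · rw [← h1]
      simp only [if_pos rfl, hu_app, Finset.sum_ite_eq, Finset.mem_univ, if_true]
      by_cases h3 : y' = f₂
      · simp only [if_pos h3, Finset.sum_ite_eq, Finset.mem_univ, if_true,
          eq_self_iff_true]
        rw [Finset.sum_comm]
        simp only [Finset.sum_ite_eq, Finset.mem_univ, if_true, eq_self_iff_true]
        have he : ∀ y₂ : V₂, a₂ y y₂ * (lam * R₂ y₂ e₂) = lam * (a₂ y y₂ * R₂ y₂ e₂) :=
          fun _ => by ring
        rw [Finset.sum_congr rfl fun i _ => he i, ← Finset.mul_sum, hA₂]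
      · simp [h3]
    · simp [h1]
  have T3 : ∀ x y y', ∑ p : V₁ × V₂ × V₂,
      (((1 : Matrix V₁ V₁ ℂ) - Matrix.single e₁ e₁ (1:ℂ))
        ⊗ₖ ((1 : Matrix V₂ V₂ ℂ) ⊗ₖ a₂)) (x, y, y') p * u p
      = if x = e₁ then 0 else
          (if y = e₂ then μ * w * R₁ x e₁ * (z * R₂ y' f₂ - (if y' = f₂ then 1 else 0))
            else 0) := by
    intro x y y'
    by_cases h1 : x = e₁
    · subst h1
      simp [Fintype.sum_prod_type, kroneckerMap_apply, Matrix.single,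
        Matrix.of_apply, Matrix.sub_apply, Matrix.one_apply, ite_and, sub_mul, ite_mul,
        mul_ite, sum_ite_const, Finset.sum_ite_eq, Finset.sum_ite_eq']
    · by_cases h2 : y = e₂
      · subst h2
        rw [if_neg h1, if_pos rfl]
        simp only [Fintype.sum_prod_type, kroneckerMap_apply, Matrix.single,
          Matrix.of_apply, Matrix.sub_apply, Matrix.one_apply, hu_app, ite_and, sub_mul,
          ite_mul, mul_ite, mul_zero, zero_mul, mul_one, one_mul, zero_sub, sub_zero,
          neg_zero, sum_ite_const, Finset.sum_ite_eq, Finset.sum_ite_eq',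
          Finset.mem_univ, if_true, Finset.sum_const_zero, if_neg h1,
          if_neg (fun h : e₁ = x => h1 h.symm), Finset.sum_neg_distrib, Finset.sum_sub_distrib]
        have hbody : ∀ x₁ : V₁, (if x₁ = e₁ then if x = x₁ then a₂ y' f₂ * (lam * R₂ y y) else 0
            else if x = x₁ then ∑ x₂ : V₂, a₂ y' x₂ * (μ * w * R₁ x₁ e₁ * R₂ x₂ f₂) else 0)
            = if x = x₁ then (if x₁ = e₁ then a₂ y' f₂ * (lam * R₂ y y)
              else ∑ x₂ : V₂, a₂ y' x₂ * (μ * w * R₁ x₁ e₁ * R₂ x₂ f₂)) else 0 := by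
          intro x₁
          split_ifs <;> rfl
        rw [Finset.sum_congr rfl fun i _ => hbody i]
        simp only [Finset.sum_ite_eq, Finset.mem_univ, if_true, if_neg h1]
        have he : ∀ y₂ : V₂, a₂ y' y₂ * (μ * w * R₁ x e₁ * R₂ y₂ f₂)
            = (μ * w * R₁ x e₁) * (a₂ y' y₂ * R₂ y₂ f₂) := fun _ => by ring
        rw [Finset.sum_congr rfl fun i _ => he i, ← Finset.mul_sum, hA₂]
      · rw [if_neg h1, if_neg h2]
        simp [Fintype.sum_prod_type, kroneckerMap_apply, Matrix.single,
          Matrix.of_apply, Matrix.sub_apply, Matrix.one_apply, hu_app, ite_and, sub_mul,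
          ite_mul, mul_ite, sum_ite_const, Finset.sum_ite_eq, Finset.sum_ite_eq', h1, h2,
          if_neg (fun h : e₁ = x => h1 h.symm)]
  have hμd' : μ * (1 + (Fe - w) * G₁) = 1 := by rw [← hd]; exact hμd
  have hUS : IsUnit (z • (1 : Matrix (V₁ × V₂ × V₂) (V₁ × V₂ × V₂) ℂ) - S) :=
    herm_shift_isUnit S hSherm z hz.ne'
  have hu : (z • (1 : Matrix (V₁ × V₂ × V₂) (V₁ × V₂ × V₂) ℂ) - S) *ᵥ u
      = Pi.single (e₁, e₂, f₂) 1 := by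
    funext p
    obtain ⟨x, y, y'⟩ := p
    have hmv : ((z • (1 : Matrix (V₁ × V₂ × V₂) (V₁ × V₂ × V₂) ℂ) - S) *ᵥ u) (x, y, y')
        = z * u (x, y, y') - ∑ p : V₁ × V₂ × V₂, S (x, y, y') p * u p := by
      rw [Matrix.mulVec, dotProduct]
      simp only [Matrix.sub_apply, Matrix.smul_apply, Matrix.one_apply, smul_eq_mul,
        mul_ite, mul_one, mul_zero, sub_mul, ite_mul, zero_mul, Finset.sum_sub_distrib,
        Finset.sum_ite_eq, Finset.mem_univ, if_true]
    rw [hmv, hS]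
    simp only [Matrix.add_apply, add_mul, Finset.sum_add_distrib, T1, T2, T3]
    simp only [hu_app, Pi.single_apply, Prod.mk.injEq]
    by_cases h1 : x = e₁ <;> by_cases h2 : y = e₂ <;> by_cases h3 : y' = f₂ <;>
      simp only [@eq_comm _ e₁ x, @eq_comm _ e₂ y, @eq_comm _ f₂ y', h1, h2, h3,
        if_true, if_false, eq_self_iff_true, true_and, and_true, false_and, and_false,
        one_mul, mul_one, zero_mul, mul_zero, add_zero, zero_add, sub_zero, zero_sub,
        iff_true, ite_true, ite_false, neg_zero] <;>
      try ring
    have hne : (1:ℂ) + (Fe * G₁ - w * G₁) ≠ 0 := by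
      intro h
      apply hd_ne
      rw [hd]
      linear_combination h
    field_simp [hne]
    rw [← hG₁R]
    ring
    rw [hlam]
    linear_combination hμd'
  have hu_inv : u = (z • (1 : Matrix (V₁ × V₂ × V₂) (V₁ × V₂ × V₂) ℂ) - S)⁻¹
      *ᵥ Pi.single (e₁, e₂, f₂) 1 := by
    have h := congrArg
      (fun v => (z • (1 : Matrix (V₁ × V₂ × V₂) (V₁ × V₂ × V₂) ℂ) - S)⁻¹ *ᵥ v) hu
    simpa only [Matrix.mulVec_mulVec,
      Matrix.nonsing_inv_mul _ ((Matrix.isUnit_iff_isUnit_det _).mp hUS),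
      Matrix.one_mulVec] using h
  have hGS : cauchyG S (e₁, e₂, f₂) z = μ * G₁ := by
    have h0 : cauchyG S (e₁, e₂, f₂) z = u (e₁, e₂, f₂) := by
      rw [cauchyG, hu_inv]
      simp [Matrix.mulVec_single]
    rw [h0, hc e₁, ← hG₁R]
  have hFS : cauchyF S (e₁, e₂, f₂) z = 1 / (μ * G₁) := by
    unfold cauchyF
    rw [hGS]
  have hF₁ : cauchyF a₁ e₁ w = 1 / G₁ := by
    unfold cauchyF
    rw [← hG₁]
  rw [hFS, hF₁, hμ, hd]
  have hd1_ne : (1 : ℂ) + (Fe - w) * G₁ ≠ 0 := by rw [← hd]; exact hd_ne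
  field_simp
  ring
end

section
/- Fix finite types V₁, V₂, Hermitian matrices a₁ : Matrix V₁ V₁ ℂ and a₂ : Matrix V₂ V₂ ℂ, and vertices e₁, f₁ ∈ V₁ and e₂, f₂ ∈ V₂. On (V₁ × V₂ × V₂) ⊕ (V₁ × V₂) let A be the block-diagonal sum of S = a₁ ⊗ E_{e₂} ⊗ E_{f₂} + E_{e₁} ⊗ a₂ ⊗ 1 + E_{e₁}^⊥ ⊗ 1 ⊗ a₂ and S' = a₁ ⊗ E_{f₂} + 1 ⊗ a₂ (the adjacency matrix of the c-comb product of the birooted graphs with adjacency matrices a₁, a₂ and roots (e₁, f₁), (e₂, f₂)). Then A is Hermitian and for every z ∈ ℂ with Im z > 0: F_{A, inl (e₁,e₂,f₂)}(z) = F_{a₁,e₁}(F_{a₂,f₂}(z)) + F_{a₂,e₂}(z) − F_{a₂,f₂}(z) and F_{A, inr (f₁,f₂)}(z) = F_{a₁,f₁}(F_{a₂,f₂}(z)); that is, the pair of spectral distributions of the c-comb product at its two roots is (μ₁ ▷_{ν₂} μ₂, ν₁ ▷ ν₂), the pair of the c-monotone additive convolution and the monotone additive convolution of the spectral distributions μ₁,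 ν₁ of a₁ at e₁, f₁ and μ₂, ν₂ of a₂ at e₂, f₂. -/
open Matrix
open scoped Kronecker

lemma kron_herm {V W : Type*} [Fintype V] [DecidableEq V] [Fintype W] [DecidableEq W]
    {a : Matrix V V ℂ} {b : Matrix W W ℂ} (ha : a.IsHermitian) (hb : b.IsHermitian) :
    (a ⊗ₖ b).IsHermitian := by
  have : (a ⊗ₖ b)ᴴ = aᴴ ⊗ₖ bᴴ := by
    ext ⟨i,j⟩ ⟨k,l⟩
    simp [conjTranspose_apply, kroneckerMap_apply, mul_comm]
  unfold Matrix.IsHermitian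
  rw [this, ha.eq, hb.eq]

lemma stdBasis_herm {V : Type*} [Fintype V] [DecidableEq V] (v : V) :
    (Matrix.single v v (1:ℂ)).IsHermitian := by
  unfold Matrix.IsHermitian
  ext i j
  simp [conjTranspose_apply, Matrix.single, and_comm]

lemma smul_one_sub_eq {V : Type*} [Fintype V] [DecidableEq V]
    (a : Matrix V V ℂ) (z : ℂ) :
    z • (1 : Matrix V V ℂ) - a = Matrix.diagonal (fun _ => z) - a := by
  rw [Matrix.smul_one_eq_diagonal]

lemma isUnit_det_diagonal_sub {V : Type*} [Fintype V] [DecidableEq V]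
    {a : Matrix V V ℂ} (ha : a.IsHermitian) (d : V → ℂ)
    (hd : ∀ v, 0 < (d v).im) : IsUnit (Matrix.diagonal d - a).det := by
  rw [isUnit_iff_ne_zero]
  intro hdet
  obtain ⟨x, hx, hmul⟩ := Matrix.exists_mulVec_eq_zero_iff.mpr hdet
  have heq : Matrix.diagonal d *ᵥ x = a *ᵥ x := by
    have := hmul
    rw [Matrix.sub_mulVec, sub_eq_zero] at this
    exact this
  -- q := star x ⬝ᵥ (a *ᵥ x) is real
  set q := dotProduct (star x) (a *ᵥ x) with hq
  have hqreal : q.im = 0 := by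
    have h1 : (starRingEnd ℂ) q = q := by
      calc (starRingEnd ℂ) q = star q := rfl
      _ = dotProduct (star (a *ᵥ x)) x := by
          rw [hq, Matrix.star_dotProduct, star_star]
      _ = dotProduct (star x ᵥ* aᴴ) x := by rw [Matrix.star_mulVec]
      _ = dotProduct (star x) (aᴴ *ᵥ x) := by rw [← dotProduct_mulVec]
      _ = q := by rw [ha.eq]
    exact (Complex.conj_eq_iff_im).mp h1
  -- but its im is positive
  have h2 : q = dotProduct (star x) (Matrix.diagonal d *ᵥ x) := by rw [heq]
  have h3 : q.im = ∑ v, (d v).im * Complex.normSq (x v) := by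
    rw [h2]
    simp only [dotProduct, Matrix.mulVec_diagonal, Pi.star_apply]
    rw [Complex.im_sum]
    congr 1; funext v
    have : (star (x v)) * (d v * x v) = d v * ((x v) * star (x v)) := by ring
    rw [this, Complex.star_def, Complex.mul_conj]
    simp [Complex.mul_im]
  obtain ⟨v₀, hv₀⟩ := Function.ne_iff.mp hx
  have hpos : 0 < ∑ v, (d v).im * Complex.normSq (x v) := by
    apply Finset.sum_pos' (fun v _ => mul_nonneg (hd v).le (Complex.normSq_nonneg _))
    exact ⟨v₀, Finset.mem_univ _, by
      have : 0 < Complex.normSq (x v₀) := Complex.normSq_pos.mpr hv₀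
      exact mul_pos (hd v₀) this⟩
  rw [h3] at hqreal
  linarith
lemma im_cauchyG_neg {V : Type*} [Fintype V] [DecidableEq V]
    {a : Matrix V V ℂ} (ha : a.IsHermitian) (v : V) {z : ℂ} (hz : 0 < z.im) :
    (cauchyG a v z).im < 0 := by
  classical
  set U : Matrix V V ℂ := (Matrix.IsHermitian.eigenvectorUnitary ha : Matrix V V ℂ) with hU
  have hUU : U * star U = 1 := (Matrix.mem_unitaryGroup_iff).mp (Matrix.IsHermitian.eigenvectorUnitary ha).2
  have hUU' : star U * U = 1 := (Matrix.mem_unitaryGroup_iff').mp (Matrix.IsHermitian.eigenvectorUnitary ha).2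
  set lam := Matrix.IsHermitian.eigenvalues ha with hlam
  have hzl : ∀ i, (z - (lam i : ℂ)) ≠ 0 := by
    intro i h
    have h2 : (z - (lam i : ℂ)).im = z.im := by simp
    rw [h] at h2; simp at h2; linarith
  have hdecomp : z • (1 : Matrix V V ℂ) - a
      = U * Matrix.diagonal (fun i => z - (lam i : ℂ)) * star U := by
    have h1 : a = U * Matrix.diagonal (fun i => (lam i : ℂ)) * star U :=
      Matrix.IsHermitian.spectral_theorem ha
    have h2 : z • (1 : Matrix V V ℂ) = U * Matrix.diagonal (fun _ => z) * star U := by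
      rw [Matrix.smul_one_eq_diagonal]
      have : Matrix.diagonal (fun _ : V => z) * star U = star U * Matrix.diagonal (fun _ : V => z) := by
        rw [← Matrix.smul_one_eq_diagonal, Matrix.smul_mul, Matrix.mul_smul, one_mul, mul_one]
      rw [mul_assoc, this, ← mul_assoc, hUU, one_mul]
    conv_lhs => rw [h1, h2]
    rw [← Matrix.sub_mul, ← Matrix.mul_sub, Matrix.diagonal_sub]
  -- the inverse
  have hinv : (z • (1 : Matrix V V ℂ) - a)⁻¹
      = U * Matrix.diagonal (fun i => (z - (lam i : ℂ))⁻¹) * star U := by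
    apply Matrix.inv_eq_right_inv
    rw [hdecomp]
    calc U * Matrix.diagonal (fun i => z - (lam i : ℂ)) * star U *
          (U * Matrix.diagonal (fun i => (z - (lam i : ℂ))⁻¹) * star U)
        = U * Matrix.diagonal (fun i => z - (lam i : ℂ)) * (star U * U) *
          Matrix.diagonal (fun i => (z - (lam i : ℂ))⁻¹) * star U := by
          simp only [mul_assoc]
      _ = 1 := by
          rw [hUU', mul_one, mul_assoc U, Matrix.diagonal_mul_diagonal]
          have : (fun i => (z - (lam i : ℂ)) * (z - (lam i : ℂ))⁻¹) = fun _ => (1 : ℂ) := by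
            funext i; exact mul_inv_cancel₀ (hzl i)
          rw [this, Matrix.diagonal_one, mul_one, hUU]
  -- entry formula
  have hentry : cauchyG a v z = ∑ i, (z - (lam i : ℂ))⁻¹ * Complex.normSq (U v i) := by
    rw [cauchyG, hinv, Matrix.mul_apply]
    congr 1; funext i
    rw [Matrix.mul_diagonal]
    have : (star U) i v = starRingEnd ℂ (U v i) := rfl
    rw [this]
    rw [← Complex.mul_conj]; ring
  -- sum of normSq = 1
  have hsum : ∑ i, Complex.normSq (U v i) = 1 := by
    have h1 : (U * star U) v v = 1 := by rw [hUU]; simp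
    rw [Matrix.mul_apply] at h1
    have h2 : ∀ i, U v i * (star U) i v = (Complex.normSq (U v i) : ℂ) := by
      intro i
      have : (star U) i v = starRingEnd ℂ (U v i) := rfl
      rw [this, Complex.mul_conj]
    rw [Finset.sum_congr rfl (fun i _ => h2 i), ← Complex.ofReal_sum] at h1
    exact_mod_cast h1
  -- imaginary part
  have him : (cauchyG a v z).im = ∑ i, ((z - (lam i : ℂ))⁻¹).im * Complex.normSq (U v i) := by
    rw [hentry, Complex.im_sum]
    congr 1; funext i
    rw [Complex.mul_im]
    simp
  rw [him]
  have hle : ∀ i, ((z - (lam i : ℂ))⁻¹).im * Complex.normSq (U v i) ≤ 0 := by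
    intro i
    apply mul_nonpos_of_nonpos_of_nonneg _ (Complex.normSq_nonneg _)
    rw [Complex.inv_im]
    apply div_nonpos_of_nonpos_of_nonneg _ (Complex.normSq_nonneg _)
    simp; linarith
  obtain ⟨i₀, hi₀⟩ : ∃ i, Complex.normSq (U v i) ≠ 0 := by
    by_contra h
    push_neg at h
    rw [Finset.sum_congr rfl (fun i _ => h i)] at hsum
    simp at hsum
  have hlt : ((z - (lam i₀ : ℂ))⁻¹).im * Complex.normSq (U v i₀) < 0 := by
    apply mul_neg_of_neg_of_pos
    · rw [Complex.inv_im]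
      apply div_neg_of_neg_of_pos
      · simp; linarith
      · exact Complex.normSq_pos.mpr (hzl i₀)
    · exact lt_of_le_of_ne (Complex.normSq_nonneg _) (Ne.symm hi₀)
  have := Finset.sum_lt_sum (g := fun _ => (0:ℝ)) (fun i _ => hle i)
      ⟨i₀, Finset.mem_univ _, hlt⟩
  simpa using this

lemma isUnit_det_smul_one_sub {V : Type*} [Fintype V] [DecidableEq V]
    {a : Matrix V V ℂ} (ha : a.IsHermitian) {z : ℂ} (hz : 0 < z.im) :
    IsUnit (z • (1 : Matrix V V ℂ) - a).det := by
  rw [smul_one_sub_eq]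
  exact isUnit_det_diagonal_sub ha _ (fun _ => hz)

lemma cauchyG_ne_zero {V : Type*} [Fintype V] [DecidableEq V]
    {a : Matrix V V ℂ} (ha : a.IsHermitian) (v : V) {z : ℂ} (hz : 0 < z.im) :
    cauchyG a v z ≠ 0 := by
  intro h
  have := im_cauchyG_neg ha v hz
  rw [h] at this; simp at this

lemma im_cauchyF_pos {V : Type*} [Fintype V] [DecidableEq V]
    {a : Matrix V V ℂ} (ha : a.IsHermitian) (v : V) {z : ℂ} (hz : 0 < z.im) :
    0 < (cauchyF a v z).im := by
  rw [cauchyF, one_div, Complex.inv_im]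
  have h1 := im_cauchyG_neg ha v hz
  have h2 : 0 < Complex.normSq (cauchyG a v z) :=
    Complex.normSq_pos.mpr (cauchyG_ne_zero ha v hz)
  have : 0 < -(cauchyG a v z).im := by linarith
  rw [show -(cauchyG a v z).im / Complex.normSq (cauchyG a v z)
      = (-(cauchyG a v z).im) / Complex.normSq (cauchyG a v z) by ring]
  positivity

lemma comb_herm {V₁ V₂ : Type*} [Fintype V₁] [DecidableEq V₁] [Fintype V₂] [DecidableEq V₂]
    {a₁ : Matrix V₁ V₁ ℂ} {a₂ : Matrix V₂ V₂ ℂ}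
    (ha₁ : a₁.IsHermitian) (ha₂ : a₂.IsHermitian) (f₂ : V₂) :
    (a₁ ⊗ₖ Matrix.single f₂ f₂ (1 : ℂ) + (1 : Matrix V₁ V₁ ℂ) ⊗ₖ a₂).IsHermitian :=
  ((kron_herm ha₁ (stdBasis_herm f₂)).add (kron_herm Matrix.isHermitian_one ha₂))

lemma comb_inv_entry {V₁ V₂ : Type*} [Fintype V₁] [DecidableEq V₁] [Fintype V₂] [DecidableEq V₂]
    (a₁ : Matrix V₁ V₁ ℂ) (a₂ : Matrix V₂ V₂ ℂ)
    (ha₁ : a₁.IsHermitian) (ha₂ : a₂.IsHermitian) (f₂ : V₂) {z : ℂ} (hz : 0 < z.im)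
    (v w : V₁) :
    ((z • (1 : Matrix (V₁ × V₂) (V₁ × V₂) ℂ)
        - (a₁ ⊗ₖ Matrix.single f₂ f₂ (1 : ℂ) + (1 : Matrix V₁ V₁ ℂ) ⊗ₖ a₂))⁻¹) (v, f₂) (w, f₂)
      = ((cauchyF a₂ f₂ z • (1 : Matrix V₁ V₁ ℂ) - a₁)⁻¹) v w := by
  classical
  set E := Matrix.single f₂ f₂ (1:ℂ) with hE
  set S' := a₁ ⊗ₖ E + (1 : Matrix V₁ V₁ ℂ) ⊗ₖ a₂ with hS'
  set M := (z • (1 : Matrix (V₁ × V₂) (V₁ × V₂) ℂ) - S')⁻¹ with hM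
  set r := (z • (1 : Matrix V₂ V₂ ℂ) - a₂)⁻¹ with hr
  have hdet2 : IsUnit (z • (1 : Matrix V₂ V₂ ℂ) - a₂).det := isUnit_det_smul_one_sub ha₂ hz
  have hr1 : r * (z • (1 : Matrix V₂ V₂ ℂ) - a₂) = 1 := Matrix.nonsing_inv_mul _ hdet2
  have hS'h : S'.IsHermitian := comb_herm ha₁ ha₂ f₂
  have hdetS' : IsUnit (z • (1 : Matrix (V₁ × V₂) (V₁ × V₂) ℂ) - S').det :=
    isUnit_det_smul_one_sub hS'h hz
  have hMr : (z • (1 : Matrix (V₁ × V₂) (V₁ × V₂) ℂ) - S') * M = 1 :=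
    Matrix.mul_nonsing_inv _ hdetS'
  -- rewrite z•1 - S' = 1 ⊗ (z•1 - a₂) - a₁ ⊗ E
  have hsplit : z • (1 : Matrix (V₁ × V₂) (V₁ × V₂) ℂ) - S'
      = (1 : Matrix V₁ V₁ ℂ) ⊗ₖ (z • (1 : Matrix V₂ V₂ ℂ) - a₂) - a₁ ⊗ₖ E := by
    ext ⟨p,y⟩ ⟨q,t⟩
    simp only [Matrix.sub_apply, Matrix.add_apply, Matrix.smul_apply, Matrix.kroneckerMap_apply,
      Matrix.one_apply, Prod.mk.injEq, smul_eq_mul, hS', Prod.ext_iff]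
    by_cases h1 : p = q <;> by_cases h2 : y = t <;> simp [h1, h2] <;> ring
  -- key resolvent identity
  have hBinv : ((1 : Matrix V₁ V₁ ℂ) ⊗ₖ r) * ((1 : Matrix V₁ V₁ ℂ) ⊗ₖ (z • (1 : Matrix V₂ V₂ ℂ) - a₂)) = 1 := by
    rw [← Matrix.mul_kronecker_mul, one_mul, hr1, Matrix.one_kronecker_one]
  have key : M = (1 : Matrix V₁ V₁ ℂ) ⊗ₖ r + (a₁ ⊗ₖ (r * E)) * M := by
    have h1 : ((1 : Matrix V₁ V₁ ℂ) ⊗ₖ r) * ((z • (1 : Matrix (V₁ × V₂) (V₁ × V₂) ℂ) - S') * M)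
        = (1 : Matrix V₁ V₁ ℂ) ⊗ₖ r := by rw [hMr, mul_one]
    rw [hsplit, Matrix.sub_mul, mul_sub, ← mul_assoc, hBinv, one_mul, ← mul_assoc,
      ← Matrix.mul_kronecker_mul, one_mul] at h1
    exact eq_add_of_sub_eq h1
  -- entrywise
  set g := cauchyG a₂ f₂ z with hg
  have hgr : r f₂ f₂ = g := rfl
  set N : Matrix V₁ V₁ ℂ := Matrix.of (fun v w => M (v, f₂) (w, f₂)) with hN
  have hNid : N = g • (1 : Matrix V₁ V₁ ℂ) + g • (a₁ * N) := by
    ext p q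
    have h2 := congrFun (congrFun key (p, f₂)) (q, f₂)
    simp only [Matrix.add_apply, Matrix.kroneckerMap_apply] at h2
    have h3 : ((a₁ ⊗ₖ (r * E)) * M) (p, f₂) (q, f₂)
        = g * (∑ u, a₁ p u * M (u, f₂) (q, f₂)) := by
      rw [Matrix.mul_apply]
      rw [Fintype.sum_prod_type]
      have h4 : ∀ u t, (a₁ ⊗ₖ (r * E)) (p, f₂) (u, t) * M (u, t) (q, f₂)
          = (if t = f₂ then g * (a₁ p u * M (u, f₂) (q, f₂)) else 0) := by
        intro u t
        simp only [Matrix.kroneckerMap_apply]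
        have h5 : (r * E) f₂ t = if t = f₂ then g else 0 := by
          rw [Matrix.mul_apply]
          simp only [hE, Matrix.single, Matrix.of_apply, mul_ite, mul_one, mul_zero]
          by_cases h : t = f₂
          · subst h
            simp [Finset.sum_ite_eq, hgr]
          · simp [Ne.symm h, h]
        rw [h5]
        split
        · rename_i h; subst h; ring
        · simp
      rw [Finset.sum_congr rfl (fun u _ => Finset.sum_congr rfl (fun t _ => h4 u t))]
      simp [Finset.sum_ite_eq', Finset.mul_sum]
    rw [h3] at h2
    simp only [hN, Matrix.of_apply, Matrix.add_apply, Matrix.smul_apply, Matrix.one_apply,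
      Matrix.mul_apply, smul_eq_mul]
    rw [h2, Matrix.one_apply]
    split <;> simp [Finset.mul_sum, hgr]
  -- conclude N = (F•1 - a₁)⁻¹
  have hgne : g ≠ 0 := cauchyG_ne_zero ha₂ f₂ hz
  have hFg : cauchyF a₂ f₂ z * g = 1 := by
    rw [cauchyF, hg, one_div, inv_mul_cancel₀ hgne]
  have hKN : (cauchyF a₂ f₂ z • (1 : Matrix V₁ V₁ ℂ) - a₁) * N = 1 := by
    have e1 : (cauchyF a₂ f₂ z • (1 : Matrix V₁ V₁ ℂ) - a₁) * N
        = cauchyF a₂ f₂ z • N - a₁ * N := by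
      rw [Matrix.sub_mul, Matrix.smul_mul, one_mul]
    have e2 : cauchyF a₂ f₂ z • N = 1 + a₁ * N := by
      conv_lhs => rw [hNid]
      rw [smul_add, smul_smul, hFg, one_smul, smul_smul, hFg, one_smul]
    rw [e1, e2]
    abel
  have : (cauchyF a₂ f₂ z • (1 : Matrix V₁ V₁ ℂ) - a₁)⁻¹ = N := Matrix.inv_eq_right_inv hKN
  rw [this]
  rfl

lemma ccomb_herm {V₁ V₂ : Type*} [Fintype V₁] [DecidableEq V₁] [Fintype V₂] [DecidableEq V₂]
    {a₁ : Matrix V₁ V₁ ℂ} {a₂ : Matrix V₂ V₂ ℂ}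
    (ha₁ : a₁.IsHermitian) (ha₂ : a₂.IsHermitian) (e₁ : V₁) (e₂ f₂ : V₂) :
    (a₁ ⊗ₖ (Matrix.single e₂ e₂ (1 : ℂ) ⊗ₖ Matrix.single f₂ f₂ (1 : ℂ))
      + Matrix.single e₁ e₁ (1 : ℂ) ⊗ₖ (a₂ ⊗ₖ (1 : Matrix V₂ V₂ ℂ))
      + (1 - Matrix.single e₁ e₁ (1 : ℂ)) ⊗ₖ ((1 : Matrix V₂ V₂ ℂ) ⊗ₖ a₂)).IsHermitian := by
  refine (((kron_herm ha₁ (kron_herm (stdBasis_herm e₂) (stdBasis_herm f₂))).add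
    (kron_herm (stdBasis_herm e₁) (kron_herm ha₂ Matrix.isHermitian_one))).add
    (kron_herm (Matrix.isHermitian_one.sub (stdBasis_herm e₁))
      (kron_herm Matrix.isHermitian_one ha₂)))

lemma ccomb_cauchyF {V₁ V₂ : Type*} [Fintype V₁] [DecidableEq V₁] [Fintype V₂] [DecidableEq V₂]
    (a₁ : Matrix V₁ V₁ ℂ) (a₂ : Matrix V₂ V₂ ℂ)
    (ha₁ : a₁.IsHermitian) (ha₂ : a₂.IsHermitian) (e₁ : V₁) (e₂ f₂ : V₂) {z : ℂ} (hz : 0 < z.im) :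
    cauchyF (a₁ ⊗ₖ (Matrix.single e₂ e₂ (1 : ℂ) ⊗ₖ Matrix.single f₂ f₂ (1 : ℂ))
      + Matrix.single e₁ e₁ (1 : ℂ) ⊗ₖ (a₂ ⊗ₖ (1 : Matrix V₂ V₂ ℂ))
      + (1 - Matrix.single e₁ e₁ (1 : ℂ)) ⊗ₖ ((1 : Matrix V₂ V₂ ℂ) ⊗ₖ a₂)) (e₁, e₂, f₂) z
      = cauchyF a₁ e₁ (cauchyF a₂ f₂ z) + cauchyF a₂ e₂ z - cauchyF a₂ f₂ z := by
  classical
  set E₁ := Matrix.single e₁ e₁ (1:ℂ) with hE₁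
  set E₂ := Matrix.single e₂ e₂ (1:ℂ) with hE₂
  set F₂ := Matrix.single f₂ f₂ (1:ℂ) with hF₂
  set S := a₁ ⊗ₖ (E₂ ⊗ₖ F₂) + E₁ ⊗ₖ (a₂ ⊗ₖ (1 : Matrix V₂ V₂ ℂ))
      + (1 - E₁) ⊗ₖ ((1 : Matrix V₂ V₂ ℂ) ⊗ₖ a₂) with hS
  set M := (z • (1 : Matrix (V₁ × V₂ × V₂) (V₁ × V₂ × V₂) ℂ) - S)⁻¹ with hM
  set r := (z • (1 : Matrix V₂ V₂ ℂ) - a₂)⁻¹ with hr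
  have hdet2 : IsUnit (z • (1 : Matrix V₂ V₂ ℂ) - a₂).det := isUnit_det_smul_one_sub ha₂ hz
  have hr1 : r * (z • (1 : Matrix V₂ V₂ ℂ) - a₂) = 1 := Matrix.nonsing_inv_mul _ hdet2
  have hSh : S.IsHermitian := ccomb_herm ha₁ ha₂ e₁ e₂ f₂
  have hdetS : IsUnit (z • (1 : Matrix (V₁ × V₂ × V₂) (V₁ × V₂ × V₂) ℂ) - S).det :=
    isUnit_det_smul_one_sub hSh hz
  have hMr : (z • (1 : Matrix (V₁ × V₂ × V₂) (V₁ × V₂ × V₂) ℂ) - S) * M = 1 :=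
    Matrix.mul_nonsing_inv _ hdetS
  set B := E₁ ⊗ₖ ((z • (1 : Matrix V₂ V₂ ℂ) - a₂) ⊗ₖ (1 : Matrix V₂ V₂ ℂ))
      + (1 - E₁) ⊗ₖ ((1 : Matrix V₂ V₂ ℂ) ⊗ₖ (z • (1 : Matrix V₂ V₂ ℂ) - a₂)) with hB
  set Binv := E₁ ⊗ₖ (r ⊗ₖ (1 : Matrix V₂ V₂ ℂ))
      + (1 - E₁) ⊗ₖ ((1 : Matrix V₂ V₂ ℂ) ⊗ₖ r) with hBinvdef
  set C := a₁ ⊗ₖ (E₂ ⊗ₖ F₂) with hC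
  have hsplit : z • (1 : Matrix (V₁ × V₂ × V₂) (V₁ × V₂ × V₂) ℂ) - S = B - C := by
    ext ⟨p,y,y'⟩ ⟨q,t,t'⟩
    simp only [hB, hC, hS, hE₁, hE₂, hF₂, Matrix.sub_apply, Matrix.add_apply, Matrix.smul_apply,
      Matrix.kroneckerMap_apply, Matrix.one_apply, Matrix.single, Matrix.of_apply,
      Prod.mk.injEq, smul_eq_mul]
    by_cases h1 : p = q <;> by_cases h2 : y = t <;> by_cases h3 : y' = t' <;>
      simp [h1, h2, h3] <;> split_ifs <;> first | ring | simp_all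
  have hp11 : E₁ * E₁ = E₁ := by
    rw [hE₁, Matrix.single_mul_single_same, mul_one]
  have hp12 : E₁ * (1 - E₁) = 0 := by rw [mul_sub, mul_one, hp11, sub_self]
  have hp21 : (1 - E₁) * E₁ = 0 := by rw [sub_mul, one_mul, hp11, sub_self]
  have hp22 : (1 - E₁) * (1 - E₁) = 1 - E₁ := by rw [sub_mul, one_mul, hp12, sub_zero]
  have hBinv : Binv * B = 1 := by
    rw [hBinvdef, hB, add_mul, mul_add, mul_add]
    simp only [← Matrix.mul_kronecker_mul, hp11, hp12, hp21, hp22, hr1, one_mul, mul_one,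
      Matrix.zero_kronecker, Matrix.kronecker_zero, Matrix.one_kronecker_one, add_zero, zero_add]
    rw [← Matrix.add_kronecker, add_sub_cancel, Matrix.one_kronecker_one]
  -- resolvent identity
  have key : M = Binv + (Binv * C) * M := by
    have h1 : Binv * ((z • (1 : Matrix (V₁ × V₂ × V₂) (V₁ × V₂ × V₂) ℂ) - S) * M) = Binv := by
      rw [hMr, mul_one]
    rw [hsplit, Matrix.sub_mul, mul_sub, ← mul_assoc, hBinv, one_mul, ← mul_assoc] at h1
    exact eq_add_of_sub_eq h1
  -- compute Binv * C
  have hBC : Binv * C = (E₁ * a₁) ⊗ₖ ((r * E₂) ⊗ₖ F₂)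
      + ((1 - E₁) * a₁) ⊗ₖ (E₂ ⊗ₖ (r * F₂)) := by
    rw [hBinvdef, hC, add_mul, ← Matrix.mul_kronecker_mul, ← Matrix.mul_kronecker_mul,
      ← Matrix.mul_kronecker_mul, ← Matrix.mul_kronecker_mul, Matrix.one_mul, Matrix.one_mul]
  set ge := cauchyG a₂ e₂ z with hge
  set gf := cauchyG a₂ f₂ z with hgf
  have hre : r e₂ e₂ = ge := rfl
  have hrf : r f₂ f₂ = gf := rfl
  set d : V₁ → ℂ := fun v => if e₁ = v then ge else gf with hd
  set D := Matrix.diagonal d with hD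
  set N : Matrix V₁ V₁ ℂ := Matrix.of (fun v w => M (v, e₂, f₂) (w, e₂, f₂)) with hN
  -- entry helpers
  have hEa : ∀ p u, (E₁ * a₁) p u = if e₁ = p then a₁ p u else 0 := by
    intro p u
    rw [Matrix.mul_apply]
    simp only [hE₁, Matrix.single, Matrix.of_apply, ite_mul, one_mul, zero_mul]
    by_cases h : e₁ = p
    · subst h; simp [Finset.sum_ite_eq]
    · simp [h]
  have h1Ea : ∀ p u, ((1 - E₁) * a₁) p u = if e₁ = p then 0 else a₁ p u := by
    intro p u
    rw [Matrix.sub_mul, Matrix.one_mul, Matrix.sub_apply, hEa]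
    by_cases h : e₁ = p <;> simp [h]
  have hrE : ∀ t, (r * E₂) e₂ t = if e₂ = t then ge else 0 := by
    intro t
    rw [Matrix.mul_apply]
    simp only [hE₂, Matrix.single, Matrix.of_apply, mul_ite, mul_one, mul_zero]
    by_cases h : e₂ = t
    · subst h; simp [Finset.sum_ite_eq, hre]
    · simp [h]
  have hrF : ∀ t, (r * F₂) f₂ t = if f₂ = t then gf else 0 := by
    intro t
    rw [Matrix.mul_apply]
    simp only [hF₂, Matrix.single, Matrix.of_apply, mul_ite, mul_one, mul_zero]
    by_cases h : f₂ = t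
    · subst h; simp [Finset.sum_ite_eq, hrf]
    · simp [h]
  have hFap : ∀ t, F₂ f₂ t = if f₂ = t then (1:ℂ) else 0 := by
    intro t; simp [hF₂, Matrix.single]
  have hE2ap : ∀ t, E₂ e₂ t = if e₂ = t then (1:ℂ) else 0 := by
    intro t; simp [hE₂, Matrix.single]
  have hNid : N = D + D * (a₁ * N) := by
    ext p q
    have h2 := congrFun (congrFun key ((p, e₂, f₂) : V₁ × V₂ × V₂)) ((q, e₂, f₂) : V₁ × V₂ × V₂)
    rw [hBC] at h2
    simp only [Matrix.add_apply] at h2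
    have hBe : Binv (p, e₂, f₂) (q, e₂, f₂) = D p q := by
      rw [hBinvdef, hD]
      simp only [Matrix.add_apply, Matrix.kroneckerMap_apply, Matrix.sub_apply,
        Matrix.diagonal_apply, hE₁, Matrix.single, Matrix.of_apply, hd]
      by_cases h1 : p = q
      · subst h1
        by_cases h4 : e₁ = p
        · subst h4; simp [hre, hrf]
        · simp [h4, hre, hrf, Matrix.one_apply]
      · have h5 : ¬ (e₁ = p ∧ e₁ = q) := by rintro ⟨rfl, h⟩; exact h1 h
        simp [h1, h5, Matrix.one_apply]
    have hCe : (((E₁ * a₁) ⊗ₖ ((r * E₂) ⊗ₖ F₂) + ((1 - E₁) * a₁) ⊗ₖ (E₂ ⊗ₖ (r * F₂))) * M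
            : Matrix (V₁ × V₂ × V₂) (V₁ × V₂ × V₂) ℂ)
          (p, e₂, f₂) (q, e₂, f₂)
        = d p * ∑ u, a₁ p u * N u q := by
      rw [Matrix.mul_apply, Fintype.sum_prod_type]
      have hterm : ∀ u, (∑ tt : V₂ × V₂,
            ((E₁ * a₁) ⊗ₖ ((r * E₂) ⊗ₖ F₂) + ((1 - E₁) * a₁) ⊗ₖ (E₂ ⊗ₖ (r * F₂))
              : Matrix (V₁ × V₂ × V₂) (V₁ × V₂ × V₂) ℂ)
              (p, e₂, f₂) (u, tt) * M (u, tt) (q, e₂, f₂))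
          = d p * (a₁ p u * N u q) := by
        intro u
        rw [Fintype.sum_prod_type]
        have hent : ∀ t t', ((E₁ * a₁) ⊗ₖ ((r * E₂) ⊗ₖ F₂)
              + ((1 - E₁) * a₁) ⊗ₖ (E₂ ⊗ₖ (r * F₂))
              : Matrix (V₁ × V₂ × V₂) (V₁ × V₂ × V₂) ℂ) (p, e₂, f₂) (u, t, t')
            = if e₂ = t then (if f₂ = t' then d p * a₁ p u else 0) else 0 := by
          intro t t'
          simp only [Matrix.add_apply, Matrix.kroneckerMap_apply, hEa, h1Ea, hrE, hrF, hFap, hE2ap]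
          by_cases h6 : e₂ = t <;> by_cases h7 : f₂ = t' <;> by_cases h8 : e₁ = p <;>
            simp [h6, h7, h8, hd] <;> ring
        rw [Finset.sum_congr rfl (fun t _ => Finset.sum_congr rfl (fun t' _ => by rw [hent t t']))]
        simp [ite_mul, zero_mul, Finset.sum_ite_eq, hN]
        ring
      rw [Finset.sum_congr rfl (fun u _ => hterm u), ← Finset.mul_sum]
    rw [hBe, hCe] at h2
    have h9 : (D * (a₁ * N)) p q = d p * ∑ u, a₁ p u * N u q := by
      rw [hD, Matrix.diagonal_mul, Matrix.mul_apply]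
    show M (p, e₂, f₂) (q, e₂, f₂) = (D + D * (a₁ * N)) p q
    rw [Matrix.add_apply, h9, h2]
  -- endgame
  have hgene : ge ≠ 0 := cauchyG_ne_zero ha₂ e₂ hz
  have hgfne : gf ≠ 0 := cauchyG_ne_zero ha₂ f₂ hz
  set Fe := cauchyF a₂ e₂ z with hFe
  set Ff := cauchyF a₂ f₂ z with hFf
  have hFege : Fe * ge = 1 := by
    rw [hFe]; unfold cauchyF; rw [← hge, one_div, inv_mul_cancel₀ hgene]
  have hFfgf : Ff * gf = 1 := by
    rw [hFf]; unfold cauchyF; rw [← hgf, one_div, inv_mul_cancel₀ hgfne]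
  set Dinv := Matrix.diagonal (fun v => if e₁ = v then Fe else Ff) with hDinv
  have hDD : Dinv * D = 1 := by
    rw [hDinv, hD, Matrix.diagonal_mul_diagonal]
    have hfun : (fun v => (if e₁ = v then Fe else Ff) * d v) = fun _ => (1:ℂ) := by
      funext v; rw [hd]; by_cases h : e₁ = v <;> simp [h, hFege, hFfgf]
    rw [hfun, Matrix.diagonal_one]
  have hDinvsplit : Dinv = Ff • (1 : Matrix V₁ V₁ ℂ) + (Fe - Ff) • E₁ := by
    ext i j
    simp only [hDinv, hE₁, Matrix.diagonal_apply, Matrix.single, Matrix.of_apply,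
      Matrix.add_apply, Matrix.smul_apply, Matrix.one_apply, smul_eq_mul]
    by_cases h1 : i = j
    · subst h1; by_cases h2 : e₁ = i <;> simp [h2] <;> ring
    · have h5 : ¬ (e₁ = i ∧ e₁ = j) := by rintro ⟨rfl, hh⟩; exact h1 hh
      simp [h1, h5]
  have h10 : Dinv * N = 1 + a₁ * N := by
    conv_lhs => rw [hNid]
    rw [mul_add, hDD, ← mul_assoc, hDD, one_mul]
  have h11 : (Ff • (1 : Matrix V₁ V₁ ℂ) - a₁) * N = 1 - (Fe - Ff) • (E₁ * N) := by
    have h12 := h10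
    rw [hDinvsplit, add_mul, Matrix.smul_mul, Matrix.smul_mul, one_mul] at h12
    have h12' : Ff • N = 1 + a₁ * N - (Fe - Ff) • (E₁ * N) := by
      rw [← h12]; abel
    rw [Matrix.sub_mul, Matrix.smul_mul, one_mul, h12']
    abel
  set R := (Ff • (1 : Matrix V₁ V₁ ℂ) - a₁)⁻¹ with hR
  have hFfim : 0 < Ff.im := im_cauchyF_pos ha₂ f₂ hz
  have hdetR : IsUnit (Ff • (1 : Matrix V₁ V₁ ℂ) - a₁).det := isUnit_det_smul_one_sub ha₁ hFfim
  have hRl : R * (Ff • (1 : Matrix V₁ V₁ ℂ) - a₁) = 1 := Matrix.nonsing_inv_mul _ hdetR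
  have h13 : N = R - (Fe - Ff) • (R * (E₁ * N)) := by
    have h14 : R * ((Ff • (1 : Matrix V₁ V₁ ℂ) - a₁) * N)
        = R * (1 - (Fe - Ff) • (E₁ * N)) := by rw [h11]
    rw [← mul_assoc, hRl, one_mul, mul_sub, mul_one, Matrix.mul_smul] at h14
    exact h14
  have hent2 : (R * (E₁ * N)) e₁ e₁ = R e₁ e₁ * N e₁ e₁ := by
    rw [Matrix.mul_apply]
    have hEN : ∀ u, (E₁ * N) u e₁ = if e₁ = u then N e₁ e₁ else 0 := by
      intro u
      rw [Matrix.mul_apply]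
      simp only [hE₁, Matrix.single, Matrix.of_apply, ite_mul, one_mul, zero_mul]
      by_cases h : e₁ = u
      · simp [h, Finset.sum_ite_eq]
      · simp [h]
    have hterm2 : ∀ u, R e₁ u * (E₁ * N) u e₁ = if e₁ = u then R e₁ u * N e₁ e₁ else 0 := by
      intro u; rw [hEN]; by_cases h : e₁ = u <;> simp [h]
    rw [Finset.sum_congr rfl (fun u _ => hterm2 u)]
    simp [Finset.sum_ite_eq]
  have h15 := congrFun (congrFun h13 e₁) e₁
  rw [Matrix.sub_apply, Matrix.smul_apply, smul_eq_mul, hent2] at h15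
  have hRv : R e₁ e₁ = cauchyG a₁ e₁ Ff := rfl
  have hRvne : R e₁ e₁ ≠ 0 := by rw [hRv]; exact cauchyG_ne_zero ha₁ e₁ hFfim
  have hnne : N e₁ e₁ ≠ 0 := by
    intro h0
    rw [h0, mul_zero, mul_zero, sub_zero] at h15
    exact hRvne h15.symm
  have hG : cauchyG S (e₁, e₂, f₂) z = N e₁ e₁ := rfl
  unfold cauchyF
  rw [hG, ← hRv]
  have h16 : N e₁ e₁ * (1 + (Fe - Ff) * R e₁ e₁) = R e₁ e₁ := by
    linear_combination h15
  have h17 : 1 / N e₁ e₁ = (1 + (Fe - Ff) * R e₁ e₁) / R e₁ e₁ := by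
    rw [div_eq_div_iff hnne hRvne]
    linear_combination -h16
  rw [h17, add_div, mul_div_cancel_right₀ _ hRvne]
  ring

/-- the pair of spectral distributions of the c-comb product of
birooted graphs at its two roots is `(μ₁ ▷_{ν₂} μ₂, ν₁ ▷ ν₂)`, expressed in terms
of reciprocal Cauchy transforms (Corollary 4.3 of the paper). -/
theorem ccomb_product_spectral_distributions
    {V₁ V₂ : Type*} [Fintype V₁] [DecidableEq V₁] [Fintype V₂] [DecidableEq V₂]
    (a₁ : Matrix V₁ V₁ ℂ) (a₂ : Matrix V₂ V₂ ℂ)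
    (ha₁ : a₁.IsHermitian) (ha₂ : a₂.IsHermitian)
    (e₁ f₁ : V₁) (e₂ f₂ : V₂)
    (S : Matrix (V₁ × V₂ × V₂) (V₁ × V₂ × V₂) ℂ)
    (S' : Matrix (V₁ × V₂) (V₁ × V₂) ℂ)
    (A : Matrix ((V₁ × V₂ × V₂) ⊕ (V₁ × V₂)) ((V₁ × V₂ × V₂) ⊕ (V₁ × V₂)) ℂ)
    (hS : S = a₁ ⊗ₖ (Matrix.single e₂ e₂ (1 : ℂ) ⊗ₖ Matrix.single f₂ f₂ (1 : ℂ))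
      + Matrix.single e₁ e₁ (1 : ℂ) ⊗ₖ (a₂ ⊗ₖ (1 : Matrix V₂ V₂ ℂ))
      + (1 - Matrix.single e₁ e₁ (1 : ℂ)) ⊗ₖ ((1 : Matrix V₂ V₂ ℂ) ⊗ₖ a₂))
    (hS' : S' = a₁ ⊗ₖ Matrix.single f₂ f₂ (1 : ℂ)
      + (1 : Matrix V₁ V₁ ℂ) ⊗ₖ a₂)
    (hA : A = Matrix.fromBlocks S 0 0 S') :
    A.IsHermitian ∧
    ∀ z : ℂ, 0 < z.im →
      cauchyF A (Sum.inl (e₁, e₂, f₂)) z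
          = cauchyF a₁ e₁ (cauchyF a₂ f₂ z) + cauchyF a₂ e₂ z - cauchyF a₂ f₂ z
      ∧ cauchyF A (Sum.inr (f₁, f₂)) z = cauchyF a₁ f₁ (cauchyF a₂ f₂ z) := by
  subst hS hS' hA
  set Sx := a₁ ⊗ₖ (Matrix.single e₂ e₂ (1 : ℂ) ⊗ₖ Matrix.single f₂ f₂ (1 : ℂ))
      + Matrix.single e₁ e₁ (1 : ℂ) ⊗ₖ (a₂ ⊗ₖ (1 : Matrix V₂ V₂ ℂ))
      + (1 - Matrix.single e₁ e₁ (1 : ℂ)) ⊗ₖ ((1 : Matrix V₂ V₂ ℂ) ⊗ₖ a₂) with hSx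
  set S'x := a₁ ⊗ₖ Matrix.single f₂ f₂ (1 : ℂ) + (1 : Matrix V₁ V₁ ℂ) ⊗ₖ a₂ with hS'x
  have hShh : Sx.IsHermitian := ccomb_herm ha₁ ha₂ e₁ e₂ f₂
  have hS'h : S'x.IsHermitian := comb_herm ha₁ ha₂ f₂
  constructor
  · show _ᴴ = _
    rw [Matrix.fromBlocks_conjTranspose]
    simp only [Matrix.conjTranspose_zero]
    rw [hShh.eq, hS'h.eq]
  · intro z hz
    have hblock : z • (1 : Matrix ((V₁ × V₂ × V₂) ⊕ (V₁ × V₂)) ((V₁ × V₂ × V₂) ⊕ (V₁ × V₂)) ℂ)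
          - Matrix.fromBlocks Sx 0 0 S'x
        = Matrix.fromBlocks (z • 1 - Sx) 0 0 (z • 1 - S'x) := by
      ext i j
      rcases i with i | i <;> rcases j with j | j <;>
        simp [Matrix.fromBlocks, Matrix.one_apply]
    have hinvblock : (z • (1 : Matrix ((V₁ × V₂ × V₂) ⊕ (V₁ × V₂)) ((V₁ × V₂ × V₂) ⊕ (V₁ × V₂)) ℂ)
          - Matrix.fromBlocks Sx 0 0 S'x)⁻¹
        = Matrix.fromBlocks ((z • 1 - Sx)⁻¹) 0 0 ((z • 1 - S'x)⁻¹) := by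
      apply Matrix.inv_eq_right_inv
      rw [hblock, Matrix.fromBlocks_multiply]
      simp only [Matrix.mul_zero, Matrix.zero_mul, add_zero, zero_add,
        Matrix.mul_nonsing_inv _ (isUnit_det_smul_one_sub hShh hz),
        Matrix.mul_nonsing_inv _ (isUnit_det_smul_one_sub hS'h hz)]
      exact Matrix.fromBlocks_one
    constructor
    · have hGl : cauchyG (Matrix.fromBlocks Sx 0 0 S'x) (Sum.inl (e₁, e₂, f₂)) z
          = cauchyG Sx (e₁, e₂, f₂) z := by
        unfold cauchyG
        rw [hinvblock]
        rfl
      unfold cauchyF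
      rw [hGl]
      have := ccomb_cauchyF a₁ a₂ ha₁ ha₂ e₁ e₂ f₂ hz
      rw [← hSx] at this
      unfold cauchyF at this
      exact this
    · have hGr : cauchyG (Matrix.fromBlocks Sx 0 0 S'x) (Sum.inr (f₁, f₂)) z
          = cauchyG a₁ f₁ (cauchyF a₂ f₂ z) := by
        unfold cauchyG
        rw [hinvblock]
        have h1 : (Matrix.fromBlocks ((z • 1 - Sx)⁻¹) 0 0 ((z • 1 - S'x)⁻¹))
            (Sum.inr (f₁, f₂)) (Sum.inr (f₁, f₂))
            = ((z • 1 - S'x)⁻¹) (f₁, f₂) (f₁, f₂) := rfl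
        rw [h1, hS'x, comb_inv_entry a₁ a₂ ha₁ ha₂ f₂ hz f₁ f₁]
      unfold cauchyF
      rw [hGr]
      rfl
end
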